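/- arXiv:math/0004175 — 6 statements merged into one kernel-verified Lean document; each statement's English description precedes it below -/
import Mathlib

section
/- Let k1 ≤ k2 ≤ m ≤ n be positive integers and let X be a nonnegative real m×n matrix. (i) If M1 is a k1×k1 submatrix of X (given by a set of k1 rows and k1 columns) that contains a k1-assignment achieving min_{k1}(X), then there exist a set of k2 rows containing the rows of M1 and a set of k2 columns containing the columns of M1 such that the corresponding k2×k2 submatrix M2 contains a k2-assignment achieving min_{k2}(X). (ii) Conversely, if M2 is a k2×k2 submatrix of X containing a k2-assignment achieving min_{k2}(X), then there is a k1×k1 submatrix M1 of M2 containing a k1-assignment achieving min_{k1}(X). -/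
/-- A `k`-assignment of an `m × n` matrix (indexed by naturals, rows `< m`, columns `< n`):
a set of `k` positions, no two in the same row or column. -/
def IsAssign (m n k : ℕ) (S : Finset (ℕ × ℕ)) : Prop :=
  S.card = k ∧ (∀ p ∈ S, p.1 < m ∧ p.2 < n) ∧
    ∀ p ∈ S, ∀ q ∈ S, p ≠ q → p.1 ≠ q.1 ∧ p.2 ≠ q.2

/-- The value of a set of positions in the matrix `X`. -/
def aval (X : ℕ → ℕ → ℝ) (S : Finset (ℕ × ℕ)) : ℝ := ∑ p ∈ S, X p.1 p.2

/-- `S` is a `k`-assignment achieving the minimum value `min_k(X)`. -/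
def MinAssign (m n k : ℕ) (X : ℕ → ℕ → ℝ) (S : Finset (ℕ × ℕ)) : Prop :=
  IsAssign m n k S ∧ ∀ T, IsAssign m n k T → aval X S ≤ aval X T

/-!
Overlay a minimum `k₁`-assignment `S` and a minimum `k₂`-assignment `T`, `k₁ ≤ k₂`: cells that
share a row or a column are linked, and the components are alternating paths and cycles. Trading
a union of components with as many cells of `S` as of `T` between the two keeps their sizes and
preserves `aval X S + aval X T`, so both stay minimal. A cell of `S` outside the rows or the
columns of `T` ends an alternating path; if that path has one cell of `S` too many, then, as
`#S ≤ #T`, the remaining cells contain an augmenting path with one cell of `T` too many, and the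
two together form a balanced trade. Each trade strictly decreases `#(S \ T)`; descending with
`T` fixed gives (ii), with `S` fixed gives (i).
-/

open Finset

namespace Cells

variable {α β γ : Type*} (row : α → β) (col : α → γ)

def Meets (p q : α) : Prop := row p = row q ∨ col p = col q

def IsMatching (S : Finset α) : Prop := ∀ p ∈ S, ∀ q ∈ S, Meets row col p q → p = q

variable {row col} {A B P Q P' Q' : Finset α}

theorem Meets.symm {p q : α} (h : Meets row col p q) : Meets row col q p :=
  h.imp Eq.symm Eq.symm

theorem meets_comm : Meets col row = Meets row col := by
  funext p q
  exact propext or_comm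

theorem isMatching_comm : IsMatching col row = IsMatching row col := by
  unfold IsMatching
  rw [meets_comm]

theorem IsMatching.mono (hB : IsMatching row col B) (h : A ⊆ B) : IsMatching row col A :=
  fun p hp q hq => hB p (h hp) q (h hq)

theorem IsMatching.injOn_row (hA : IsMatching row col A) : Set.InjOn row A :=
  fun p hp q hq h => hA p hp q hq (Or.inl h)

theorem IsMatching.exists_row_notMem (hB : IsMatching row col B) (hAB : #A < #B) :
    ∃ b ∈ B, ∀ a ∈ A, row a ≠ row b := by
  classical
  obtain ⟨r, hrB, hrA⟩ := exists_mem_notMem_of_card_lt_card <|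
    (card_image_le (s := A) (f := row)).trans_lt
      (hAB.trans_eq (card_image_of_injOn hB.injOn_row).symm)
  obtain ⟨b, hb, rfl⟩ := mem_image.1 hrB
  exact ⟨b, hb, fun a ha hab => hrA (mem_image.2 ⟨a, ha, hab⟩)⟩

variable [DecidableEq α] (row col)

def IsHalfSwappable (A B P Q : Finset α) : Prop :=
  P ⊆ A \ B ∧ ∀ p ∈ P, ∀ b ∈ B, Meets row col p b → b ∈ Q

/-- For matchings `A` and `B`: `P ∪ Q` is a union of connected components of the graph on
`A ∪ B` in which two cells are adjacent when they share a row or a column, with `P ⊆ A \ B` and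
`Q ⊆ B \ A`. Hence `P` can be traded for `Q` in `A`, and `Q` for `P` in `B`. -/
def IsSwappable (A B P Q : Finset α) : Prop :=
  IsHalfSwappable row col A B P Q ∧ IsHalfSwappable row col B A Q P

variable {row col}

theorem isSwappable_comm : IsSwappable col row = IsSwappable row col := by
  unfold IsSwappable IsHalfSwappable
  rw [meets_comm]

theorem isSwappable_empty : IsSwappable row col A B ∅ ∅ :=
  ⟨⟨empty_subset _, by simp⟩, empty_subset _, by simp⟩

theorem IsSwappable.symm (h : IsSwappable row col A B P Q) : IsSwappable row col B A Q P :=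
  And.symm h

theorem IsSwappable.subset_left (h : IsSwappable row col A B P Q) : P ⊆ A :=
  h.1.1.trans sdiff_subset

theorem IsSwappable.subset_right (h : IsSwappable row col A B P Q) : Q ⊆ B :=
  h.symm.subset_left

theorem IsSwappable.disjoint_right (h : IsSwappable row col A B P Q) : Disjoint A Q :=
  disjoint_sdiff.mono_right h.2.1

theorem IsSwappable.isMatching_sdiff_union (hA : IsMatching row col A)
    (hB : IsMatching row col B) (h : IsSwappable row col A B P Q) :
    IsMatching row col (A \ P ∪ Q) := by
  intro p hp q hq hpq
  simp only [mem_union, mem_sdiff] at hp hq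
  rcases hp with ⟨hpA, hpP⟩ | hpQ <;> rcases hq with ⟨hqA, hqP⟩ | hqQ
  · exact hA p hpA q hqA hpq
  · exact absurd (h.2.2 q hqQ p hpA hpq.symm) hpP
  · exact absurd (h.2.2 p hpQ q hqA hpq) hqP
  · exact hB p (h.subset_right hpQ) q (h.subset_right hqQ) hpq

theorem IsSwappable.card_sdiff_union_add (h : IsSwappable row col A B P Q) :
    #(A \ P ∪ Q) + #P = #A + #Q := by
  rw [card_union_of_disjoint (h.disjoint_right.mono_left sdiff_subset), add_right_comm,
    card_sdiff_add_card_eq_card h.subset_left]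

theorem IsSwappable.sdiff_union_sdiff_ssubset (h : IsSwappable row col A B P Q)
    (hP : P.Nonempty) : (A \ P ∪ Q) \ B ⊂ A \ B := by
  obtain ⟨p, hp⟩ := hP
  have hpAB := h.1.1 hp
  have hQ : ∀ x ∈ Q, x ∈ B ∧ x ∉ A := fun x hx => mem_sdiff.1 (h.2.1 hx)
  refine (ssubset_iff_of_subset fun x hx => ?_).2 ⟨p, hpAB, fun hx => ?_⟩
  · simp only [mem_sdiff, mem_union] at hx ⊢
    have := hQ x
    tauto
  · simp only [mem_sdiff, mem_union] at hx hpAB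
    have := hQ p
    tauto

theorem IsSwappable.sdiff_sdiff_union_ssubset (h : IsSwappable row col A B P Q)
    (hP : P.Nonempty) : A \ (B \ Q ∪ P) ⊂ A \ B := by
  obtain ⟨p, hp⟩ := hP
  have hpAB := h.1.1 hp
  have hQ : ∀ x ∈ Q, x ∈ B ∧ x ∉ A := fun x hx => mem_sdiff.1 (h.2.1 hx)
  refine (ssubset_iff_of_subset fun x hx => ?_).2 ⟨p, hpAB, fun hx => ?_⟩
  · simp only [mem_sdiff, mem_union] at hx ⊢
    have := hQ x
    tauto
  · simp only [mem_sdiff, mem_union] at hx hpAB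
    tauto

theorem IsHalfSwappable.union (h : IsHalfSwappable row col A B P Q)
    (hQ : Q ⊆ B \ A) (h' : IsHalfSwappable row col (A \ P) (B \ Q) P' Q') :
    IsHalfSwappable row col A B (P ∪ P') (Q ∪ Q') := by
  refine ⟨union_subset h.1 fun p hp => ?_, fun p hp b hb hpb => ?_⟩
  · have h₁ := h'.1 hp
    have h₂ : p ∈ Q → p ∈ B \ A := fun h => hQ h
    simp only [mem_sdiff] at h₁ h₂ ⊢
    tauto
  · rcases mem_union.1 hp with hp | hp
    · exact mem_union_left _ (h.2 p hp b hb hpb)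
    · by_cases hbQ : b ∈ Q
      · exact mem_union_left _ hbQ
      · exact mem_union_right _ (h'.2 p hp b (mem_sdiff.2 ⟨hb, hbQ⟩) hpb)

theorem IsSwappable.union (h : IsSwappable row col A B P Q)
    (h' : IsSwappable row col (A \ P) (B \ Q) P' Q') :
    IsSwappable row col A B (P ∪ P') (Q ∪ Q') :=
  ⟨h.1.union h.2.1 h'.1, h.2.union h.1.1 h'.2⟩

theorem IsSwappable.disjoint_of_sdiff (h' : IsSwappable row col (A \ P) (B \ Q) P' Q') :
    Disjoint P P' :=
  disjoint_sdiff.mono_right h'.subset_left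

theorem IsHalfSwappable.insert {a b : α} (ha : a ∈ A \ B) (hb : b ∈ B \ A)
    (hma : ∀ x ∈ B, Meets row col a x → x = b ∨ x ∈ Q)
    (h : IsHalfSwappable row col (A.erase a) (B.erase b) P Q) :
    IsHalfSwappable row col A B (insert a P) (insert b Q) := by
  refine ⟨insert_subset ha fun p hp => ?_, fun p hp x hx hpx => ?_⟩
  · have hp' := h.1 hp
    have hb' := mem_sdiff.1 hb
    simp only [mem_sdiff, mem_erase] at hp' ⊢
    refine ⟨hp'.1.2, fun hpB => hp'.2 ⟨fun hpb => hb'.2 (hpb ▸ hp'.1.2), hpB⟩⟩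
  · rw [mem_insert] at hp ⊢
    rcases hp with rfl | hp
    · exact hma x hx hpx
    · by_cases hxb : x = b
      · exact Or.inl hxb
      · exact Or.inr (h.2 p hp x (mem_erase.2 ⟨hxb, hx⟩) hpx)

theorem IsSwappable.insert {a b : α} (ha : a ∈ A \ B) (hb : b ∈ B \ A)
    (hma : ∀ x ∈ B, Meets row col a x → x = b ∨ x ∈ Q)
    (hmb : ∀ x ∈ A, Meets row col b x → x = a ∨ x ∈ P)
    (h : IsSwappable row col (A.erase a) (B.erase b) P Q) :
    IsSwappable row col A B (insert a P) (insert b Q) :=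
  ⟨h.1.insert ha hb hma, h.2.insert hb ha hmb⟩

/-- The alternating path from `c`: along its column to a cell of `B`, along that cell's row to a
cell of `A`, and so on. -/
theorem exists_isSwappable_of_row_free (hA : IsMatching row col A) (hB : IsMatching row col B)
    {c : α} (hc : c ∈ A) (hfree : ∀ b ∈ B, row b ≠ row c) :
    ∃ P Q, IsSwappable row col A B P Q ∧ c ∈ P ∧ (#P = #Q ∨ #P = #Q + 1) := by
  induction hn : #A using Nat.strong_induction_on generalizing A B c with
  | _ n ih =>
  have hcAB : c ∈ A \ B := mem_sdiff.2 ⟨hc, fun h => hfree c h rfl⟩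
  by_cases hcol : ∃ b ∈ B, col b = col c
  swap
  · simp only [not_exists, not_and] at hcol
    refine ⟨{c}, ∅, ⟨⟨singleton_subset_iff.2 hcAB, fun p hp b hb hpb => ?_⟩,
      empty_subset _, by simp⟩, mem_singleton_self c, Or.inr rfl⟩
    rw [mem_singleton.1 hp] at hpb
    exact (hpb.elim (fun h => hfree b hb h.symm) fun h => hcol b hb h.symm).elim
  obtain ⟨b, hb, hbc⟩ := hcol
  have hbAB : b ∈ B \ A := mem_sdiff.2 ⟨hb, fun h => (mem_sdiff.1 hcAB).2 <|
    hA b h c hc (Or.inr hbc) ▸ hb⟩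
  have hmc : ∀ x ∈ B, Meets row col c x → x = b := fun x hx hcx =>
    hcx.elim (fun h => (hfree x hx h.symm).elim) fun h => hB x hx b hb (Or.inr (h ▸ hbc.symm))
  have hmb : ∀ x ∈ A, col b = col x → x = c := fun x hx h => hA x hx c hc (Or.inr (h ▸ hbc))
  by_cases hrow : ∃ a ∈ A, row a = row b
  · obtain ⟨a, ha, hab⟩ := hrow
    have hac : a ≠ c := fun h => hfree b hb (h ▸ hab).symm
    obtain ⟨P, Q, h, haP, hcard⟩ := ih _ (hn ▸ card_erase_lt_of_mem hc)
      (hA.mono (erase_subset c A)) (hB.mono (erase_subset b B)) (mem_erase.2 ⟨hac, ha⟩)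
      (fun x hx hxa => (mem_erase.1 hx).1 <|
        hB x (mem_erase.1 hx).2 b hb (Or.inl (hxa.trans hab)))
      rfl
    refine ⟨insert c P, insert b Q,
      h.insert hcAB hbAB (fun x hx hcx => Or.inl (hmc x hx hcx))
        (fun x hx hbx => hbx.elim (fun h => Or.inr ?_) fun h => Or.inl (hmb x hx h)),
      mem_insert_self c P, ?_⟩
    · rw [hA x hx a ha (Or.inl (h.symm.trans hab.symm))]
      exact haP
    · rw [card_insert_of_notMem fun hcP => (mem_erase.1 (h.subset_left hcP)).1 rfl,
        card_insert_of_notMem fun hbQ => (mem_erase.1 (h.subset_right hbQ)).1 rfl]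
      omega
  · simp only [not_exists, not_and] at hrow
    refine ⟨{c}, {b},
      isSwappable_empty.insert hcAB hbAB (fun x hx hcx => Or.inl (hmc x hx hcx))
        (fun x hx hbx => Or.inl (hbx.elim (fun h => (hrow x hx h.symm).elim) (hmb x hx))),
      mem_singleton_self c, Or.inl rfl⟩

theorem exists_isSwappable_card_add_one (hA : IsMatching row col A) (hB : IsMatching row col B)
    (hAB : #A < #B) : ∃ P Q, IsSwappable row col A B P Q ∧ #Q = #P + 1 := by
  induction hn : #B using Nat.strong_induction_on generalizing A B with
  | _ n ih =>
  obtain ⟨b, hb, hfree⟩ := hB.exists_row_notMem hAB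
  obtain ⟨Q, P, h, hbQ, hcard | hcard⟩ := exists_isSwappable_of_row_free hB hA hb hfree
  · have hP := card_sdiff_add_card_eq_card h.subset_right
    have hQ := card_sdiff_add_card_eq_card h.subset_left
    have hQpos := card_pos.2 ⟨b, hbQ⟩
    have hlt : #(A \ P) < #(B \ Q) := by omega
    obtain ⟨P', Q', h', hcard'⟩ := ih #(B \ Q) (by omega)
      (hA.mono sdiff_subset) (hB.mono sdiff_subset) hlt rfl
    refine ⟨P ∪ P', Q ∪ Q', h.symm.union h', ?_⟩
    rw [card_union_of_disjoint h'.disjoint_of_sdiff,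
      card_union_of_disjoint h'.symm.disjoint_of_sdiff]
    omega
  · exact ⟨P, Q, h.symm, hcard⟩

theorem exists_isSwappable_card_eq_of_row_free (hA : IsMatching row col A)
    (hB : IsMatching row col B) (hAB : #A ≤ #B) {c : α} (hc : c ∈ A)
    (hfree : ∀ b ∈ B, row b ≠ row c) :
    ∃ P Q, IsSwappable row col A B P Q ∧ c ∈ P ∧ #P = #Q := by
  obtain ⟨P, Q, h, hcP, hcard | hcard⟩ := exists_isSwappable_of_row_free hA hB hc hfree
  · exact ⟨P, Q, h, hcP, hcard⟩
  · have hP := card_sdiff_add_card_eq_card h.subset_left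
    have hQ := card_sdiff_add_card_eq_card h.subset_right
    obtain ⟨P', Q', h', hcard'⟩ := exists_isSwappable_card_add_one (hA.mono sdiff_subset)
      (hB.mono sdiff_subset) (show #(A \ P) < #(B \ Q) by omega)
    refine ⟨P ∪ P', Q ∪ Q', h.union h', mem_union_left _ hcP, ?_⟩
    rw [card_union_of_disjoint h'.disjoint_of_sdiff,
      card_union_of_disjoint h'.symm.disjoint_of_sdiff]
    omega

theorem exists_isSwappable_card_eq (hA : IsMatching row col A) (hB : IsMatching row col B)
    (hAB : #A ≤ #B) {c : α} (hc : c ∈ A)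
    (hfree : (∀ b ∈ B, row b ≠ row c) ∨ ∀ b ∈ B, col b ≠ col c) :
    ∃ P Q, IsSwappable row col A B P Q ∧ c ∈ P ∧ #P = #Q := by
  rcases hfree with hfree | hfree
  · exact exists_isSwappable_card_eq_of_row_free hA hB hAB hc hfree
  · rw [← isMatching_comm] at hA hB
    rw [← isSwappable_comm]
    exact exists_isSwappable_card_eq_of_row_free hA hB hAB hc hfree

end Cells

open Cells

theorem image_fst_subset_of_subset_product {α β : Type*} [DecidableEq α] {S : Finset (α × β)}
    {R : Finset α} {C : Finset β} (h : S ⊆ R ×ˢ C) : S.image Prod.fst ⊆ R :=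
  (image_subset_image h).trans subset_product_image_fst

theorem image_snd_subset_of_subset_product {α β : Type*} [DecidableEq β] {S : Finset (α × β)}
    {R : Finset α} {C : Finset β} (h : S ⊆ R ×ˢ C) : S.image Prod.snd ⊆ C :=
  (image_subset_image h).trans subset_product_image_snd

theorem isAssign_iff {m n k : ℕ} {S : Finset (ℕ × ℕ)} : IsAssign m n k S ↔
    #S = k ∧ (∀ p ∈ S, p.1 < m ∧ p.2 < n) ∧ IsMatching Prod.fst Prod.snd S := by
  refine and_congr_right fun _ => and_congr_right fun _ =>
    forall₂_congr fun p _ => forall₂_congr fun q _ => ?_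
  unfold Meets
  tauto

theorem IsAssign.subset_range_product {m n k : ℕ} {S : Finset (ℕ × ℕ)}
    (hS : IsAssign m n k S) : S ⊆ range m ×ˢ range n :=
  fun p hp => mem_product.2 ⟨mem_range.2 (hS.2.1 p hp).1, mem_range.2 (hS.2.1 p hp).2⟩

theorem IsAssign.card_image_fst {m n k : ℕ} {S : Finset (ℕ × ℕ)} (hS : IsAssign m n k S) :
    #(S.image Prod.fst) = k :=
  (card_image_of_injOn (isAssign_iff.1 hS).2.2.injOn_row).trans hS.1

theorem IsAssign.card_image_snd {m n k : ℕ} {S : Finset (ℕ × ℕ)} (hS : IsAssign m n k S) :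
    #(S.image Prod.snd) = k := by
  have hS' := (isAssign_iff.1 hS).2.2
  rw [← isMatching_comm] at hS'
  exact (card_image_of_injOn hS'.injOn_row).trans hS.1

theorem exists_minAssign {m n k : ℕ} (hkm : k ≤ m) (hkn : k ≤ n) (X : ℕ → ℕ → ℝ) :
    ∃ S, MinAssign m n k X S := by
  classical
  have hdiag : IsAssign m n k (range k).diag := by
    refine isAssign_iff.2
      ⟨(diag_card _).trans (card_range k), fun p hp => ?_, fun p hp q hq h => ?_⟩
    · obtain ⟨hp, hpp⟩ := mem_diag.1 hp
      have := mem_range.1 hp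
      omega
    · obtain ⟨-, hpp⟩ := mem_diag.1 hp
      obtain ⟨-, hqq⟩ := mem_diag.1 hq
      exact Prod.ext_iff.2 (by unfold Meets at h; omega)
  obtain ⟨S, hS, hmin⟩ :=
    exists_min_image ((range m ×ˢ range n).powerset.filter (IsAssign m n k)) (aval X)
      ⟨_, mem_filter.2 ⟨mem_powerset.2 hdiag.subset_range_product, hdiag⟩⟩
  exact ⟨S, (mem_filter.1 hS).2, fun T hT =>
    hmin T (mem_filter.2 ⟨mem_powerset.2 hT.subset_range_product, hT⟩)⟩

theorem aval_sdiff_union (X : ℕ → ℕ → ℝ) {S P Q : Finset (ℕ × ℕ)} (hP : P ⊆ S)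
    (hQ : Disjoint S Q) : aval X (S \ P ∪ Q) = aval X S - aval X P + aval X Q := by
  rw [aval, sum_union (hQ.mono_left sdiff_subset), sum_sdiff_eq_sub hP]
  rfl

theorem IsAssign.sdiff_union {m n k k' : ℕ} {S T P Q : Finset (ℕ × ℕ)}
    (hS : IsAssign m n k S) (hT : IsAssign m n k' T)
    (h : IsSwappable Prod.fst Prod.snd S T P Q) (hPQ : #P = #Q) : IsAssign m n k (S \ P ∪ Q) := by
  rw [isAssign_iff] at hS hT ⊢
  refine ⟨by have := h.card_sdiff_union_add; omega, fun p hp => ?_,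
    h.isMatching_sdiff_union hS.2.2 hT.2.2⟩
  rcases mem_union.1 hp with hp | hp
  · exact hS.2.1 p (mem_sdiff.1 hp).1
  · exact hT.2.1 p (h.subset_right hp)

theorem MinAssign.sdiff_union {m n k₁ k₂ : ℕ} {X : ℕ → ℕ → ℝ} {S T P Q : Finset (ℕ × ℕ)}
    (hS : MinAssign m n k₁ X S) (hT : MinAssign m n k₂ X T)
    (h : IsSwappable Prod.fst Prod.snd S T P Q) (hPQ : #P = #Q) :
    MinAssign m n k₁ X (S \ P ∪ Q) ∧ MinAssign m n k₂ X (T \ Q ∪ P) := by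
  have hS' := hS.1.sdiff_union hT.1 h hPQ
  have hT' := hT.1.sdiff_union hS.1 h.symm hPQ.symm
  have htotal : aval X (S \ P ∪ Q) + aval X (T \ Q ∪ P) = aval X S + aval X T := by
    rw [aval_sdiff_union X h.subset_left h.disjoint_right,
      aval_sdiff_union X h.subset_right h.symm.disjoint_right]
    ring
  have hS_le := hS.2 _ hS'
  have hT_le := hT.2 _ hT'
  exact ⟨⟨hS', fun W hW => by linarith [hS.2 W hW]⟩,
    ⟨hT', fun W hW => by linarith [hT.2 W hW]⟩⟩

def submatrixCells (T : Finset (ℕ × ℕ)) : Finset (ℕ × ℕ) :=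
  T.image Prod.fst ×ˢ T.image Prod.snd

theorem MinAssign.exists_isSwappable {m n k₁ k₂ : ℕ} {X : ℕ → ℕ → ℝ} {S T : Finset (ℕ × ℕ)}
    (hk : k₁ ≤ k₂) (hS : MinAssign m n k₁ X S) (hT : MinAssign m n k₂ X T)
    (hST : ¬S ⊆ submatrixCells T) :
    ∃ P Q, IsSwappable Prod.fst Prod.snd S T P Q ∧ P.Nonempty ∧ #P = #Q := by
  obtain ⟨c, hcS, hc⟩ := not_subset.1 hST
  have hfree : (∀ t ∈ T, t.1 ≠ c.1) ∨ ∀ t ∈ T, t.2 ≠ c.2 := by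
    simp only [submatrixCells, mem_product, mem_image, not_and_or, not_exists] at hc
    exact hc.imp (fun h t ht hct => (h t).elim (· ht) (· hct))
      fun h t ht hct => (h t).elim (· ht) (· hct)
  obtain ⟨P, Q, h, hcP, hPQ⟩ := exists_isSwappable_card_eq (isAssign_iff.1 hS.1).2.2
    (isAssign_iff.1 hT.1).2.2 (hS.1.1.trans_le (hk.trans hT.1.1.ge)) hcS hfree
  exact ⟨P, Q, h, ⟨c, hcP⟩, hPQ⟩

theorem MinAssign.exists_minAssign_subset_submatrixCells {m n k₁ k₂ : ℕ} {X : ℕ → ℕ → ℝ}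
    {S T : Finset (ℕ × ℕ)} (hk : k₁ ≤ k₂) (hT : MinAssign m n k₂ X T)
    (hS : MinAssign m n k₁ X S) : ∃ S', MinAssign m n k₁ X S' ∧ S' ⊆ submatrixCells T := by
  induction hd : #(S \ T) using Nat.strong_induction_on generalizing S with
  | _ d ih =>
  by_cases hST : S ⊆ submatrixCells T
  · exact ⟨S, hS, hST⟩
  obtain ⟨P, Q, h, hP, hPQ⟩ := hS.exists_isSwappable hk hT hST
  exact ih _ (hd ▸ card_lt_card (h.sdiff_union_sdiff_ssubset hP))
    (hS.sdiff_union hT h hPQ).1 rfl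

theorem MinAssign.exists_minAssign_submatrixCells_supset {m n k₁ k₂ : ℕ} {X : ℕ → ℕ → ℝ}
    {S T : Finset (ℕ × ℕ)} (hk : k₁ ≤ k₂) (hS : MinAssign m n k₁ X S)
    (hT : MinAssign m n k₂ X T) : ∃ T', MinAssign m n k₂ X T' ∧ S ⊆ submatrixCells T' := by
  induction hd : #(S \ T) using Nat.strong_induction_on generalizing T with
  | _ d ih =>
  by_cases hST : S ⊆ submatrixCells T
  · exact ⟨T, hT, hST⟩
  obtain ⟨P, Q, h, hP, hPQ⟩ := hS.exists_isSwappable hk hT hST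
  exact ih _ (hd ▸ card_lt_card (h.sdiff_sdiff_union_ssubset hP))
    (hS.sdiff_union hT h hPQ).2 rfl

theorem nesting_lemma_general (k₁ k₂ m n : ℕ) (h₁₂ : k₁ ≤ k₂) (h₂m : k₂ ≤ m)
    (hmn : m ≤ n) (X : ℕ → ℕ → ℝ) :
    -- (i) upward nesting
    ((∀ R₁ C₁ : Finset ℕ, R₁ ⊆ Finset.range m → C₁ ⊆ Finset.range n →
        R₁.card = k₁ → C₁.card = k₁ →
        (∃ S, MinAssign m n k₁ X S ∧ S ⊆ R₁ ×ˢ C₁) →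
        ∃ R₂ C₂ : Finset ℕ, R₁ ⊆ R₂ ∧ C₁ ⊆ C₂ ∧ R₂ ⊆ Finset.range m ∧ C₂ ⊆ Finset.range n ∧
          R₂.card = k₂ ∧ C₂.card = k₂ ∧
          ∃ T, MinAssign m n k₂ X T ∧ T ⊆ R₂ ×ˢ C₂) ∧
    -- (ii) downward nesting
    (∀ R₂ C₂ : Finset ℕ, R₂ ⊆ Finset.range m → C₂ ⊆ Finset.range n →
        R₂.card = k₂ → C₂.card = k₂ →
        (∃ T, MinAssign m n k₂ X T ∧ T ⊆ R₂ ×ˢ C₂) →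
        ∃ R₁ C₁ : Finset ℕ, R₁ ⊆ R₂ ∧ C₁ ⊆ C₂ ∧ R₁.card = k₁ ∧ C₁.card = k₁ ∧
          ∃ S, MinAssign m n k₁ X S ∧ S ⊆ R₁ ×ˢ C₁)) := by
  constructor
  · rintro R₁ C₁ - - hR₁ hC₁ ⟨S, hS, hSRC⟩
    obtain ⟨T₀, hT₀⟩ := exists_minAssign h₂m (h₂m.trans hmn) X
    obtain ⟨T, hT, hST⟩ := hS.exists_minAssign_submatrixCells_supset h₁₂ hT₀
    have hR : S.image Prod.fst = R₁ := eq_of_subset_of_card_le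
      (image_fst_subset_of_subset_product hSRC) (hR₁.trans hS.1.card_image_fst.symm).le
    have hC : S.image Prod.snd = C₁ := eq_of_subset_of_card_le
      (image_snd_subset_of_subset_product hSRC) (hC₁.trans hS.1.card_image_snd.symm).le
    subst hR hC
    exact ⟨_, _, image_fst_subset_of_subset_product hST, image_snd_subset_of_subset_product hST,
      image_fst_subset_of_subset_product hT.1.subset_range_product,
      image_snd_subset_of_subset_product hT.1.subset_range_product,
      hT.1.card_image_fst, hT.1.card_image_snd, T, hT, subset_product⟩
  · rintro R₂ C₂ - - - - ⟨T, hT, hTRC⟩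
    obtain ⟨S₀, hS₀⟩ := exists_minAssign (h₁₂.trans h₂m) (h₁₂.trans (h₂m.trans hmn)) X
    obtain ⟨S, hS, hST⟩ := hT.exists_minAssign_subset_submatrixCells h₁₂ hS₀
    exact ⟨_, _, (image_fst_subset_of_subset_product hST).trans
      (image_fst_subset_of_subset_product hTRC), (image_snd_subset_of_subset_product hST).trans
      (image_snd_subset_of_subset_product hTRC), hS.1.card_image_fst, hS.1.card_image_snd, S, hS,
      subset_product⟩

/-- The nesting lemma: minimum assignments of different sizes lie in nested submatrices. -/
theorem nesting_lemma (k₁ k₂ m n : ℕ) (hk₁ : 0 < k₁) (h₁₂ : k₁ ≤ k₂) (h₂m : k₂ ≤ m)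
    (hmn : m ≤ n) (X : ℕ → ℕ → ℝ) (hX : ∀ i < m, ∀ j < n, 0 ≤ X i j) :
    -- (i) upward nesting
    ((∀ R₁ C₁ : Finset ℕ, R₁ ⊆ Finset.range m → C₁ ⊆ Finset.range n →
        R₁.card = k₁ → C₁.card = k₁ →
        (∃ S, MinAssign m n k₁ X S ∧ S ⊆ R₁ ×ˢ C₁) →
        ∃ R₂ C₂ : Finset ℕ, R₁ ⊆ R₂ ∧ C₁ ⊆ C₂ ∧ R₂ ⊆ Finset.range m ∧ C₂ ⊆ Finset.range n ∧
          R₂.card = k₂ ∧ C₂.card = k₂ ∧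
          ∃ T, MinAssign m n k₂ X T ∧ T ⊆ R₂ ×ˢ C₂) ∧
    -- (ii) downward nesting
    (∀ R₂ C₂ : Finset ℕ, R₂ ⊆ Finset.range m → C₂ ⊆ Finset.range n →
        R₂.card = k₂ → C₂.card = k₂ →
        (∃ T, MinAssign m n k₂ X T ∧ T ⊆ R₂ ×ˢ C₂) →
        ∃ R₁ C₁ : Finset ℕ, R₁ ⊆ R₂ ∧ C₁ ⊆ C₂ ∧ R₁.card = k₁ ∧ C₁.card = k₁ ∧
          ∃ S, MinAssign m n k₁ X S ∧ S ⊆ R₁ ×ˢ C₁)) :=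
  nesting_lemma_general k₁ k₂ m n h₁₂ h₂m hmn X
end

section
/- Suppose T is an m×n matrix all of whose entries are 0, 1, or 2, all of whose row sums and column sums are at most 2, and whose total entry sum is 2k (with k ≤ m, k ≤ n). Then T = σ + τ for some 0-1 matrices σ and τ, each having exactly k entries equal to 1 with no two 1's in the same row or column. -/
/-- A `k`-assignment matrix: a 0-1 `m × n` matrix with exactly `k` ones,
no two in the same row or column. (Entries outside the `m × n` range are irrelevant;
we only constrain indices `i < m`, `j < n`.) -/
def IsAssignMatrix (m n k : ℕ) (σ : ℕ → ℕ → ℕ) : Prop :=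
  (∀ i < m, ∀ j < n, σ i j ≤ 1) ∧
  (∑ i ∈ Finset.range m, ∑ j ∈ Finset.range n, σ i j) = k ∧
  (∀ i < m, ∑ j ∈ Finset.range n, σ i j ≤ 1) ∧
  (∀ j < n, ∑ i ∈ Finset.range m, σ i j ≤ 1)

private lemma tele_aux (v : ℕ → ℕ) (hv : Monotone v) (a b : ℕ) (hab : a ≤ b)
    (h0 : v 0 ≤ a) (nn : ℕ) (h1 : b ≤ v nn) :
    ∑ t ∈ Finset.range nn, (min b (v (t+1)) - max a (v t)) = b - a := by
  have key : ∀ t, min b (v (t+1)) - max a (v t)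
      = max a (min b (v (t+1))) - max a (min b (v t)) := by
    intro t
    have h := hv (Nat.le_succ t)
    simp only [Nat.min_def, Nat.max_def]
    split_ifs <;> omega
  have hmono : Monotone (fun t => max a (min b (v t))) := fun s t hst =>
    max_le_max le_rfl (min_le_min le_rfl (hv hst))
  calc ∑ t ∈ Finset.range nn, (min b (v (t+1)) - max a (v t))
      = ∑ t ∈ Finset.range nn, ((fun t => max a (min b (v t))) (t+1)
          - (fun t => max a (min b (v t))) t) := by simp_rw [key]
    _ = max a (min b (v nn)) - max a (min b (v 0)) := Finset.sum_range_tsub hmono nn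
    _ = b - a := by
        have hv0 : v 0 ≤ b := le_trans h0 hab
        simp only [Nat.min_def, Nat.max_def]; split_ifs <;> omega

private lemma tele_aux' (v : ℕ → ℕ) (hv : Monotone v) (a b : ℕ) (hab : a ≤ b)
    (h0 : v 0 ≤ a) (nn : ℕ) (h1 : b ≤ v nn) :
    ∑ t ∈ Finset.range nn, (min (v (t+1)) b - max (v t) a) = b - a := by
  simp only [fun t : ℕ => min_comm (v (t+1)) b, fun t : ℕ => max_comm (v t) a]
  exact tele_aux v hv a b hab h0 nn h1

private lemma tele_aux2 (a b M : ℕ) (hab : a ≤ b) (hb : b ≤ 2 * M) :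
    ∑ t ∈ Finset.range M, (min b (2 * (t + 1)) - max a (2 * t)) = b - a := by
  have := tele_aux (fun t => 2 * t) (fun s t h => by simpa using Nat.mul_le_mul_left 2 h)
    a b hab (by simpa using Nat.zero_le a) M (by simpa using hb)
  simpa using this

private lemma sum_range_split (f : ℕ → ℕ) (a b : ℕ) :
    ∑ j ∈ Finset.range (a + b), f j
      = ∑ j ∈ Finset.range a, f j + ∑ t ∈ Finset.range b, f (a + t) := by
  induction b with
  | zero => simp
  | succ b ih => rw [Nat.add_succ, Finset.sum_range_succ, Finset.sum_range_succ, ih, add_assoc]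

/-- If `T` is an `m × n` matrix with entries in `{0,1,2}`, all row and column sums at most `2`,
and total entry sum `2k` (with `k ≤ m`, `k ≤ n`), then `T = σ + τ` for two `k`-assignment
matrices `σ` and `τ`. -/
theorem two_assignment_decomposition (m n k : ℕ) (hkm : k ≤ m) (hkn : k ≤ n)
    (T : ℕ → ℕ → ℕ)
    (hT2 : ∀ i < m, ∀ j < n, T i j ≤ 2)
    (hrow : ∀ i < m, ∑ j ∈ Finset.range n, T i j ≤ 2)
    (hcol : ∀ j < n, ∑ i ∈ Finset.range m, T i j ≤ 2)
    (htot : ∑ i ∈ Finset.range m, ∑ j ∈ Finset.range n, T i j = 2 * k) :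
    ∃ σ τ : ℕ → ℕ → ℕ, IsAssignMatrix m n k σ ∧ IsAssignMatrix m n k τ ∧
      ∀ i < m, ∀ j < n, T i j = σ i j + τ i j := by
  classical
  set N := m + n - k with hNdef
  have hmN : m ≤ N := by omega
  have hnN : n ≤ N := by omega
  -- prefix sums of row deficiencies and column deficiencies
  set D : ℕ → ℕ := fun i => ∑ i' ∈ Finset.range i, (2 - ∑ j ∈ Finset.range n, T i' j)
    with hD
  set E : ℕ → ℕ := fun j => ∑ j' ∈ Finset.range j, (2 - ∑ i ∈ Finset.range m, T i j')
    with hE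
  have hDmono : Monotone D := by
    intro s t hst
    exact Finset.sum_le_sum_of_subset (Finset.range_subset_range.2 hst)
  have hEmono : Monotone E := by
    intro s t hst
    exact Finset.sum_le_sum_of_subset (Finset.range_subset_range.2 hst)
  have hD0 : D 0 = 0 := by simp [hD]
  have hE0 : E 0 = 0 := by simp [hE]
  have hDsucc : ∀ i, D (i+1) = D i + (2 - ∑ j ∈ Finset.range n, T i j) := by
    intro i; simp [hD, Finset.sum_range_succ]
  have hEsucc : ∀ j, E (j+1) = E j + (2 - ∑ i ∈ Finset.range m, T i j) := by
    intro j; simp [hE, Finset.sum_range_succ]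
  have hcsum : ∑ j ∈ Finset.range n, ∑ i ∈ Finset.range m, T i j = 2 * k := by
    rw [Finset.sum_comm]; exact htot
  have hDm : D m = 2 * (m - k) := by
    have h1 : D m + ∑ i ∈ Finset.range m, ∑ j ∈ Finset.range n, T i j
        = ∑ i ∈ Finset.range m, 2 := by
      rw [hD, ← Finset.sum_add_distrib]
      apply Finset.sum_congr rfl
      intro i hi
      have := hrow i (Finset.mem_range.mp hi)
      omega
    rw [htot] at h1
    simp only [Finset.sum_const, Finset.card_range, smul_eq_mul] at h1
    omega
  have hEn : E n = 2 * (n - k) := by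
    have h1 : E n + ∑ j ∈ Finset.range n, ∑ i ∈ Finset.range m, T i j
        = ∑ j ∈ Finset.range n, 2 := by
      rw [hE, ← Finset.sum_add_distrib]
      apply Finset.sum_congr rfl
      intro j hj
      have := hcol j (Finset.mem_range.mp hj)
      omega
    rw [hcsum] at h1
    simp only [Finset.sum_const, Finset.card_range, smul_eq_mul] at h1
    omega
  -- the extended matrix
  set Th : ℕ → ℕ → ℕ := fun i j =>
    if i < m then
      (if j < n then T i j
       else min (D (i+1)) (2 * ((j - n) + 1)) - max (D i) (2 * (j - n)))
    else
      (if j < n then min (E (j+1)) (2 * ((i - m) + 1)) - max (E j) (2 * (i - m))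
       else 0) with hTh
  have hThblock : ∀ i < m, ∀ j < n, Th i j = T i j := by
    intro i hi j hj; simp [hTh, hi, hj]
  -- row sums of Th are 2
  have hThrow : ∀ i < N, ∑ j ∈ Finset.range N, Th i j = 2 := by
    intro i hi
    have hsplit : ∑ j ∈ Finset.range N, Th i j
        = ∑ j ∈ Finset.range n, Th i j + ∑ t ∈ Finset.range (N - n), Th i (n + t) := by
      have h := sum_range_split (Th i) n (N - n)
      rw [show n + (N - n) = N from by omega] at h
      exact h
    rcases lt_or_ge i m with him | him
    · have h1 : ∑ j ∈ Finset.range n, Th i j = ∑ j ∈ Finset.range n, T i j :=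
        Finset.sum_congr rfl (fun j hj => hThblock i him j (Finset.mem_range.mp hj))
      have h2 : ∑ t ∈ Finset.range (N - n), Th i (n + t)
          = ∑ t ∈ Finset.range (N - n), (min (D (i+1)) (2 * (t + 1)) - max (D i) (2 * t)) := by
        apply Finset.sum_congr rfl
        intro t ht
        have hge : ¬ (n + t < n) := by omega
        simp [hTh, him, hge, Nat.add_sub_cancel_left]
      have h3 : ∑ t ∈ Finset.range (N - n), (min (D (i+1)) (2 * (t + 1)) - max (D i) (2 * t))
          = D (i+1) - D i := by
        apply tele_aux2 (D i) (D (i+1)) (N - n) (hDmono (Nat.le_succ i))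
        have hb : D (i+1) ≤ D m := hDmono him
        rw [hDm] at hb
        omega
      have hri := hrow i him
      rw [hsplit, h1, h2, h3, hDsucc i]
      omega
    · have hs : i - m < n - k := by omega
      have h1 : ∑ j ∈ Finset.range n, Th i j
          = ∑ j ∈ Finset.range n, (min (E (j+1)) (2 * ((i - m) + 1)) - max (E j) (2 * (i - m))) := by
        apply Finset.sum_congr rfl
        intro j hj
        have hjn := Finset.mem_range.mp hj
        simp [hTh, Nat.not_lt.mpr him, hjn]
      have h2 : ∑ t ∈ Finset.range (N - n), Th i (n + t) = 0 := by
        apply Finset.sum_eq_zero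
        intro t ht
        have hge : ¬ (n + t < n) := by omega
        simp [hTh, Nat.not_lt.mpr him, hge]
      have h3 : ∑ j ∈ Finset.range n, (min (E (j+1)) (2 * ((i - m) + 1)) - max (E j) (2 * (i - m)))
          = 2 * ((i - m) + 1) - 2 * (i - m) := by
        apply tele_aux' E hEmono (2 * (i - m)) (2 * ((i - m) + 1)) (by omega)
          (by simp [hE]) n (by rw [hEn]; omega)
      rw [hsplit, h1, h2, h3]
      omega
  -- column sums of Th are 2
  have hThcol : ∀ j < N, ∑ i ∈ Finset.range N, Th i j = 2 := by
    intro j hj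
    have hsplit : ∑ i ∈ Finset.range N, Th i j
        = ∑ i ∈ Finset.range m, Th i j + ∑ s ∈ Finset.range (N - m), Th (m + s) j := by
      have h := sum_range_split (fun i => Th i j) m (N - m)
      rw [show m + (N - m) = N from by omega] at h
      exact h
    rcases lt_or_ge j n with hjn | hjn
    · have h1 : ∑ i ∈ Finset.range m, Th i j = ∑ i ∈ Finset.range m, T i j :=
        Finset.sum_congr rfl (fun i hi => hThblock i (Finset.mem_range.mp hi) j hjn)
      have h2 : ∑ s ∈ Finset.range (N - m), Th (m + s) j
          = ∑ s ∈ Finset.range (N - m), (min (E (j+1)) (2 * (s + 1)) - max (E j) (2 * s)) := by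
        apply Finset.sum_congr rfl
        intro s hs
        have hge : ¬ (m + s < m) := by omega
        simp [hTh, hge, hjn, Nat.add_sub_cancel_left]
      have h3 : ∑ s ∈ Finset.range (N - m), (min (E (j+1)) (2 * (s + 1)) - max (E j) (2 * s))
          = E (j+1) - E j := by
        apply tele_aux2 (E j) (E (j+1)) (N - m) (hEmono (Nat.le_succ j))
        have hb : E (j+1) ≤ E n := hEmono hjn
        rw [hEn] at hb
        omega
      have hcj := hcol j hjn
      rw [hsplit, h1, h2, h3, hEsucc j]
      omega
    · have ht : j - n < m - k := by omega
      have h1 : ∑ i ∈ Finset.range m, Th i j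
          = ∑ i ∈ Finset.range m, (min (D (i+1)) (2 * ((j - n) + 1)) - max (D i) (2 * (j - n))) := by
        apply Finset.sum_congr rfl
        intro i hi
        have him := Finset.mem_range.mp hi
        simp [hTh, him, Nat.not_lt.mpr hjn]
      have h2 : ∑ s ∈ Finset.range (N - m), Th (m + s) j = 0 := by
        apply Finset.sum_eq_zero
        intro s hs
        have hge : ¬ (m + s < m) := by omega
        simp [hTh, hge, Nat.not_lt.mpr hjn]
      have h3 : ∑ i ∈ Finset.range m, (min (D (i+1)) (2 * ((j - n) + 1)) - max (D i) (2 * (j - n)))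
          = 2 * ((j - n) + 1) - 2 * (j - n) := by
        apply tele_aux' D hDmono (2 * (j - n)) (2 * ((j - n) + 1)) (by omega)
          (by simp [hD]) m (by rw [hDm]; omega)
      rw [hsplit, h1, h2, h3]
      omega
  -- Hall's theorem: a perfect matching in Th
  set t : Fin N → Finset ℕ := fun i => (Finset.range N).filter (fun j => 1 ≤ Th (i : ℕ) j)
    with htdef
  have hall : ∀ s : Finset (Fin N), s.card ≤ (s.biUnion t).card := by
    intro s
    have hsub : s.biUnion t ⊆ Finset.range N := by
      intro j hj
      obtain ⟨i, _, hji⟩ := Finset.mem_biUnion.mp hj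
      exact Finset.mem_filter.mp hji |>.1
    have e1 : 2 * s.card = ∑ i ∈ s, ∑ j ∈ Finset.range N, Th (i : ℕ) j := by
      have hrw : ∀ i ∈ s, ∑ j ∈ Finset.range N, Th (i : ℕ) j = 2 :=
        fun i _ => hThrow (i : ℕ) i.isLt
      rw [Finset.sum_congr rfl hrw]
      simp [Finset.sum_const, mul_comm]
    rw [Finset.sum_comm] at e1
    have e2 : ∑ j ∈ Finset.range N, ∑ i ∈ s, Th (i : ℕ) j
        = ∑ j ∈ s.biUnion t, ∑ i ∈ s, Th (i : ℕ) j := by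
      refine (Finset.sum_subset hsub ?_).symm
      intro j hjN hj
      apply Finset.sum_eq_zero
      intro i hi
      by_contra hne
      have hji : j ∈ t i := Finset.mem_filter.mpr ⟨hjN, by omega⟩
      exact hj (Finset.mem_biUnion.mpr ⟨i, hi, hji⟩)
    have e3 : ∑ j ∈ s.biUnion t, ∑ i ∈ s, Th (i : ℕ) j ≤ ∑ j ∈ s.biUnion t, 2 := by
      apply Finset.sum_le_sum
      intro j hj
      have h4 : ∑ i ∈ s, Th (i : ℕ) j ≤ ∑ i ∈ (Finset.univ : Finset (Fin N)), Th (i : ℕ) j :=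
        Finset.sum_le_sum_of_subset (Finset.subset_univ s)
      have h5 : ∑ i ∈ (Finset.univ : Finset (Fin N)), Th (i : ℕ) j
          = ∑ i ∈ Finset.range N, Th i j := Fin.sum_univ_eq_sum_range (fun i => Th i j) N
      rw [h5, hThcol j (Finset.mem_range.mp (hsub hj))] at h4
      exact h4
    have e4 : ∑ j ∈ s.biUnion t, (2:ℕ) = 2 * (s.biUnion t).card := by
      simp [Finset.sum_const, mul_comm]
    omega
  obtain ⟨f, hfinj, hfmem⟩ := (Finset.all_card_le_biUnion_card_iff_exists_injective t).mp hall
  have hfval : ∀ x : Fin N, f x < N ∧ 1 ≤ Th (x : ℕ) (f x) := by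
    intro x
    have := hfmem x
    rw [htdef] at this
    exact ⟨Finset.mem_range.mp (Finset.mem_filter.mp this).1, (Finset.mem_filter.mp this).2⟩
  set F : ℕ → ℕ := fun i => if h : i < N then f ⟨i, h⟩ else 0 with hFdef
  have hFlt : ∀ i < N, F i < N := by
    intro i hi; simp only [hFdef, dif_pos hi]; exact (hfval ⟨i, hi⟩).1
  have hFTh : ∀ i < N, 1 ≤ Th i (F i) := by
    intro i hi; simp only [hFdef, dif_pos hi]; exact (hfval ⟨i, hi⟩).2
  have hFinj : ∀ i < N, ∀ i' < N, F i = F i' → i = i' := by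
    intro i hi i' hi' heq
    simp only [hFdef, dif_pos hi, dif_pos hi'] at heq
    exact congrArg Fin.val (hfinj heq)
  have hFsurj : ∀ j < N, ∃ i, i < N ∧ F i = j := by
    intro j hj
    have himg : Finset.image (fun x : Fin N => f x) Finset.univ = Finset.range N := by
      apply Finset.eq_of_subset_of_card_le
      · intro y hy
        obtain ⟨x, _, hx⟩ := Finset.mem_image.mp hy
        exact Finset.mem_range.mpr (hx ▸ (hfval x).1)
      · rw [Finset.card_image_of_injective _ hfinj, Finset.card_univ, Fintype.card_fin,
          Finset.card_range]
    have : j ∈ Finset.image (fun x : Fin N => f x) Finset.univ := by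
      rw [himg]; exact Finset.mem_range.mpr hj
    obtain ⟨x, _, hx⟩ := Finset.mem_image.mp this
    exact ⟨(x : ℕ), x.isLt, by simp [hFdef, x.isLt, hx]⟩
  -- the matching matrix
  set Sg : ℕ → ℕ → ℕ := fun i j => if i < N ∧ F i = j then 1 else 0 with hSg
  have hSgTh : ∀ i j, Sg i j ≤ Th i j := by
    intro i j
    simp only [hSg]
    split_ifs with h
    · exact h.2 ▸ hFTh i h.1
    · exact Nat.zero_le _
  have hSgrowgen : ∀ i < N, ∀ M : ℕ, ∑ j ∈ Finset.range M, Sg i j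
      = if F i < M then 1 else 0 := by
    intro i hi M
    have h1 : ∀ j ∈ Finset.range M, Sg i j = if j = F i then 1 else 0 := by
      intro j _
      simp only [hSg]
      by_cases h : j = F i
      · simp [h, hi]
      · simp [h, Ne.symm h]
    rw [Finset.sum_congr rfl h1, Finset.sum_ite_eq' (Finset.range M) (F i) (fun _ => 1)]
    simp [Finset.mem_range]
  have hSgrow : ∀ i < N, ∑ j ∈ Finset.range N, Sg i j = 1 := by
    intro i hi
    rw [hSgrowgen i hi N, if_pos (hFlt i hi)]
  have hSgcolgen : ∀ j < N, ∀ M ≤ N, ∑ i ∈ Finset.range M, Sg i j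
      = if ∃ i, i < M ∧ F i = j ∧ i < N then 1 else 0 := by
    intro j hj M hM
    simp only [hSg, Finset.sum_boole]
    split_ifs with hex
    · obtain ⟨i0, hi0M, hi0, hi0N⟩ := hex
      rw [show ((Finset.range M).filter fun i => i < N ∧ F i = j) = {i0} from ?_]
      · simp
      · ext i
        simp only [Finset.mem_filter, Finset.mem_range, Finset.mem_singleton]
        constructor
        · rintro ⟨hiM, hiN, hij⟩
          exact hFinj i hiN i0 hi0N (hij.trans hi0.symm)
        · rintro rfl
          exact ⟨hi0M, hi0N, hi0⟩
    · rw [show ((Finset.range M).filter fun i => i < N ∧ F i = j) = ∅ from ?_]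
      · simp
      · ext i
        simp only [Finset.mem_filter, Finset.mem_range, Finset.notMem_empty, iff_false]
        rintro ⟨hiM, hiN, hij⟩
        exact hex ⟨i, hiM, hij, hiN⟩
  have hSgcol : ∀ j < N, ∑ i ∈ Finset.range N, Sg i j = 1 := by
    intro j hj
    rw [hSgcolgen j hj N le_rfl, if_pos ?_]
    obtain ⟨i, hiN, hij⟩ := hFsurj j hj
    exact ⟨i, hiN, hij, hiN⟩
  -- key counting: exactly k matches inside the block
  have hkey : ((Finset.range m).filter fun i => F i < n).card = k := by
    have himg2 : ((Finset.range m).filter fun i => ¬ F i < n).image F = Finset.Ico n N := by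
      ext j
      simp only [Finset.mem_image, Finset.mem_filter, Finset.mem_range, Finset.mem_Ico]
      constructor
      · rintro ⟨i, ⟨him, hnot⟩, rfl⟩
        exact ⟨Nat.not_lt.mp hnot, hFlt i (lt_of_lt_of_le him hmN)⟩
      · rintro ⟨hnj, hjN⟩
        obtain ⟨i0, hi0N, hi0⟩ := hFsurj j hjN
        have hTh1 : 1 ≤ Th i0 j := hi0 ▸ hFTh i0 hi0N
        have hi0m : i0 < m := by
          by_contra hcon
          have : Th i0 j = 0 := by
            simp [hTh, Nat.not_lt.mpr (Nat.not_lt.mp hcon), Nat.not_lt.mpr hnj]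
          omega
        exact ⟨i0, ⟨hi0m, by omega⟩, hi0⟩
    have hinj2 : Set.InjOn F ((Finset.range m).filter fun i => ¬ F i < n) := by
      intro i hi i' hi' heq
      have him := Finset.mem_range.mp (Finset.mem_filter.mp hi).1
      have him' := Finset.mem_range.mp (Finset.mem_filter.mp hi').1
      exact hFinj i (lt_of_lt_of_le him hmN) i' (lt_of_lt_of_le him' hmN) heq
    have hcard2 : ((Finset.range m).filter fun i => ¬ F i < n).card = m - k := by
      rw [← Finset.card_image_of_injOn hinj2, himg2, Nat.card_Ico]
      omega
    have := Finset.card_filter_add_card_filter_not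
      (s := Finset.range m) (p := fun i => F i < n)
    rw [Finset.card_range] at this
    omega
  have hSgblock : ∑ i ∈ Finset.range m, ∑ j ∈ Finset.range n, Sg i j = k := by
    have h1 : ∀ i ∈ Finset.range m, ∑ j ∈ Finset.range n, Sg i j
        = if F i < n then 1 else 0 := by
      intro i hi
      exact hSgrowgen i (lt_of_lt_of_le (Finset.mem_range.mp hi) hmN) n
    rw [Finset.sum_congr rfl h1, Finset.sum_boole]
    exact_mod_cast hkey
  -- define σ and τ
  set Sig : ℕ → ℕ → ℕ := fun i j => if i < m ∧ j < n then Sg i j else 0 with hSig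
  set Tau : ℕ → ℕ → ℕ := fun i j => if i < m ∧ j < n then T i j - Sg i j else 0 with hTau
  have hSigeq : ∀ i < m, ∀ j < n, Sig i j = Sg i j := by
    intro i hi j hj; simp [hSig, hi, hj]
  have hTaueq : ∀ i < m, ∀ j < n, Tau i j = T i j - Sg i j := by
    intro i hi j hj; simp [hTau, hi, hj]
  have hSgleT : ∀ i < m, ∀ j < n, Sg i j ≤ T i j := by
    intro i hi j hj
    have := hSgTh i j
    rwa [hThblock i hi j hj] at this
  have hrowtau : ∀ i < m, ∑ j ∈ Finset.range n, (T i j - Sg i j) ≤ 1 := by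
    intro i hi
    have hiN : i < N := lt_of_lt_of_le hi hmN
    have h1 : ∑ j ∈ Finset.range n, (T i j - Sg i j)
        = ∑ j ∈ Finset.range n, (Th i j - Sg i j) :=
      Finset.sum_congr rfl (fun j hj => by
        rw [hThblock i hi j (Finset.mem_range.mp hj)])
    have h2 : ∑ j ∈ Finset.range n, (Th i j - Sg i j)
        ≤ ∑ j ∈ Finset.range N, (Th i j - Sg i j) :=
      Finset.sum_le_sum_of_subset (Finset.range_subset_range.2 hnN)
    have h3 : ∑ j ∈ Finset.range N, (Th i j - Sg i j)
        = ∑ j ∈ Finset.range N, Th i j - ∑ j ∈ Finset.range N, Sg i j :=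
      Finset.sum_tsub_distrib _ (fun j _ => hSgTh i j)
    rw [h1]
    rw [h3, hThrow i hiN, hSgrow i hiN] at h2
    omega
  have hcoltau : ∀ j < n, ∑ i ∈ Finset.range m, (T i j - Sg i j) ≤ 1 := by
    intro j hj
    have hjN : j < N := lt_of_lt_of_le hj hnN
    have h1 : ∑ i ∈ Finset.range m, (T i j - Sg i j)
        = ∑ i ∈ Finset.range m, (Th i j - Sg i j) :=
      Finset.sum_congr rfl (fun i hi => by
        rw [hThblock i (Finset.mem_range.mp hi) j hj])
    have h2 : ∑ i ∈ Finset.range m, (Th i j - Sg i j)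
        ≤ ∑ i ∈ Finset.range N, (Th i j - Sg i j) :=
      Finset.sum_le_sum_of_subset (Finset.range_subset_range.2 hmN)
    have h3 : ∑ i ∈ Finset.range N, (Th i j - Sg i j)
        = ∑ i ∈ Finset.range N, Th i j - ∑ i ∈ Finset.range N, Sg i j :=
      Finset.sum_tsub_distrib _ (fun i _ => hSgTh i j)
    rw [h1]
    rw [h3, hThcol j hjN, hSgcol j hjN] at h2
    omega
  refine ⟨Sig, Tau, ⟨?_, ?_, ?_, ?_⟩, ⟨?_, ?_, ?_, ?_⟩, ?_⟩
  · intro i hi j hj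
    rw [hSigeq i hi j hj]
    simp only [hSg]
    split_ifs <;> omega
  · rw [Finset.sum_congr rfl (fun i hi => Finset.sum_congr rfl (fun j hj =>
      hSigeq i (Finset.mem_range.mp hi) j (Finset.mem_range.mp hj)))]
    exact hSgblock
  · intro i hi
    rw [Finset.sum_congr rfl (fun j hj => hSigeq i hi j (Finset.mem_range.mp hj))]
    calc ∑ j ∈ Finset.range n, Sg i j ≤ ∑ j ∈ Finset.range N, Sg i j :=
          Finset.sum_le_sum_of_subset (Finset.range_subset_range.2 hnN)
      _ = 1 := hSgrow i (lt_of_lt_of_le hi hmN)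
  · intro j hj
    rw [Finset.sum_congr rfl (fun i hi => hSigeq i (Finset.mem_range.mp hi) j hj)]
    calc ∑ i ∈ Finset.range m, Sg i j ≤ ∑ i ∈ Finset.range N, Sg i j :=
          Finset.sum_le_sum_of_subset (Finset.range_subset_range.2 hmN)
      _ = 1 := hSgcol j (lt_of_lt_of_le hj hnN)
  · intro i hi j hj
    rw [hTaueq i hi j hj]
    calc T i j - Sg i j ≤ ∑ j' ∈ Finset.range n, (T i j' - Sg i j') :=
          Finset.single_le_sum (f := fun j' => T i j' - Sg i j') (fun j' _ => Nat.zero_le _)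
            (Finset.mem_range.mpr hj)
      _ ≤ 1 := hrowtau i hi
  · rw [Finset.sum_congr rfl (fun i hi => Finset.sum_congr rfl (fun j hj =>
      hTaueq i (Finset.mem_range.mp hi) j (Finset.mem_range.mp hj)))]
    have h1 : ∀ i ∈ Finset.range m, ∑ j ∈ Finset.range n, (T i j - Sg i j)
        = ∑ j ∈ Finset.range n, T i j - ∑ j ∈ Finset.range n, Sg i j := by
      intro i hi
      exact Finset.sum_tsub_distrib _ (fun j hj =>
        hSgleT i (Finset.mem_range.mp hi) j (Finset.mem_range.mp hj))
    rw [Finset.sum_congr rfl h1, Finset.sum_tsub_distrib _ (fun i hi =>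
      Finset.sum_le_sum (fun j hj =>
        hSgleT i (Finset.mem_range.mp hi) j (Finset.mem_range.mp hj))),
      htot, hSgblock]
    omega
  · intro i hi
    rw [Finset.sum_congr rfl (fun j hj => hTaueq i hi j (Finset.mem_range.mp hj))]
    exact hrowtau i hi
  · intro j hj
    rw [Finset.sum_congr rfl (fun i hi => hTaueq i (Finset.mem_range.mp hi) j hj)]
    exact hcoltau j hj
  · intro i hi j hj
    rw [hSigeq i hi j hj, hTaueq i hi j hj]
    have h1 := hSgleT i hi j hj
    omega
end

section
/- Let Y = (y_{ij}) be a k-reduced nonnegative m×n matrix (k ≤ m ≤ n). Then there exist real numbers λ_1,…,λ_m and μ_1,…,μ_n such that y_{ij} = max(0, λ_i + μ_j) for all i,j, and such that the entry y_{ij} participates in a k-assignment achieving min_k(Y) if and only if y_{ij} = λ_i + μ_j. -/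
/-- The entry at position `(i,j)` participates in a minimum `k`-assignment of `Y`. -/
def Participates (m n k : ℕ) (Y : ℕ → ℕ → ℝ) (i j : ℕ) : Prop :=
  ∃ S, MinAssign m n k Y S ∧ (i, j) ∈ S

/-- `Y` is a `k`-reduced nonnegative matrix: every nonzero entry participates in a
minimum `k`-assignment. -/
def KReduced (m n k : ℕ) (Y : ℕ → ℕ → ℝ) : Prop :=
  (∀ i < m, ∀ j < n, 0 ≤ Y i j) ∧
  (∀ i < m, ∀ j < n, Y i j ≠ 0 → Participates m n k Y i j)

section WalkPotential

variable {V : Type*}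

def walkWeight (w : V → V → ℝ) (l : List V) : ℝ :=
  ((l.zip l.tail).map fun e => w e.1 e.2).sum

variable (w : V → V → ℝ)

@[simp] lemma walkWeight_singleton (a : V) : walkWeight w [a] = 0 := rfl

@[simp] lemma walkWeight_cons_cons (a b : V) (l : List V) :
    walkWeight w (a :: b :: l) = w a b + walkWeight w (b :: l) := by
  simp [walkWeight]

lemma walkWeight_append_cons (A : List V) (x : V) (C : List V) :
    walkWeight w (A ++ x :: C) = walkWeight w (A ++ [x]) + walkWeight w (x :: C) := by
  induction A with
  | nil => simp
  | cons a A ih =>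
    cases A with
    | nil => simp
    | cons b A => simp only [List.cons_append, walkWeight_cons_cons] at ih ⊢; rw [ih, add_assoc]

variable {E : V → V → Prop} {w}

lemma exists_shorter_walk_of_not_nodup
    (hcyc : ∀ l : List V, l.IsChain E → l.head? = l.getLast? → 0 ≤ walkWeight w l)
    {l : List V} (hl : l.IsChain E) (hnd : ¬ l.Nodup) :
    ∃ l' : List V, l'.length < l.length ∧ l'.IsChain E ∧ l'.head? = l.head? ∧
      walkWeight w l' ≤ walkWeight w l := by
  obtain ⟨a, ha⟩ : ∃ a, [a, a].Sublist l := by simpa [List.nodup_iff_sublist] using hnd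
  obtain ⟨r₁, r₂, rfl, ha₁, ha₂⟩ := List.cons_sublist_iff.mp ha
  obtain ⟨s, t, rfl⟩ := List.append_of_mem ha₁
  obtain ⟨u, v, rfl⟩ := List.append_of_mem (List.singleton_sublist.mp ha₂)
  set B := t ++ u
  have hsplit : s ++ a :: t ++ (u ++ a :: v) = s ++ a :: (B ++ a :: v) := by simp [B]
  rw [hsplit] at hl ⊢
  obtain ⟨hs, haBv, hlink⟩ := List.isChain_append.mp hl
  have hcycle : 0 ≤ walkWeight w (a :: B ++ [a]) :=
    hcyc _ (haBv.infix ⟨[], v, by simp⟩) (by rw [← List.cons_append, List.getLast?_concat]; rfl)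
  have hav : (a :: v).IsChain E := haBv.infix ⟨a :: B, [], by simp⟩
  refine ⟨s ++ a :: v, by simp, List.isChain_append.mpr ⟨hs, hav, hlink⟩, by simp, ?_⟩
  rw [walkWeight_append_cons w s a v, walkWeight_append_cons w s a (B ++ a :: v),
    ← List.cons_append, walkWeight_append_cons w (a :: B) a v]
  linarith

lemma exists_nodup_walk_le
    (hcyc : ∀ l : List V, l.IsChain E → l.head? = l.getLast? → 0 ≤ walkWeight w l)
    (l : List V) (hl : l.IsChain E) :
    ∃ l' : List V, l'.Nodup ∧ l'.IsChain E ∧ l'.head? = l.head? ∧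
      walkWeight w l' ≤ walkWeight w l := by
  induction hlen : l.length using Nat.strong_induction_on generalizing l with
  | _ N ih =>
  by_cases hnd : l.Nodup
  · exact ⟨l, hnd, hl, rfl, le_rfl⟩
  obtain ⟨l₁, hlt, hl₁, hhead, hle⟩ := exists_shorter_walk_of_not_nodup hcyc hl hnd
  obtain ⟨l₂, hnd₂, hl₂, hhead₂, hle₂⟩ := ih _ (hlen ▸ hlt) l₁ hl₁ rfl
  exact ⟨l₂, hnd₂, hl₂, hhead₂.trans hhead, hle₂.trans hle⟩

theorem exists_potential_of_forall_closed_walk_nonneg [Finite V]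
    (hcyc : ∀ l : List V, l.IsChain E → l.head? = l.getLast? → 0 ≤ walkWeight w l) :
    ∃ p : V → ℝ, ∀ a b, E a b → p a ≤ p b + w a b := by
  let Walks (a : V) := {l : List V // l.Nodup ∧ l.IsChain E ∧ l.head? = some a}
  have : ∀ a, Finite (Walks a) := fun a => by
    have := Fintype.ofFinite V
    have := (List.finite_length_le V (Fintype.card V)).to_subtype
    exact Finite.of_injective (fun l : Walks a => (⟨l.1, l.2.1.length_le_card⟩ :
      {l : List V | l.length ≤ Fintype.card V})) fun l₁ l₂ h => Subtype.ext (by simpa using h)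
  have : ∀ a, Nonempty (Walks a) := fun a => ⟨⟨[a], by simp, by simp, rfl⟩⟩
  refine ⟨fun a => ⨅ l : Walks a, walkWeight w l.1, fun a b hab => ?_⟩
  have hmin : ∀ a (l : List V), l.IsChain E → l.head? = some a →
      ⨅ l : Walks a, walkWeight w l.1 ≤ walkWeight w l := by
    intro a l hl hhead
    obtain ⟨l', hnd, hl', hhead', hle⟩ := exists_nodup_walk_le hcyc l hl
    exact (ciInf_le (Set.finite_range _).bddBelow ⟨l', hnd, hl', hhead'.trans hhead⟩).trans hle
  beta_reduce
  rw [← sub_le_iff_le_add]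
  refine le_ciInf fun ⟨l, _, hl, hhead⟩ => ?_
  obtain ⟨t, rfl⟩ : ∃ t, l = b :: t := List.head?_eq_some_iff.mp hhead
  have := hmin a (a :: b :: t) (List.IsChain.cons_cons hab hl) rfl
  rw [walkWeight_cons_cons] at this
  linarith

end WalkPotential

section BipartitePotential

lemma List.IsChain.rel_of_mem_zip_tail {V : Type*} {R : V → V → Prop} :
    ∀ {l : List V}, l.IsChain R → ∀ e ∈ l.zip l.tail, R e.1 e.2
  | [], _ => by simp
  | [_], _ => by simp
  | a :: b :: l, hl => by
    rw [List.isChain_cons_cons] at hl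
    intro e he
    simp only [List.tail_cons, List.zip_cons_cons, List.mem_cons] at he
    rcases he with rfl | he
    · exact hl.1
    · exact hl.2.rel_of_mem_zip_tail e he

lemma List.map_fst_zip_tail_append_getLast? {V : Type*} :
    ∀ l : List V, (l.zip l.tail).map Prod.fst ++ l.getLast?.toList = l
  | [] => rfl
  | [_] => rfl
  | a :: b :: l => by
    have := List.map_fst_zip_tail_append_getLast? (b :: l)
    simp_all

lemma List.perm_map_fst_zip_tail {V : Type*} {l : List V} (hl : l.head? = l.getLast?) :
    ((l.zip l.tail).map Prod.fst).Perm ((l.zip l.tail).map Prod.snd) := by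
  rcases l with _ | ⟨a, t⟩
  · simp
  have hfst := List.map_fst_zip_tail_append_getLast? (a :: t)
  rw [← hl] at hfst
  rw [List.map_snd_zip (by simp), List.tail_cons]
  simp only [List.head?_cons, Option.toList_some, List.tail_cons] at hfst
  have := List.perm_append_singleton a ((List.zip (a :: t) t).map Prod.fst)
  rw [hfst] at this
  exact (List.perm_cons a).mp this.symm

lemma List.sum_map_filterMap {γ δ : Type*} (f : γ → Option δ) (g : δ → ℝ) (l : List γ) :
    ((l.filterMap f).map g).sum = (l.map fun x => ((f x).map g).getD 0).sum := by
  induction l with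
  | nil => rfl
  | cons x l ih => cases h : f x <;> simp [h, ih]

variable {α β : Type*}

def bipartiteAdj (P : α → β → Prop) : α ⊕ β → α ⊕ β → Prop
  | .inl _, .inr _ => True
  | .inr j, .inl i => P i j
  | _, _ => False

def bipartiteWeight (c : α → β → ℝ) : α ⊕ β → α ⊕ β → ℝ
  | .inl i, .inr j => c i j
  | .inr j, .inl i => -c i j
  | _, _ => 0

def forwardEdge : (α ⊕ β) × (α ⊕ β) → Option (α × β)
  | (.inl i, .inr j) => some (i, j)
  | _ => none

def backwardEdge : (α ⊕ β) × (α ⊕ β) → Option (α × β)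
  | (.inr j, .inl i) => some (i, j)
  | _ => none

def forwardEdges (l : List (α ⊕ β)) : List (α × β) := (l.zip l.tail).filterMap forwardEdge

def backwardEdges (l : List (α ⊕ β)) : List (α × β) := (l.zip l.tail).filterMap backwardEdge

lemma walkWeight_bipartiteWeight (c : α → β → ℝ) (l : List (α ⊕ β)) :
    walkWeight (bipartiteWeight c) l + ((backwardEdges l).map fun p => c p.1 p.2).sum =
      ((forwardEdges l).map fun p => c p.1 p.2).sum := by
  have hw (e : (α ⊕ β) × (α ⊕ β)) : bipartiteWeight c e.1 e.2 +
      ((backwardEdge e).map fun p => c p.1 p.2).getD 0 =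
        ((forwardEdge e).map fun p => c p.1 p.2).getD 0 := by
    rcases e with ⟨_ | _, _ | _⟩ <;> simp [forwardEdge, backwardEdge, bipartiteWeight]
  rw [backwardEdges, forwardEdges, List.sum_map_filterMap, List.sum_map_filterMap, walkWeight,
    ← List.sum_map_add]
  exact congrArg List.sum (List.map_congr_left fun e _ => hw e)

variable {P : α → β → Prop} {l : List (α ⊕ β)}

lemma List.IsChain.rel_of_mem_backwardEdges (hl : l.IsChain (bipartiteAdj P)) :
    ∀ p ∈ backwardEdges l, P p.1 p.2 := by
  simp only [backwardEdges, List.mem_filterMap]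
  rintro p ⟨⟨_ | i, _ | j⟩, he, hp⟩ <;> simp only [backwardEdge, reduceCtorEq] at hp
  cases hp
  exact hl.rel_of_mem_zip_tail _ he

lemma List.IsChain.perm_map_forwardEdges (hl : l.IsChain (bipartiteAdj P))
    (hclosed : l.head? = l.getLast?) :
    ((forwardEdges l).map Prod.fst).Perm ((backwardEdges l).map Prod.fst) ∧
      ((forwardEdges l).map Prod.snd).Perm ((backwardEdges l).map Prod.snd) := by
  have hperm := List.perm_map_fst_zip_tail hclosed
  have hends : ∀ e ∈ l.zip l.tail, ((forwardEdge e).map Prod.fst) = e.1.getLeft? ∧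
      ((backwardEdge e).map Prod.fst) = e.2.getLeft? ∧
      ((forwardEdge e).map Prod.snd) = e.2.getRight? ∧
      ((backwardEdge e).map Prod.snd) = e.1.getRight? := by
    rintro ⟨_ | _, _ | _⟩ he <;> simp only [forwardEdge, backwardEdge] <;> simp <;>
      exact hl.rel_of_mem_zip_tail _ he
  simp only [forwardEdges, backwardEdges, List.map_filterMap]
  constructor
  · rw [List.filterMap_congr fun e he => (hends e he).1,
      List.filterMap_congr fun e he => (hends e he).2.1]
    simpa only [List.filterMap_map, Function.comp_def] using hperm.filterMap Sum.getLeft?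
  · rw [List.filterMap_congr fun e he => (hends e he).2.2.1,
      List.filterMap_congr fun e he => (hends e he).2.2.2]
    simpa only [List.filterMap_map, Function.comp_def] using hperm.symm.filterMap Sum.getRight?

theorem exists_bipartite_potential [Finite α] [Finite β] (c : α → β → ℝ) (P : α → β → Prop)
    (h : ∀ F B : Multiset (α × β), (∀ p ∈ B, P p.1 p.2) → F.map Prod.fst = B.map Prod.fst →
      F.map Prod.snd = B.map Prod.snd →
      (B.map fun p => c p.1 p.2).sum ≤ (F.map fun p => c p.1 p.2).sum) :
    ∃ (lam : α → ℝ) (mu : β → ℝ), ∀ i j, lam i + mu j ≤ c i j ∧ (P i j → lam i + mu j = c i j) := by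
  obtain ⟨p, hp⟩ := exists_potential_of_forall_closed_walk_nonneg (E := bipartiteAdj P)
    (w := bipartiteWeight c) fun l hl hclosed => by
      obtain ⟨hrow, hcol⟩ := hl.perm_map_forwardEdges hclosed
      have := h (forwardEdges l) (backwardEdges l) hl.rel_of_mem_backwardEdges
        (by simpa only [Multiset.map_coe, Multiset.coe_eq_coe] using hrow)
        (by simpa only [Multiset.map_coe, Multiset.coe_eq_coe] using hcol)
      simp only [Multiset.map_coe, Multiset.sum_coe] at this
      linarith [walkWeight_bipartiteWeight c l]
  refine ⟨fun i => p (.inl i), fun j => -p (.inr j), fun i j => ⟨?_, fun hP => ?_⟩⟩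
  · have := hp (.inl i) (.inr j) trivial
    simp only [bipartiteWeight] at this
    linarith
  · have h₁ := hp (.inl i) (.inr j) trivial
    have h₂ := hp (.inr j) (.inl i) hP
    simp only [bipartiteWeight] at h₁ h₂
    linarith

end BipartitePotential

section RegularMatching

variable {α β : Type*}

lemma Multiset.exists_map_fst_map_snd_eq (A : Multiset α) (B : Multiset β)
    (h : card A = card B) : ∃ Z : Multiset (α × β), Z.map Prod.fst = A ∧ Z.map Prod.snd = B := by
  induction A using Quotient.inductionOn
  induction B using Quotient.inductionOn
  rename_i lA lB
  have h : lA.length = lB.length := h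
  exact ⟨lA.zip lB, by simp [List.map_fst_zip h.le], by simp [List.map_snd_zip h.ge]⟩

lemma Multiset.card_filter_of_map_eq_nsmul {γ : Type*} [DecidableEq α] {G : Multiset γ}
    {f : γ → α} {A : Finset α} {r : ℕ} (hA : G.map f = r • A.val) (s : Finset α) :
    card (G.filter fun e => f e ∈ s) = r * (A.filter (· ∈ s)).card := by
  rw [← Multiset.card_map f, show G.filter (fun e => f e ∈ s) = G.filter ((· ∈ s) ∘ f) from rfl,
    ← Multiset.filter_map, hA, Multiset.filter_nsmul,
    Multiset.card_nsmul, ← Finset.filter_val, Finset.card_val]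

lemma Multiset.card_filter_lt_of_map_eq_range {γ : Type*} {M : Multiset γ} {f : γ → ℕ} {a b : ℕ}
    (h : M.map f = Multiset.range (a + b)) : card (M.filter fun p => f p < a) = a := by
  rw [← Multiset.card_map f, show M.filter (fun p => f p < a) = M.filter ((· < a) ∘ f) from rfl,
    ← Multiset.filter_map, h, ← Finset.range_val, ← Finset.filter_val, Finset.card_val]
  convert Finset.card_range a using 2
  ext; simp; omega

lemma Multiset.bind_le_card_nsmul {s : Multiset α} {f : α → Multiset β}
    {t : Multiset β} (h : ∀ a ∈ s, f a ≤ t) : s.bind f ≤ Multiset.card s • t := by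
  simpa [Multiset.bind, Multiset.join] using
    Multiset.sum_le_card_nsmul (s.map f) t (by simpa using h)

lemma Multiset.card_le_card_neighbors_of_regular [DecidableEq α] [DecidableEq β]
    {G : Multiset (α × β)} {A : Finset α} {B : Finset β} {r : ℕ} (hr : 0 < r)
    (hA : G.map Prod.fst = r • A.val) (hB : G.map Prod.snd = r • B.val) {s : Finset α}
    (hs : s ⊆ A) : s.card ≤ ((G.filter (·.1 ∈ s)).map Prod.snd).toFinset.card := by
  set N := ((G.filter (·.1 ∈ s)).map Prod.snd).toFinset
  have hle : G.filter (·.1 ∈ s) ≤ G.filter (·.2 ∈ N) :=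
    calc G.filter (·.1 ∈ s) = G.filter fun e => e.1 ∈ s ∧ e.2 ∈ N :=
          Multiset.filter_congr fun e he => ⟨fun h => ⟨h, Multiset.mem_toFinset.mpr
            (Multiset.mem_map_of_mem _ (Multiset.mem_filter.mpr ⟨he, h⟩))⟩, And.left⟩
      _ ≤ _ := Multiset.monotone_filter_right _ fun _ h => h.2
  have hs : A.filter (· ∈ s) = s := Finset.filter_mem_eq_inter.trans (Finset.inter_eq_right.mpr hs)
  have hN : (B.filter (· ∈ N)).card ≤ N.card :=
    Finset.card_le_card fun b hb => (Finset.mem_filter.mp hb).2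
  refine Nat.le_of_mul_le_mul_left ?_ hr
  calc r * s.card = Multiset.card (G.filter (·.1 ∈ s)) := by
        rw [Multiset.card_filter_of_map_eq_nsmul hA, hs]
    _ ≤ Multiset.card (G.filter (·.2 ∈ N)) := Multiset.card_le_card hle
    _ = r * (B.filter (· ∈ N)).card := Multiset.card_filter_of_map_eq_nsmul hB N
    _ ≤ r * N.card := Nat.mul_le_mul_left r hN

theorem Multiset.exists_perfect_matching_of_regular [DecidableEq α] [DecidableEq β]
    {G : Multiset (α × β)} {A : Finset α} {B : Finset β} {r : ℕ} (hr : 0 < r)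
    (hA : G.map Prod.fst = r • A.val) (hB : G.map Prod.snd = r • B.val) :
    ∃ M ≤ G, M.map Prod.fst = A.val ∧ M.map Prod.snd = B.val := by
  let t : A → Finset β := fun a => ((G.filter fun e => e.1 = (a : α)).map Prod.snd).toFinset
  have hmem_t {a : A} {b : β} : b ∈ t a ↔ ((a : α), b) ∈ G := by
    simp [t, Prod.exists]
  have hall (s : Finset A) : s.card ≤ (s.biUnion t).card := by
    let s' := s.map (Function.Embedding.subtype _)
    refine (s.card_map _).symm.trans_le <| (Multiset.card_le_card_neighbors_of_regular hr hA hB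
      (s := s') fun a ha => ?_).trans (Finset.card_le_card fun b hb => ?_)
    · obtain ⟨x, -, rfl⟩ := Finset.mem_map.mp ha
      exact x.2
    · obtain ⟨e, he, rfl⟩ := Multiset.mem_map.mp (Multiset.mem_toFinset.mp hb)
      obtain ⟨heG, he₁⟩ := Multiset.mem_filter.mp he
      obtain ⟨a, ha, hae⟩ := Finset.mem_map.mp he₁
      refine Finset.mem_biUnion.mpr ⟨a, ha, hmem_t.mpr ?_⟩
      rw [show (a : α) = e.1 from hae]
      exact heG
  obtain ⟨f, hf, hft⟩ := (Finset.all_card_le_biUnion_card_iff_exists_injective t).mp hall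
  have hAB : A.card = B.card := by
    have := (Multiset.card_map Prod.fst G).trans (Multiset.card_map Prod.snd G).symm
    simp only [hA, hB, Multiset.card_nsmul, Finset.card_val] at this
    exact Nat.eq_of_mul_eq_mul_left hr this
  have himage : A.attach.map ⟨f, hf⟩ = B :=
    Finset.eq_of_subset_of_card_le (fun b hb => by
      obtain ⟨a, -, rfl⟩ := Finset.mem_map.mp hb
      exact Multiset.mem_of_mem_nsmul (hB ▸ Multiset.mem_map_of_mem Prod.snd (hmem_t.mp (hft a))))
      (by simp [hAB])
  refine ⟨A.attach.val.map fun a : A => (a.1, f a), ?_, ?_, ?_⟩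
  · have hnodup : (A.attach.val.map fun a : A => (a.1, f a)).Nodup :=
      A.attach.nodup.map fun a b h => Subtype.ext (congrArg Prod.fst h)
    rw [Multiset.le_iff_subset hnodup]
    intro e he
    obtain ⟨a, -, rfl⟩ := Multiset.mem_map.mp he
    exact hmem_t.mp (hft a)
  · simp only [Multiset.map_map, Function.comp_def, Finset.attach_val]
    exact Multiset.attach_map_val _
  · rw [← himage, Finset.map_val]
    simp

end RegularMatching

section Assignment

variable {m n k : ℕ}

def entrySum (X : ℕ → ℕ → ℝ) (s : Multiset (ℕ × ℕ)) : ℝ := (s.map fun p => X p.1 p.2).sum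

@[simp] lemma entrySum_zero (X : ℕ → ℕ → ℝ) : entrySum X 0 = 0 := rfl

@[simp] lemma entrySum_add (X : ℕ → ℕ → ℝ) (s t : Multiset (ℕ × ℕ)) :
    entrySum X (s + t) = entrySum X s + entrySum X t := by
  simp [entrySum]

lemma aval_eq_entrySum (X : ℕ → ℕ → ℝ) (S : Finset (ℕ × ℕ)) : aval X S = entrySum X S.val := rfl

lemma IsAssign.map_fst_le {S : Finset (ℕ × ℕ)} (hS : IsAssign m n k S) :
    S.val.map Prod.fst ≤ Multiset.range m := by
  refine (Multiset.le_iff_subset (S.nodup.map_on fun p hp q hq h => ?_)).mpr fun a ha => ?_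
  · by_contra hpq
    exact (hS.2.2 p hp q hq hpq).1 h
  · obtain ⟨p, hp, rfl⟩ := Multiset.mem_map.mp ha
    exact Multiset.mem_range.mpr (hS.2.1 p hp).1

lemma IsAssign.map_snd_le {S : Finset (ℕ × ℕ)} (hS : IsAssign m n k S) :
    S.val.map Prod.snd ≤ Multiset.range n := by
  refine (Multiset.le_iff_subset (S.nodup.map_on fun p hp q hq h => ?_)).mpr fun a ha => ?_
  · by_contra hpq
    exact (hS.2.2 p hp q hq hpq).2 h
  · obtain ⟨p, hp, rfl⟩ := Multiset.mem_map.mp ha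
    exact Multiset.mem_range.mpr (hS.2.1 p hp).2

lemma exists_regular_extension (hkm : k ≤ m) (hkn : k ≤ n) {r : ℕ} {x : Multiset (ℕ × ℕ)}
    (hrow : x.map Prod.fst ≤ r • Multiset.range m) (hcol : x.map Prod.snd ≤ r • Multiset.range n)
    (hcard : Multiset.card x = k * r) :
    ∃ G : Multiset (ℕ × ℕ), G.map Prod.fst = r • Multiset.range (m + n - k) ∧
      G.map Prod.snd = r • Multiset.range (m + n - k) ∧ (∀ p ∈ G, p.1 < m ∨ p.2 < n) ∧
      G.filter (fun p => p.1 < m ∧ p.2 < n) = x := by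
  let dummyRows := (Multiset.range (n - k)).map (m + ·)
  let dummyCols := (Multiset.range (m - k)).map (n + ·)
  obtain ⟨Z₁, hZ₁r, hZ₁c⟩ := Multiset.exists_map_fst_map_snd_eq
    (r • Multiset.range m - x.map Prod.fst) (r • dummyCols) (by
      rw [Multiset.card_sub hrow]
      simp only [Multiset.card_nsmul, Multiset.card_range, Multiset.card_map, hcard, dummyCols]
      rw [Nat.mul_sub, mul_comm k])
  obtain ⟨Z₂, hZ₂r, hZ₂c⟩ := Multiset.exists_map_fst_map_snd_eq
    (r • dummyRows) (r • Multiset.range n - x.map Prod.snd) (by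
      rw [Multiset.card_sub hcol]
      simp only [Multiset.card_nsmul, Multiset.card_range, Multiset.card_map, hcard, dummyRows]
      rw [Nat.mul_sub, mul_comm k])
  have hmem {p : ℕ × ℕ} {s : Multiset (ℕ × ℕ)} {f : ℕ × ℕ → ℕ} {t : Multiset ℕ}
      (hs : s.map f = t) (hp : p ∈ s) : f p ∈ t := hs ▸ Multiset.mem_map_of_mem f hp
  have hx (p) (hp : p ∈ x) : p.1 < m ∧ p.2 < n :=
    ⟨Multiset.mem_range.mp (Multiset.mem_of_mem_nsmul (Multiset.mem_of_le hrow (hmem rfl hp))),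
      Multiset.mem_range.mp (Multiset.mem_of_mem_nsmul (Multiset.mem_of_le hcol (hmem rfl hp)))⟩
  have hZ₁ (p) (hp : p ∈ Z₁) : p.1 < m ∧ n ≤ p.2 := by
    have h₁ := Multiset.mem_of_mem_nsmul (Multiset.mem_of_le tsub_le_self (hmem hZ₁r hp))
    obtain ⟨i, -, hi⟩ := Multiset.mem_map.mp (Multiset.mem_of_mem_nsmul (hmem hZ₁c hp))
    exact ⟨Multiset.mem_range.mp h₁, by omega⟩
  have hZ₂ (p) (hp : p ∈ Z₂) : m ≤ p.1 ∧ p.2 < n := by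
    have h₂ := Multiset.mem_of_mem_nsmul (Multiset.mem_of_le tsub_le_self (hmem hZ₂c hp))
    obtain ⟨i, -, hi⟩ := Multiset.mem_map.mp (Multiset.mem_of_mem_nsmul (hmem hZ₂r hp))
    exact ⟨by omega, Multiset.mem_range.mp h₂⟩
  refine ⟨x + Z₁ + Z₂, ?_, ?_, ?_, ?_⟩
  · rw [show m + n - k = m + (n - k) by omega, Multiset.range_add]
    simp only [Multiset.map_add, hZ₁r, hZ₂r, add_tsub_cancel_of_le hrow, smul_add, dummyRows]
  · rw [show m + n - k = n + (m - k) by omega, Multiset.range_add]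
    simp only [Multiset.map_add, hZ₁c, hZ₂c, smul_add, dummyCols]
    rw [add_right_comm, add_tsub_cancel_of_le hcol]
  · simp only [Multiset.mem_add]
    rintro p ((hp | hp) | hp)
    exacts [Or.inl (hx p hp).1, Or.inl (hZ₁ p hp).1, Or.inr (hZ₂ p hp).2]
  · rw [Multiset.filter_add, Multiset.filter_add, Multiset.filter_eq_self.mpr hx,
      Multiset.filter_eq_nil.mpr fun p hp h => by have := hZ₁ p hp; omega,
      Multiset.filter_eq_nil.mpr fun p hp h => by have := hZ₂ p hp; omega, add_zero, add_zero]

lemma exists_isAssign_eq_filter (hkm : k ≤ m) (hkn : k ≤ n) {M : Multiset (ℕ × ℕ)}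
    (hrow : M.map Prod.fst = Multiset.range (m + n - k))
    (hcol : M.map Prod.snd = Multiset.range (m + n - k)) (hM : ∀ p ∈ M, p.1 < m ∨ p.2 < n) :
    ∃ S : Finset (ℕ × ℕ), S.val = M.filter (fun p => p.1 < m ∧ p.2 < n) ∧ IsAssign m n k S := by
  have hnd : M.Nodup := .of_map Prod.fst (hrow ▸ Multiset.nodup_range _)
  have hrows : Multiset.card (M.filter fun p => p.1 < m) = m :=
    Multiset.card_filter_lt_of_map_eq_range (b := n - k) (by rw [hrow]; congr 1; omega)
  have hdummy : Multiset.card (M.filter fun p => ¬ p.2 < n) = m - k := by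
    have := Multiset.card_filter_lt_of_map_eq_range (a := n) (b := m - k) (f := Prod.snd) (M := M)
      (by rw [hcol]; congr 1; omega)
    have htot := congrArg Multiset.card (Multiset.filter_add_not (fun p : ℕ × ℕ => p.2 < n) M)
    rw [Multiset.card_add, ← Multiset.card_map Prod.fst M, hrow, Multiset.card_range] at htot
    omega
  have hsplit : M.filter (fun p => p.1 < m) =
      M.filter (fun p => p.1 < m ∧ p.2 < n) + M.filter (fun p => ¬ p.2 < n) := by
    rw [← Multiset.filter_add_not (fun p : ℕ × ℕ => p.2 < n) (M.filter _),
      Multiset.filter_filter, Multiset.filter_filter]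
    congr 1
    · exact Multiset.filter_congr fun p _ => and_comm
    · exact Multiset.filter_congr fun p hp => by have := hM p hp; constructor <;> intro h <;>
        simp_all
  refine ⟨⟨_, hnd.filter _⟩, rfl, ?_, fun p hp => (Multiset.mem_filter.mp hp).2,
    fun p hp q hq hpq => ⟨fun h => hpq ?_, fun h => hpq ?_⟩⟩
  · have := congrArg Multiset.card hsplit
    rw [Multiset.card_add, hrows, hdummy] at this
    change Multiset.card (M.filter _) = k
    omega
  · exact Multiset.inj_on_of_nodup_map (hrow ▸ Multiset.nodup_range _) p
      (Multiset.mem_of_mem_filter hp) q (Multiset.mem_of_mem_filter hq) h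
  · exact Multiset.inj_on_of_nodup_map (hcol ▸ Multiset.nodup_range _) p
      (Multiset.mem_of_mem_filter hp) q (Multiset.mem_of_mem_filter hq) h

lemma MinAssign.mul_le_entrySum_of_regular (hkm : k ≤ m) (hkn : k ≤ n) {X : ℕ → ℕ → ℝ}
    {S₀ : Finset (ℕ × ℕ)} (hS₀ : MinAssign m n k X S₀) (r : ℕ) {G : Multiset (ℕ × ℕ)}
    (hrow : G.map Prod.fst = r • Multiset.range (m + n - k))
    (hcol : G.map Prod.snd = r • Multiset.range (m + n - k)) (hG : ∀ p ∈ G, p.1 < m ∨ p.2 < n) :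
    r * aval X S₀ ≤ entrySum X (G.filter fun p => p.1 < m ∧ p.2 < n) := by
  induction r generalizing G with
  | zero =>
    rw [zero_smul, Multiset.map_eq_zero] at hrow
    simp [hrow]
  | succ r ih =>
    obtain ⟨M, hMG, hMrow, hMcol⟩ := Multiset.exists_perfect_matching_of_regular (r.succ_pos)
      (A := Finset.range (m + n - k)) (B := Finset.range (m + n - k)) hrow hcol
    obtain ⟨S, hSM, hS⟩ := exists_isAssign_eq_filter hkm hkn hMrow hMcol
      fun p hp => hG p (Multiset.mem_of_le hMG hp)
    have hsplit := (add_tsub_cancel_of_le hMG).symm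
    have hrest {f : ℕ × ℕ → ℕ} (hf : G.map f = (r + 1) • Multiset.range (m + n - k))
        (hMf : M.map f = Multiset.range (m + n - k)) :
        (G - M).map f = r • Multiset.range (m + n - k) := by
      rw [hsplit, Multiset.map_add, hMf, succ_nsmul'] at hf
      exact add_left_cancel hf
    have := ih (hrest hrow hMrow) (hrest hcol hMcol)
      fun p hp => hG p (Multiset.mem_of_le tsub_le_self hp)
    rw [hsplit, Multiset.filter_add, entrySum_add, ← hSM, ← aval_eq_entrySum]
    have := hS₀.2 S hS
    push_cast
    linarith

lemma MinAssign.mul_le_entrySum (hkm : k ≤ m) (hkn : k ≤ n) {X : ℕ → ℕ → ℝ}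
    {S₀ : Finset (ℕ × ℕ)} (hS₀ : MinAssign m n k X S₀) {r : ℕ} {x : Multiset (ℕ × ℕ)}
    (hrow : x.map Prod.fst ≤ r • Multiset.range m) (hcol : x.map Prod.snd ≤ r • Multiset.range n)
    (hcard : Multiset.card x = k * r) : r * aval X S₀ ≤ entrySum X x := by
  obtain ⟨G, hGrow, hGcol, hG, rfl⟩ := exists_regular_extension hkm hkn hrow hcol hcard
  exact hS₀.mul_le_entrySum_of_regular hkm hkn r hGrow hGcol hG

lemma card_bind_of_isAssign {ι : Type*} {B : Multiset ι} {S : ι → Finset (ℕ × ℕ)}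
    (hS : ∀ b ∈ B, IsAssign m n k (S b)) :
    Multiset.card (B.bind fun b => (S b).val) = k * Multiset.card B := by
  rw [Multiset.card_bind, Multiset.map_congr (f := Multiset.card ∘ fun b => (S b).val)
      (g := fun _ => k) rfl fun b hb => (hS b hb).1,
    Multiset.map_const', Multiset.sum_replicate, smul_eq_mul, mul_comm]

lemma entrySum_bind_of_minAssign {ι : Type*} {X : ℕ → ℕ → ℝ} {B : Multiset ι}
    {S : ι → Finset (ℕ × ℕ)} {S₀ : Finset (ℕ × ℕ)} (hS₀ : MinAssign m n k X S₀)
    (hS : ∀ b ∈ B, MinAssign m n k X (S b)) :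
    entrySum X (B.bind fun b => (S b).val) = Multiset.card B * aval X S₀ := by
  rw [entrySum, Multiset.map_bind, Multiset.sum_bind]
  change (B.map fun b => aval X (S b)).sum = _
  rw [Multiset.map_congr (g := fun _ => aval X S₀) rfl fun b hb =>
      le_antisymm ((hS b hb).2 _ hS₀.1) (hS₀.2 _ (hS b hb).1),
    Multiset.map_const', Multiset.sum_replicate, nsmul_eq_mul]

lemma entrySum_le_of_balanced (hkm : k ≤ m) (hkn : k ≤ n) {X : ℕ → ℕ → ℝ}
    {F B : Multiset (ℕ × ℕ)} (hB : ∀ p ∈ B, Participates m n k X p.1 p.2)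
    (hrow : F.map Prod.fst = B.map Prod.fst) (hcol : F.map Prod.snd = B.map Prod.snd) :
    entrySum X B ≤ entrySum X F := by
  rcases B.empty_or_exists_mem with rfl | ⟨b₀, hb₀⟩
  · rw [Multiset.map_zero, Multiset.map_eq_zero] at hrow
    simp [hrow]
  choose! S hS using hB
  -- `x` is the sum of the minimum assignments `S b`, each with `b` exchanged for an entry of `F`
  obtain ⟨x, hx⟩ : ∃ x, x + B = B.bind (fun b => (S b).val) + F := by
    refine ⟨B.bind (fun b => ((S b).erase b).val) + F, ?_⟩
    have : B.bind (fun b => (S b).val) = B + B.bind (fun b => ((S b).erase b).val) := by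
      calc B.bind (fun b => (S b).val) = B.bind (fun b => id b ::ₘ ((S b).erase b).val) :=
            Multiset.bind_congr fun b hb => by
              rw [Finset.erase_val, id, Multiset.cons_erase (hS b hb).2]
        _ = _ := by rw [Multiset.bind_cons, Multiset.map_id]
    rw [this]
    abel
  have hmap {g : ℕ × ℕ → ℕ} (hg : F.map g = B.map g) :
      x.map g = B.bind fun b => (S b).val.map g := by
    have := congrArg (Multiset.map g) hx
    rw [Multiset.map_add, Multiset.map_add, hg, Multiset.map_bind] at this
    exact add_right_cancel this
  have hle := (hS b₀ hb₀).1.mul_le_entrySum hkm hkn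
    (hmap hrow ▸ Multiset.bind_le_card_nsmul fun b hb => (hS b hb).1.1.map_fst_le)
    (hmap hcol ▸ Multiset.bind_le_card_nsmul fun b hb => (hS b hb).1.1.map_snd_le)
    (by rw [← Multiset.card_map Prod.fst, hmap hrow, ← Multiset.map_bind, Multiset.card_map,
      card_bind_of_isAssign fun b hb => (hS b hb).1.1])
  have := congrArg (entrySum X) hx
  rw [entrySum_add, entrySum_add,
    entrySum_bind_of_minAssign (hS b₀ hb₀).1 fun b hb => (hS b hb).1] at this
  linarith

theorem exists_dual_potentials (hkm : k ≤ m) (hkn : k ≤ n) (X : ℕ → ℕ → ℝ) :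
    ∃ lam mu : ℕ → ℝ, ∀ i < m, ∀ j < n,
      lam i + mu j ≤ X i j ∧ (Participates m n k X i j → lam i + mu j = X i j) := by
  let toPos : Fin m × Fin n → ℕ × ℕ := fun p => (p.1, p.2)
  obtain ⟨lam, mu, h⟩ := exists_bipartite_potential (fun (i : Fin m) (j : Fin n) => X i j)
    (fun i j => Participates m n k X i j) fun F B hB hrow hcol => by
      have := entrySum_le_of_balanced (X := X) (F := F.map toPos) (B := B.map toPos) hkm hkn
        (fun p hp => by obtain ⟨q, hq, rfl⟩ := Multiset.mem_map.mp hp; exact hB q hq)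
        (by
          have := congrArg (Multiset.map Fin.val) hrow
          rwa [Multiset.map_map, Multiset.map_map] at this ⊢)
        (by
          have := congrArg (Multiset.map Fin.val) hcol
          rwa [Multiset.map_map, Multiset.map_map] at this ⊢)
      simpa [entrySum, toPos, Function.comp_def] using this
  refine ⟨fun i => if hi : i < m then lam ⟨i, hi⟩ else 0,
    fun j => if hj : j < n then mu ⟨j, hj⟩ else 0, fun i hi j hj => ?_⟩
  simpa [hi, hj] using h ⟨i, hi⟩ ⟨j, hj⟩

end Assignment

section Perturbation

lemma Finset.exists_pos_add_le_of_lt (s : Finset ℝ) :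
    ∃ δ > 0, ∀ x ∈ s, ∀ y ∈ s, x < y → x + δ ≤ y := by
  let gaps := ((s ×ˢ s).filter fun q => q.1 < q.2).image fun q => q.2 - q.1
  have hmem {x y : ℝ} (hx : x ∈ s) (hy : y ∈ s) (hxy : x < y) : y - x ∈ gaps :=
    Finset.mem_image.mpr ⟨(x, y), by simp [hx, hy, hxy], rfl⟩
  rcases gaps.eq_empty_or_nonempty with hempty | hne
  · exact ⟨1, one_pos, fun x hx y hy hxy =>
      absurd (hmem hx hy hxy) (hempty ▸ Finset.notMem_empty _)⟩
  obtain ⟨δ, hδ, hmin⟩ := gaps.exists_min_image id hne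
  obtain ⟨⟨x, y⟩, hxy, rfl⟩ := Finset.mem_image.mp hδ
  refine ⟨y - x, sub_pos.mpr (Finset.mem_filter.mp hxy).2, fun x' hx' y' hy' hlt => ?_⟩
  have := hmin _ (hmem hx' hy' hlt)
  simp only [id] at this
  linarith

lemma exists_aval_gap (m n k : ℕ) (X : ℕ → ℕ → ℝ) :
    ∃ δ > 0, ∀ S T, IsAssign m n k S → IsAssign m n k T → aval X S < aval X T →
      aval X S + δ ≤ aval X T := by
  classical
  let values := ((Finset.range m ×ˢ Finset.range n).powerset.filter (IsAssign m n k)).image (aval X)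
  have hmem {S} (hS : IsAssign m n k S) : aval X S ∈ values :=
    Finset.mem_image_of_mem _ (Finset.mem_filter.mpr ⟨Finset.mem_powerset.mpr fun p hp => by
      simpa using hS.2.1 p hp, hS⟩)
  obtain ⟨δ, hδ, hgap⟩ := values.exists_pos_add_le_of_lt
  exact ⟨δ, hδ, fun S T hS hT => hgap _ (hmem hS) _ (hmem hT)⟩

open Classical in
noncomputable def lowerNonparticipating (m n k : ℕ) (Y : ℕ → ℕ → ℝ) (ε : ℝ) (i j : ℕ) : ℝ :=
  if Participates m n k Y i j then Y i j else Y i j - ε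

variable {m n k : ℕ} {Y : ℕ → ℕ → ℝ} {ε : ℝ} {i j : ℕ}

lemma lowerNonparticipating_of_participates (h : Participates m n k Y i j) :
    lowerNonparticipating m n k Y ε i j = Y i j := if_pos h

lemma lowerNonparticipating_of_not_participates (h : ¬ Participates m n k Y i j) :
    lowerNonparticipating m n k Y ε i j = Y i j - ε := if_neg h

lemma aval_le_aval_lowerNonparticipating (hε : 0 ≤ ε) {T : Finset (ℕ × ℕ)}
    (hT : IsAssign m n k T) : aval Y T ≤ aval (lowerNonparticipating m n k Y ε) T + k * ε := by
  calc aval Y T ≤ ∑ p ∈ T, (lowerNonparticipating m n k Y ε p.1 p.2 + ε) :=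
        Finset.sum_le_sum fun p _ => by
          by_cases h : Participates m n k Y p.1 p.2
          · rw [lowerNonparticipating_of_participates h]; linarith
          · rw [lowerNonparticipating_of_not_participates h]; linarith
    _ = aval (lowerNonparticipating m n k Y ε) T + k * ε := by
        rw [Finset.sum_add_distrib, Finset.sum_const, hT.1, nsmul_eq_mul]; rfl

lemma MinAssign.aval_lowerNonparticipating {S : Finset (ℕ × ℕ)} (hS : MinAssign m n k Y S) :
    aval (lowerNonparticipating m n k Y ε) S = aval Y S :=
  Finset.sum_congr rfl fun _ hp => lowerNonparticipating_of_participates ⟨S, hS, hp⟩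

lemma MinAssign.lowerNonparticipating {δ : ℝ}
    (hgap : ∀ S T, IsAssign m n k S → IsAssign m n k T → aval Y S < aval Y T →
      aval Y S + δ ≤ aval Y T) (hε : 0 ≤ ε) (hkε : k * ε ≤ δ)
    {S : Finset (ℕ × ℕ)} (hS : MinAssign m n k Y S) :
    MinAssign m n k (lowerNonparticipating m n k Y ε) S := by
  refine ⟨hS.1, fun T hT => ?_⟩
  rw [hS.aval_lowerNonparticipating]
  by_cases hTmin : MinAssign m n k Y T
  · rw [hTmin.aval_lowerNonparticipating]
    exact hS.2 T hT
  · obtain ⟨T', hT', hlt⟩ : ∃ T', IsAssign m n k T' ∧ aval Y T' < aval Y T := by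
      simpa [MinAssign, hT] using hTmin
    have := hgap S T hS.1 hT ((hS.2 T' hT').trans_lt hlt)
    have := aval_le_aval_lowerNonparticipating (Y := Y) hε hT
    linarith

end Perturbation

theorem k_reduced_structure_general (m n k : ℕ) (hkm : k ≤ m) (hmn : m ≤ n)
    (Y : ℕ → ℕ → ℝ) (hY : KReduced m n k Y) :
    ∃ (lam : ℕ → ℝ) (mu : ℕ → ℝ),
      ∀ i < m, ∀ j < n,
        Y i j = max 0 (lam i + mu j) ∧
        (Participates m n k Y i j ↔ Y i j = lam i + mu j) := by
  obtain ⟨δ, hδ, hgap⟩ := exists_aval_gap m n k Y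
  have hε : 0 < δ / (k + 1) := by positivity
  have hkε : k * (δ / (k + 1)) ≤ δ := by
    rw [mul_div_assoc', div_le_iff₀ (by positivity)]
    nlinarith
  obtain ⟨lam, mu, hpot⟩ := exists_dual_potentials hkm (hkm.trans hmn)
    (lowerNonparticipating m n k Y (δ / (k + 1)))
  refine ⟨lam, mu, fun i hi j hj => ?_⟩
  obtain ⟨hle, heq⟩ := hpot i hi j hj
  by_cases hP : Participates m n k Y i j
  · obtain ⟨S, hS, hij⟩ := hP
    have h := heq ⟨S, hS.lowerNonparticipating hgap hε.le hkε, hij⟩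
    rw [lowerNonparticipating_of_participates ⟨S, hS, hij⟩] at h
    exact ⟨by rw [h, max_eq_right (h ▸ hY.1 i hi j hj)], iff_of_true ⟨S, hS, hij⟩ h.symm⟩
  · have hY0 : Y i j = 0 := by_contra fun h => hP (hY.2 i hi j hj h)
    rw [lowerNonparticipating_of_not_participates hP, hY0] at hle
    exact ⟨by rw [hY0, max_eq_left (by linarith)], iff_of_false hP (by linarith)⟩

/-- Every `k`-reduced nonnegative matrix `Y` has the form `y_{ij} = max (0, λ_i + μ_j)`,
and `y_{ij}` participates in a minimum `k`-assignment exactly when `y_{ij} = λ_i + μ_j`. -/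
theorem k_reduced_structure (m n k : ℕ) (hk : 0 < k) (hkm : k ≤ m) (hmn : m ≤ n)
    (Y : ℕ → ℕ → ℝ) (hY : KReduced m n k Y) :
    ∃ (lam : ℕ → ℝ) (mu : ℕ → ℝ),
      ∀ i < m, ∀ j < n,
        Y i j = max 0 (lam i + mu j) ∧
        (Participates m n k Y i j ↔ Y i j = lam i + mu j) :=
  k_reduced_structure_general m n k hkm hmn Y hY
end

section
/- Let k ≤ m ≤ n, let X be a nonnegative m×n real matrix, let M be the upper-left (k−1)×(k−1) submatrix of X, and let Y = Aux_M(X) be the k×k auxiliary matrix of X with respect to M. Then for every t < k and every t-assignment σ contained in the upper-left t×t submatrix (which is common to X and Y), σ achieves min_t(X) if and only if σ achieves min_t(Y). -/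
namespace AuxProof

/-- compatibility: at most one entry with row `≥ K`, at most one with col `≥ K`. -/
def Compat (K : ℕ) (T : Finset (ℕ × ℕ)) : Prop :=
  (∀ p ∈ T, ∀ q ∈ T, K ≤ p.1 → K ≤ q.1 → p = q) ∧
  (∀ p ∈ T, ∀ q ∈ T, K ≤ p.2 → K ≤ q.2 → p = q)

variable {m n t : ℕ} {T S : Finset (ℕ × ℕ)}

lemma row_eq (h : IsAssign m n t T) {p q : ℕ × ℕ} (hp : p ∈ T) (hq : q ∈ T)
    (h1 : p.1 = q.1) : p = q := by
  by_contra hne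
  exact (h.2.2 p hp q hq hne).1 h1

lemma col_eq (h : IsAssign m n t T) {p q : ℕ × ℕ} (hp : p ∈ T) (hq : q ∈ T)
    (h1 : p.2 = q.2) : p = q := by
  by_contra hne
  exact (h.2.2 p hp q hq hne).2 h1

lemma card_rows (h : IsAssign m n t T) : (T.image Prod.fst).card = t := by
  rw [Finset.card_image_of_injOn, h.1]
  intro p hp q hq h1
  exact row_eq h hp hq h1

lemma card_cols (h : IsAssign m n t T) : (T.image Prod.snd).card = t := by
  rw [Finset.card_image_of_injOn, h.1]
  intro p hp q hq h1
  exact col_eq h hp hq h1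

/-- a block assignment hits every column `< t`. -/
lemma block_total_col (hS : IsAssign m n t S) (hb : ∀ p ∈ S, p.1 < t ∧ p.2 < t) :
    ∀ c < t, ∃ r, r < t ∧ (r, c) ∈ S := by
  intro c hc
  have hsub : S.image Prod.snd ⊆ Finset.range t := by
    intro x hx
    obtain ⟨p, hp, rfl⟩ := Finset.mem_image.1 hx
    exact Finset.mem_range.2 (hb p hp).2
  have : S.image Prod.snd = Finset.range t :=
    Finset.eq_of_subset_of_card_le hsub (by rw [card_cols hS, Finset.card_range])
  have hc' : c ∈ S.image Prod.snd := this ▸ Finset.mem_range.2 hc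
  obtain ⟨p, hp, hpe⟩ := Finset.mem_image.1 hc'
  exact ⟨p.1, (hb p hp).1, by rwa [← hpe, Prod.mk.eta]⟩

lemma block_total_row (hS : IsAssign m n t S) (hb : ∀ p ∈ S, p.1 < t ∧ p.2 < t) :
    ∀ r < t, ∃ c, c < t ∧ (r, c) ∈ S := by
  intro r hr
  have hsub : S.image Prod.fst ⊆ Finset.range t := by
    intro x hx
    obtain ⟨p, hp, rfl⟩ := Finset.mem_image.1 hx
    exact Finset.mem_range.2 (hb p hp).1
  have : S.image Prod.fst = Finset.range t :=
    Finset.eq_of_subset_of_card_le hsub (by rw [card_rows hS, Finset.card_range])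
  have hr' : r ∈ S.image Prod.fst := this ▸ Finset.mem_range.2 hr
  obtain ⟨p, hp, hpe⟩ := Finset.mem_image.1 hr'
  exact ⟨p.2, (hb p hp).2, by rwa [← hpe, Prod.mk.eta]⟩

lemma exists_fresh_row (hT : IsAssign m n t T) {p0 : ℕ × ℕ} (hp0 : p0 ∈ T)
    (hb : ¬ p0.1 < t) : ∃ r, r < t ∧ ∀ q ∈ T, q.1 ≠ r := by
  by_contra h
  push_neg at h
  have hsub : insert p0.1 (Finset.range t) ⊆ T.image Prod.fst := by
    intro x hx
    rcases Finset.mem_insert.1 hx with rfl | hx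
    · exact Finset.mem_image_of_mem _ hp0
    · obtain ⟨q, hq, hqe⟩ := h x (Finset.mem_range.1 hx)
      exact Finset.mem_image.2 ⟨q, hq, hqe⟩
  have := Finset.card_le_card hsub
  rw [Finset.card_insert_of_notMem (by simp [hb]), Finset.card_range, card_rows hT] at this
  omega

/-- rows of T ∩ [0,t) has card ≤ t-1 when T has an out-row entry -/
lemma card_rows_inter (hT : IsAssign m n t T) {p0 : ℕ × ℕ} (hp0 : p0 ∈ T)
    (hb : ¬ p0.1 < t) :
    ((T.image Prod.fst).filter (· < t)).card ≤ t - 1 := by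
  have hsub : (T.image Prod.fst).filter (· < t) ⊆ (T.image Prod.fst).erase p0.1 := by
    intro x hx
    rw [Finset.mem_filter] at hx
    exact Finset.mem_erase.2 ⟨fun h => hb (h ▸ hx.2), hx.1⟩
  have := Finset.card_le_card hsub
  rw [Finset.card_erase_of_mem (Finset.mem_image_of_mem _ hp0), card_rows hT] at this
  exact this



/-- Walk `Q` starting at a `T`-edge `(i0,c0)` with out-row `i0`. -/
lemma walkQ (hS : IsAssign m n t S) (hb : ∀ p ∈ S, p.1 < t ∧ p.2 < t)
    (hT : IsAssign m n t T) {i0 c0 : ℕ} (h0 : (i0, c0) ∈ T) (hi0 : ¬ i0 < t) :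
    ∃ (l : ℕ) (r c : ℕ → ℕ), r 0 = i0 ∧
      (∀ a ≤ l, (r a, c a) ∈ T) ∧
      (∀ a, a < l → r (a + 1) < t ∧ (r (a + 1), c a) ∈ S) ∧
      (∀ a ≤ l, ∀ b ≤ l, a ≠ b → c a ≠ c b) ∧
      ((¬ c l < t) ∨ ∃ r', r' < t ∧ (r', c l) ∈ S ∧ ∀ q ∈ T, q.1 ≠ r') := by
  suffices H : ∀ (d l : ℕ) (r c : ℕ → ℕ), r 0 = i0 →
      (∀ a ≤ l, (r a, c a) ∈ T) →
      (∀ a, a < l → r (a + 1) < t ∧ (r (a + 1), c a) ∈ S) →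
      (∀ a ≤ l, ∀ b ≤ l, a ≠ b → c a ≠ c b) →
      t ≤ l + d →
      ∃ (l : ℕ) (r c : ℕ → ℕ), r 0 = i0 ∧
      (∀ a ≤ l, (r a, c a) ∈ T) ∧
      (∀ a, a < l → r (a + 1) < t ∧ (r (a + 1), c a) ∈ S) ∧
      (∀ a ≤ l, ∀ b ≤ l, a ≠ b → c a ≠ c b) ∧
      ((¬ c l < t) ∨ ∃ r', r' < t ∧ (r', c l) ∈ S ∧ ∀ q ∈ T, q.1 ≠ r') by
    exact H t 0 (fun _ => i0) (fun _ => c0) rfl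
      (by intro a ha; interval_cases a; exact h0)
      (by omega) (by intro a ha b hb' hab; omega) (by omega)
  intro d
  induction d with
  | zero =>
    intro l r c hr0 hmemT hmemS hinj hle
    exfalso
    -- c '' [0..l] are l+1 distinct cols of T, but T has only t ≤ l cols
    have hcard : ((Finset.range (l + 1)).image c).card = l + 1 := by
      rw [Finset.card_image_of_injOn, Finset.card_range]
      intro a ha b hb' hab
      by_contra hne
      exact hinj a (by simpa using Nat.lt_succ_iff.1 (Finset.mem_range.1 ha))
        b (by simpa using Nat.lt_succ_iff.1 (Finset.mem_range.1 hb')) hne hab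
    have hsub : (Finset.range (l + 1)).image c ⊆ T.image Prod.snd := by
      intro x hx
      obtain ⟨a, ha, rfl⟩ := Finset.mem_image.1 hx
      exact Finset.mem_image.2 ⟨(r a, c a), hmemT a (Nat.lt_succ_iff.1 (Finset.mem_range.1 ha)), rfl⟩
    have := Finset.card_le_card hsub
    rw [hcard, card_cols hT] at this
    omega
  | succ d ih =>
    intro l r c hr0 hmemT hmemS hinj hle
    by_cases hcl : c l < t
    · obtain ⟨r', hr't, hr'S⟩ := block_total_col hS hb (c l) hcl
      by_cases hr'T : ∃ q ∈ T, q.1 = r'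
      · obtain ⟨q, hq, hq1⟩ := hr'T
        -- extend
        refine ih (l + 1) (fun a => if a ≤ l then r a else r')
          (fun a => if a ≤ l then c a else q.2) (by simp [hr0]) ?_ ?_ ?_ (by omega)
        · intro a ha
          by_cases h : a ≤ l
          · simpa [h] using hmemT a h
          · have h' : a = l + 1 := by omega
            rw [h']
            simp only [if_neg (by omega : ¬ l + 1 ≤ l)]
            have : (r', q.2) = q := by rw [← hq1]
            rw [this]
            exact hq
        · intro a ha
          by_cases h : a < l
          · have h1 : a + 1 ≤ l := by omega
            have h2 : a ≤ l := by omega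
            simpa [h1, h2] using hmemS a h
          · have h' : a = l := by omega
            rw [h']
            simp only [if_pos (le_refl l), if_neg (by omega : ¬ l + 1 ≤ l)]
            exact ⟨hr't, hr'S⟩
        · intro a ha b hb' hab
          -- injectivity with new col q.2
          have key : ∀ b' ≤ l, q.2 ≠ c b' := by
            intro b' hb'' heq
            have : q = (r b', c b') := col_eq hT hq (hmemT b' hb'') heq
            have hrb' : r b' = r' := by rw [← hq1, this]
            rcases Nat.eq_zero_or_pos b' with rfl | hpos
            · rw [hr0] at hrb'; omega
            · obtain ⟨b'', rfl⟩ := Nat.exists_eq_succ_of_ne_zero (by omega : b' ≠ 0)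
              have hS1 : (r (b'' + 1), c b'') ∈ S := (hmemS b'' (by omega)).2
              have : (r (b''+1), c b'') = (r', c l) :=
                row_eq hS hS1 hr'S (by simpa using hrb')
              have : c b'' = c l := by simpa using congrArg Prod.snd this
              exact hinj b'' (by omega) l (le_refl l) (by omega) this
          by_cases h1 : a ≤ l <;> by_cases h2 : b ≤ l
          · simp only [if_pos h1, if_pos h2]; exact hinj a h1 b h2 hab
          · have : b = l + 1 := by omega
            simp only [if_pos h1, if_neg (by omega : ¬ b ≤ l)]
            exact fun he => key a h1 he.symm
          · have : a = l + 1 := by omega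
            simp only [if_neg (by omega : ¬ a ≤ l), if_pos h2]
            exact key b h2
          · omega
      · push_neg at hr'T
        exact ⟨l, r, c, hr0, hmemT, hmemS, hinj, Or.inr ⟨r', hr't, hr'S, hr'T⟩⟩
    · exact ⟨l, r, c, hr0, hmemT, hmemS, hinj, Or.inl hcl⟩

/-- Walk `P` starting at a fresh row `r* < t`. -/
lemma walkP (hS : IsAssign m n t S) (hb : ∀ p ∈ S, p.1 < t ∧ p.2 < t)
    (hT : IsAssign m n t T) {rs : ℕ} (hrs : rs < t) (hfresh : ∀ q ∈ T, q.1 ≠ rs)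
    {p0 : ℕ × ℕ} (hp0 : p0 ∈ T) (hp0t : ¬ p0.1 < t) :
    ∃ (j : ℕ) (ρ d : ℕ → ℕ), ρ 0 = rs ∧
      (∀ a ≤ j, ρ a < t ∧ (ρ a, d a) ∈ S) ∧
      (∀ a, a < j → (ρ (a + 1), d a) ∈ T) ∧
      (∀ a ≤ j, ∀ b ≤ j, a ≠ b → ρ a ≠ ρ b) ∧
      ((∃ s', ¬ s' < t ∧ (s', d j) ∈ T) ∨ ∀ q ∈ T, q.2 ≠ d j) := by
  obtain ⟨c0, hc0t, hc0⟩ := block_total_row hS hb rs hrs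
  suffices H : ∀ (dd j : ℕ) (ρ d : ℕ → ℕ), ρ 0 = rs →
      (∀ a ≤ j, ρ a < t ∧ (ρ a, d a) ∈ S) →
      (∀ a, a < j → (ρ (a + 1), d a) ∈ T) →
      (∀ a ≤ j, ∀ b ≤ j, a ≠ b → ρ a ≠ ρ b) →
      t ≤ j + dd →
      ∃ (j : ℕ) (ρ d : ℕ → ℕ), ρ 0 = rs ∧
      (∀ a ≤ j, ρ a < t ∧ (ρ a, d a) ∈ S) ∧
      (∀ a, a < j → (ρ (a + 1), d a) ∈ T) ∧
      (∀ a ≤ j, ∀ b ≤ j, a ≠ b → ρ a ≠ ρ b) ∧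
      ((∃ s', ¬ s' < t ∧ (s', d j) ∈ T) ∨ ∀ q ∈ T, q.2 ≠ d j) by
    exact H t 0 (fun _ => rs) (fun _ => c0) rfl
      (by intro a ha; interval_cases a; exact ⟨hrs, hc0⟩)
      (by omega) (by intro a ha b hb' hab; omega) (by omega)
  intro dd
  induction dd with
  | zero =>
    intro j ρ d hρ0 hmemS hmemT hinj hle
    exfalso
    -- ρ 1 .. ρ j are j distinct elements of rows(T) ∩ [0,t), card ≤ t - 1
    have hcard : ((Finset.range j).image (fun a => ρ (a + 1))).card = j := by
      rw [Finset.card_image_of_injOn, Finset.card_range]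
      intro a ha b hb' hab
      by_contra hne
      exact hinj (a+1) (Finset.mem_range.1 ha) (b+1) (Finset.mem_range.1 hb') (by omega) hab
    have hsub : (Finset.range j).image (fun a => ρ (a + 1)) ⊆
        (T.image Prod.fst).filter (· < t) := by
      intro x hx
      obtain ⟨a, ha, rfl⟩ := Finset.mem_image.1 hx
      have haj := Finset.mem_range.1 ha
      refine Finset.mem_filter.2 ⟨Finset.mem_image.2 ⟨_, hmemT a haj, rfl⟩,
        (hmemS (a + 1) (by omega)).1⟩
    have h1 := Finset.card_le_card hsub
    have h2 := card_rows_inter hT hp0 hp0t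
    omega
  | succ dd ih =>
    intro j ρ d hρ0 hmemS hmemT hinj hle
    by_cases hdT : ∃ q ∈ T, q.2 = d j
    · obtain ⟨q, hq, hq2⟩ := hdT
      by_cases hq1 : q.1 < t
      · -- extend
        obtain ⟨c', hc't, hc'⟩ := block_total_row hS hb q.1 hq1
        refine ih (j + 1) (fun a => if a ≤ j then ρ a else q.1)
          (fun a => if a ≤ j then d a else c') (by simp [hρ0]) ?_ ?_ ?_ (by omega)
        · intro a ha
          by_cases h : a ≤ j
          · simpa [h] using hmemS a h
          · have h' : a = j + 1 := by omega
            rw [h']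
            simp only [if_neg (by omega : ¬ j + 1 ≤ j)]
            exact ⟨hq1, hc'⟩
        · intro a ha
          by_cases h : a < j
          · have h1 : a + 1 ≤ j := by omega
            have h2 : a ≤ j := by omega
            simpa [h1, h2] using hmemT a h
          · have h' : a = j := by omega
            rw [h']
            simp only [if_neg (by omega : ¬ j + 1 ≤ j), if_pos (le_refl j)]
            have : (q.1, d j) = q := by rw [← hq2]
            rw [this]
            exact hq
        · intro a ha b hb' hab
          have key : ∀ b' ≤ j, q.1 ≠ ρ b' := by
            intro b' hb'' heq
            rcases Nat.eq_zero_or_pos b' with rfl | hpos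
            · rw [hρ0] at heq; exact hfresh q hq heq
            · obtain ⟨b'', rfl⟩ := Nat.exists_eq_succ_of_ne_zero (by omega : b' ≠ 0)
              have hT1 : (ρ (b'' + 1), d b'') ∈ T := hmemT b'' (by omega)
              have : q = (ρ (b'' + 1), d b'') := row_eq hT hq hT1 heq
              have hdd : d b'' = d j := by rw [this] at hq2; exact hq2
              -- d injective from ρ injective
              have hS1 := (hmemS b'' (by omega)).2
              have hS2 := (hmemS j (le_refl j)).2
              rw [hdd] at hS1
              have := col_eq hS hS1 hS2 rfl
              have : ρ b'' = ρ j := by simpa using congrArg Prod.fst this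
              exact hinj b'' (by omega) j (le_refl j) (by omega) this
          by_cases h1 : a ≤ j <;> by_cases h2 : b ≤ j
          · simp only [if_pos h1, if_pos h2]; exact hinj a h1 b h2 hab
          · simp only [if_pos h1, if_neg h2]
            exact fun he => key a h1 he.symm
          · simp only [if_neg h1, if_pos h2]
            exact key b h2
          · omega
      · exact ⟨j, ρ, d, hρ0, hmemS, hmemT, hinj, Or.inl ⟨q.1, hq1, by
          have : q = (q.1, d j) := by rw [← hq2]
          rwa [this] at hq⟩⟩
    · push_neg at hdT
      exact ⟨j, ρ, d, hρ0, hmemS, hmemT, hinj, Or.inr hdT⟩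


variable {K : ℕ} {X : ℕ → ℕ → ℝ}

lemma aval_sdiff {A B : Finset (ℕ × ℕ)} (h : B ⊆ A) :
    aval X (A \ B) = aval X A - aval X B := by
  have := Finset.sum_sdiff (f := fun p : ℕ × ℕ => X p.1 p.2) h
  unfold aval
  linarith

lemma aval_union {A B : Finset (ℕ × ℕ)} (h : Disjoint A B) :
    aval X (A ∪ B) = aval X A + aval X B :=
  Finset.sum_union h

/-- The generic exchange step. -/
lemma swap_lemma (hK : t ≤ K) (hS : IsAssign m n t S)
    (hmin : ∀ U, IsAssign m n t U → Compat K U → aval X S ≤ aval X U)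
    (hT : IsAssign m n t T)
    (A B : Finset (ℕ × ℕ)) (hA : A ⊆ T) (hB : B ⊆ S)
    (hAS : ∀ p ∈ A, p ∉ S) (hBT : ∀ p ∈ B, p ∉ T)
    (hcard : A.card = B.card)
    (hArow : ∀ q ∈ A, ∀ p ∈ S, p.1 = q.1 → p ∈ B)
    (hAcol : ∀ q ∈ A, ∀ p ∈ S, p.2 = q.2 → p ∈ B)
    (hBrow : ∀ q ∈ B, ∀ p ∈ T, p.1 = q.1 → p ∈ A)
    (hBcol : ∀ q ∈ B, ∀ p ∈ T, p.2 = q.2 → p ∈ A)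
    (hUcompat : Compat K ((S \ B) ∪ A))
    (hAne : A.Nonempty) :
    ∃ T', IsAssign m n t T' ∧ aval X T' ≤ aval X T ∧ (T' \ S).card < (T \ S).card := by
  have hdisjU : Disjoint (S \ B) A := by
    rw [Finset.disjoint_right]
    intro p hp hp'
    exact hAS p hp (Finset.mem_sdiff.1 hp').1
  have hdisjT' : Disjoint (T \ A) B := by
    rw [Finset.disjoint_right]
    intro p hp hp'
    exact hBT p hp (Finset.mem_sdiff.1 hp').1
  have hUcard : ((S \ B) ∪ A).card = t := by
    rw [Finset.card_union_of_disjoint hdisjU, Finset.card_sdiff_of_subset hB, hS.1, hcard]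
    have := Finset.card_le_card hB
    rw [hS.1] at this
    omega
  have hT'card : ((T \ A) ∪ B).card = t := by
    rw [Finset.card_union_of_disjoint hdisjT', Finset.card_sdiff_of_subset hA, hT.1, hcard]
    have := Finset.card_le_card hA
    rw [hT.1] at this
    omega
  have hUassign : IsAssign m n t ((S \ B) ∪ A) := by
    refine ⟨hUcard, ?_, ?_⟩
    · intro p hp
      rcases Finset.mem_union.1 hp with hp | hp
      · exact hS.2.1 p (Finset.mem_sdiff.1 hp).1
      · exact hT.2.1 p (hA hp)
    · intro p hp q hq hne
      rcases Finset.mem_union.1 hp with hp | hp <;> rcases Finset.mem_union.1 hq with hq | hq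
      · exact hS.2.2 p (Finset.mem_sdiff.1 hp).1 q (Finset.mem_sdiff.1 hq).1 hne
      · obtain ⟨hpS, hpB⟩ := Finset.mem_sdiff.1 hp
        constructor
        · intro h; exact hpB (hArow q hq p hpS h)
        · intro h; exact hpB (hAcol q hq p hpS h)
      · obtain ⟨hqS, hqB⟩ := Finset.mem_sdiff.1 hq
        constructor
        · intro h; exact hqB (hArow p hp q hqS h.symm)
        · intro h; exact hqB (hAcol p hp q hqS h.symm)
      · exact hT.2.2 p (hA hp) q (hA hq) hne
  have hT'assign : IsAssign m n t ((T \ A) ∪ B) := by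
    refine ⟨hT'card, ?_, ?_⟩
    · intro p hp
      rcases Finset.mem_union.1 hp with hp | hp
      · exact hT.2.1 p (Finset.mem_sdiff.1 hp).1
      · exact hS.2.1 p (hB hp)
    · intro p hp q hq hne
      rcases Finset.mem_union.1 hp with hp | hp <;> rcases Finset.mem_union.1 hq with hq | hq
      · exact hT.2.2 p (Finset.mem_sdiff.1 hp).1 q (Finset.mem_sdiff.1 hq).1 hne
      · obtain ⟨hpT, hpA⟩ := Finset.mem_sdiff.1 hp
        constructor
        · intro h; exact hpA (hBrow q hq p hpT h)
        · intro h; exact hpA (hBcol q hq p hpT h)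
      · obtain ⟨hqT, hqA⟩ := Finset.mem_sdiff.1 hq
        constructor
        · intro h; exact hqA (hBrow p hp q hqT h.symm)
        · intro h; exact hqA (hBcol p hp q hqT h.symm)
      · exact hS.2.2 p (hB hp) q (hB hq) hne
  have hUval : aval X ((S \ B) ∪ A) = aval X S - aval X B + aval X A := by
    rw [aval_union hdisjU, aval_sdiff hB]
  have hineq := hmin _ hUassign hUcompat
  rw [hUval] at hineq
  have hBA : aval X B ≤ aval X A := by linarith
  refine ⟨(T \ A) ∪ B, hT'assign, ?_, ?_⟩
  · rw [aval_union hdisjT', aval_sdiff hA]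
    linarith
  · apply Finset.card_lt_card
    constructor
    · intro p hp
      obtain ⟨hp1, hp2⟩ := Finset.mem_sdiff.1 hp
      rcases Finset.mem_union.1 hp1 with hp1 | hp1
      · exact Finset.mem_sdiff.2 ⟨(Finset.mem_sdiff.1 hp1).1, hp2⟩
      · exact absurd (hB hp1) hp2
    · intro hsub
      obtain ⟨p, hpA⟩ := hAne
      have hpTS : p ∈ T \ S := Finset.mem_sdiff.2 ⟨hA hpA, hAS p hpA⟩
      have := hsub hpTS
      obtain ⟨hp1, hp2⟩ := Finset.mem_sdiff.1 this
      rcases Finset.mem_union.1 hp1 with hp1 | hp1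
      · exact (Finset.mem_sdiff.1 hp1).2 hpA
      · exact hp2 (hB hp1)


lemma evenQ_swap (hK : t ≤ K) (hS : IsAssign m n t S) (hb : ∀ p ∈ S, p.1 < t ∧ p.2 < t)
    (hmin : ∀ U, IsAssign m n t U → Compat K U → aval X S ≤ aval X U)
    (hT : IsAssign m n t T)
    (l : ℕ) (r c : ℕ → ℕ) (hi0 : ¬ r 0 < t)
    (hQT : ∀ a ≤ l, (r a, c a) ∈ T)
    (hQS : ∀ a, a < l → r (a + 1) < t ∧ (r (a + 1), c a) ∈ S)
    (hcinj : ∀ a ≤ l, ∀ b ≤ l, a ≠ b → c a ≠ c b)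
    (r' : ℕ) (hr't : r' < t) (hr'S : (r', c l) ∈ S) (hr'f : ∀ q ∈ T, q.1 ≠ r') :
    ∃ T', IsAssign m n t T' ∧ aval X T' ≤ aval X T ∧ (T' \ S).card < (T \ S).card := by
  set r1 : ℕ → ℕ := fun a => if a < l then r (a + 1) else r' with hr1
  have memB : ∀ a ≤ l, (r1 a, c a) ∈ S := by
    intro a ha
    by_cases h : a < l
    · simpa [hr1, h] using (hQS a h).2
    · have : a = l := by omega
      simpa [hr1, this] using hr'S
  have clt : ∀ a ≤ l, c a < t := fun a ha => (hb _ (memB a ha)).2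
  have r1lt : ∀ a ≤ l, r1 a < t := fun a ha => (hb _ (memB a ha)).1
  set A := (Finset.range (l + 1)).image (fun a => (r a, c a)) with hAdef
  set B := (Finset.range (l + 1)).image (fun a => (r1 a, c a)) with hBdef
  have memA : ∀ p ∈ A, ∃ a ≤ l, p = (r a, c a) := by
    intro p hp
    obtain ⟨a, ha, rfl⟩ := Finset.mem_image.1 hp
    exact ⟨a, Nat.lt_succ_iff.1 (Finset.mem_range.1 ha), rfl⟩
  have memB' : ∀ p ∈ B, ∃ a ≤ l, p = (r1 a, c a) := by
    intro p hp
    obtain ⟨a, ha, rfl⟩ := Finset.mem_image.1 hp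
    exact ⟨a, Nat.lt_succ_iff.1 (Finset.mem_range.1 ha), rfl⟩
  have inA : ∀ a ≤ l, (r a, c a) ∈ A := fun a ha =>
    Finset.mem_image.2 ⟨a, Finset.mem_range.2 (by omega), rfl⟩
  have inB : ∀ a ≤ l, (r1 a, c a) ∈ B := fun a ha =>
    Finset.mem_image.2 ⟨a, Finset.mem_range.2 (by omega), rfl⟩
  have hAsub : A ⊆ T := by
    intro p hp; obtain ⟨a, ha, rfl⟩ := memA p hp; exact hQT a ha
  have hBsub : B ⊆ S := by
    intro p hp; obtain ⟨a, ha, rfl⟩ := memB' p hp; exact memB a ha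
  refine swap_lemma hK hS hmin hT A B hAsub hBsub ?_ ?_ ?_ ?_ ?_ ?_ ?_ ?_ ⟨_, inA 0 (by omega)⟩
  · -- A ∩ S = ∅
    intro p hp hpS
    obtain ⟨a, ha, rfl⟩ := memA p hp
    rcases Nat.eq_zero_or_pos a with rfl | hpos
    · exact hi0 (hb _ hpS).1
    · have h2 := (hQS (a - 1) (by omega)).2
      have heq : a - 1 + 1 = a := by omega
      have : (r a, c a) = (r (a - 1 + 1), c (a - 1)) :=
        row_eq hS hpS (by simpa using h2) (by simp [heq])
      have : c a = c (a - 1) := congrArg Prod.snd this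
      exact hcinj a ha (a - 1) (by omega) (by omega) this
  · -- B ∩ T = ∅
    intro p hp hpT
    obtain ⟨a, ha, rfl⟩ := memB' p hp
    by_cases h : a < l
    · have h1 : r1 a = r (a + 1) := by simp [hr1, h]
      have := row_eq hT hpT (hQT (a + 1) (by omega)) (by simpa using h1)
      have : c a = c (a + 1) := congrArg Prod.snd this
      exact hcinj a ha (a + 1) (by omega) (by omega) this
    · have h1 : r1 a = r' := by simp [hr1, h]
      exact hr'f _ hpT (by simpa using h1)
  · -- cards
    rw [Finset.card_image_of_injOn, Finset.card_image_of_injOn]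
    · intro a ha b hb' hab
      simp only [Finset.coe_range, Set.mem_Iio] at ha hb'
      by_contra hne
      exact hcinj a (by omega) b (by omega) hne (congrArg Prod.snd hab)
    · intro a ha b hb' hab
      simp only [Finset.coe_range, Set.mem_Iio] at ha hb'
      by_contra hne
      exact hcinj a (by omega) b (by omega) hne (congrArg Prod.snd hab)
  · -- hArow
    intro q hq p hpS hpq
    obtain ⟨a, ha, rfl⟩ := memA q hq
    rcases Nat.eq_zero_or_pos a with rfl | hpos
    · exact absurd ((hb p hpS).1) (by rw [hpq]; exact hi0)
    · have h2 := (hQS (a - 1) (by omega)).2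
      have heq : a - 1 + 1 = a := by omega
      have hre : p = (r (a - 1 + 1), c (a - 1)) :=
        row_eq hS hpS (by simpa using h2) (by simp [hpq, heq])
    -- p = (r a, c (a-1)) = (r1 (a-1), c (a-1)) ∈ B
      rw [hre]
      have : r (a - 1 + 1) = r1 (a - 1) := by simp [hr1, (by omega : a - 1 < l)]
      rw [this]
      exact inB (a - 1) (by omega)
  · -- hAcol
    intro q hq p hpS hpq
    obtain ⟨a, ha, rfl⟩ := memA q hq
    have := col_eq hS hpS (memB a ha) (by simpa using hpq)
    rw [this]; exact inB a ha
  · -- hBrow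
    intro q hq p hpT hpq
    obtain ⟨a, ha, rfl⟩ := memB' q hq
    by_cases h : a < l
    · have h1 : r1 a = r (a + 1) := by simp [hr1, h]
      have := row_eq hT hpT (hQT (a + 1) (by omega)) (by simp [hpq, h1])
      rw [this]; exact inA (a + 1) (by omega)
    · have h1 : r1 a = r' := by simp [hr1, h]
      exact absurd (by rw [hpq]; simpa using h1) (hr'f p hpT)
  · -- hBcol
    intro q hq p hpT hpq
    obtain ⟨a, ha, rfl⟩ := memB' q hq
    have := col_eq hT hpT (hQT a ha) (by simpa using hpq)
    rw [this]; exact inA a ha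
  · -- compat
    constructor
    · intro p hp q hq hp1 hq1
      have key : ∀ x ∈ (S \ B) ∪ A, K ≤ x.1 → x = (r 0, c 0) := by
        intro x hx hx1
        rcases Finset.mem_union.1 hx with hx | hx
        · exact absurd ((hb x (Finset.mem_sdiff.1 hx).1).1) (by omega)
        · obtain ⟨a, ha, rfl⟩ := memA x hx
          rcases Nat.eq_zero_or_pos a with rfl | hpos
          · rfl
          · have := (hQS (a - 1) (by omega)).1
            have heq : a - 1 + 1 = a := by omega
            rw [heq] at this
            exact absurd this (by simp; omega)
      rw [key p hp hp1, key q hq hq1]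
    · intro p hp q hq hp1 hq1
      exfalso
      rcases Finset.mem_union.1 hp with hx | hx
      · exact absurd ((hb p (Finset.mem_sdiff.1 hx).1).2) (by omega)
      · obtain ⟨a, ha, he⟩ := memA p hx
        have := clt a ha
        rw [he] at hp1
        simp at hp1
        omega


lemma evenP_swap (hK : t ≤ K) (hS : IsAssign m n t S) (hb : ∀ p ∈ S, p.1 < t ∧ p.2 < t)
    (hmin : ∀ U, IsAssign m n t U → Compat K U → aval X S ≤ aval X U)
    (hT : IsAssign m n t T)
    (j : ℕ) (ρ d : ℕ → ℕ) (hfresh : ∀ q ∈ T, q.1 ≠ ρ 0)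
    (hPS : ∀ a ≤ j, ρ a < t ∧ (ρ a, d a) ∈ S)
    (hPT : ∀ a, a < j → (ρ (a + 1), d a) ∈ T)
    (hρinj : ∀ a ≤ j, ∀ b ≤ j, a ≠ b → ρ a ≠ ρ b)
    (s' : ℕ) (hs't : ¬ s' < t) (hs'T : (s', d j) ∈ T) :
    ∃ T', IsAssign m n t T' ∧ aval X T' ≤ aval X T ∧ (T' \ S).card < (T \ S).card := by
  have hdinj : ∀ a ≤ j, ∀ b ≤ j, a ≠ b → d a ≠ d b := by
    intro a ha b hb' hab he
    have := col_eq hS (hPS a ha).2 (hPS b hb').2 (by simpa using he)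
    exact hρinj a ha b hb' hab (congrArg Prod.fst this)
  set ρ1 : ℕ → ℕ := fun a => if a < j then ρ (a + 1) else s' with hρ1
  have memA0 : ∀ a ≤ j, (ρ1 a, d a) ∈ T := by
    intro a ha
    by_cases h : a < j
    · simpa [hρ1, h] using hPT a h
    · have : a = j := by omega
      simpa [hρ1, this] using hs'T
  have dlt : ∀ a ≤ j, d a < t := fun a ha => (hb _ (hPS a ha).2).2
  set A := (Finset.range (j + 1)).image (fun a => (ρ1 a, d a)) with hAdef
  set B := (Finset.range (j + 1)).image (fun a => (ρ a, d a)) with hBdef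
  have memA : ∀ p ∈ A, ∃ a ≤ j, p = (ρ1 a, d a) := by
    intro p hp
    obtain ⟨a, ha, rfl⟩ := Finset.mem_image.1 hp
    exact ⟨a, Nat.lt_succ_iff.1 (Finset.mem_range.1 ha), rfl⟩
  have memB' : ∀ p ∈ B, ∃ a ≤ j, p = (ρ a, d a) := by
    intro p hp
    obtain ⟨a, ha, rfl⟩ := Finset.mem_image.1 hp
    exact ⟨a, Nat.lt_succ_iff.1 (Finset.mem_range.1 ha), rfl⟩
  have inA : ∀ a ≤ j, (ρ1 a, d a) ∈ A := fun a ha =>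
    Finset.mem_image.2 ⟨a, Finset.mem_range.2 (by omega), rfl⟩
  have inB : ∀ a ≤ j, (ρ a, d a) ∈ B := fun a ha =>
    Finset.mem_image.2 ⟨a, Finset.mem_range.2 (by omega), rfl⟩
  have hAsub : A ⊆ T := by
    intro p hp; obtain ⟨a, ha, rfl⟩ := memA p hp; exact memA0 a ha
  have hBsub : B ⊆ S := by
    intro p hp; obtain ⟨a, ha, rfl⟩ := memB' p hp; exact (hPS a ha).2
  refine swap_lemma hK hS hmin hT A B hAsub hBsub ?_ ?_ ?_ ?_ ?_ ?_ ?_ ?_ ⟨_, inA j le_rfl⟩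
  · -- A ∩ S = ∅
    intro p hp hpS
    obtain ⟨a, ha, rfl⟩ := memA p hp
    by_cases h : a < j
    · have h1 : ρ1 a = ρ (a + 1) := by simp [hρ1, h]
      have := row_eq hS hpS (hPS (a + 1) (by omega)).2 (by simpa using h1)
      have : d a = d (a + 1) := congrArg Prod.snd this
      exact hdinj a ha (a + 1) (by omega) (by omega) this
    · have h1 : ρ1 a = s' := by simp [hρ1, h]
      have := (hb _ hpS).1
      rw [h1] at this
      exact hs't this
  · -- B ∩ T = ∅
    intro p hp hpT
    obtain ⟨a, ha, rfl⟩ := memB' p hp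
    have := col_eq hT hpT (memA0 a ha) rfl
    have hρa : ρ a = ρ1 a := congrArg Prod.fst this
    by_cases h : a < j
    · rw [show ρ1 a = ρ (a + 1) by simp [hρ1, h]] at hρa
      exact hρinj a ha (a + 1) (by omega) (by omega) hρa
    · rw [show ρ1 a = s' by simp [hρ1, h]] at hρa
      exact hs't (hρa ▸ (hPS a ha).1)
  · -- cards
    rw [Finset.card_image_of_injOn, Finset.card_image_of_injOn]
    · intro a ha b hb' hab
      simp only [Finset.coe_range, Set.mem_Iio] at ha hb'
      by_contra hne
      exact hdinj a (by omega) b (by omega) hne (congrArg Prod.snd hab)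
    · intro a ha b hb' hab
      simp only [Finset.coe_range, Set.mem_Iio] at ha hb'
      by_contra hne
      exact hdinj a (by omega) b (by omega) hne (congrArg Prod.snd hab)
  · -- hArow
    intro q hq p hpS hpq
    obtain ⟨a, ha, rfl⟩ := memA q hq
    by_cases h : a < j
    · have h1 : ρ1 a = ρ (a + 1) := by simp [hρ1, h]
      have := row_eq hS hpS (hPS (a + 1) (by omega)).2 (by simp [hpq, h1])
      rw [this]; exact inB (a + 1) (by omega)
    · have h1 : ρ1 a = s' := by simp [hρ1, h]
      have := (hb p hpS).1
      rw [hpq] at this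
      simp only [h1] at this
      exact absurd this hs't
  · -- hAcol
    intro q hq p hpS hpq
    obtain ⟨a, ha, rfl⟩ := memA q hq
    have := col_eq hS hpS (hPS a ha).2 (by simpa using hpq)
    rw [this]; exact inB a ha
  · -- hBrow
    intro q hq p hpT hpq
    obtain ⟨a, ha, rfl⟩ := memB' q hq
    rcases Nat.eq_zero_or_pos a with rfl | hpos
    · exact absurd (by simpa using hpq) (hfresh p hpT)
    · have heq : a - 1 + 1 = a := by omega
      have hTm : (ρ (a - 1 + 1), d (a - 1)) ∈ T := hPT (a - 1) (by omega)
      have := row_eq hT hpT hTm (by simp [hpq, heq])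
      rw [this]
      have h1 : ρ (a - 1 + 1) = ρ1 (a - 1) := by simp [hρ1, (by omega : a - 1 < j)]
      rw [h1]
      exact inA (a - 1) (by omega)
  · -- hBcol
    intro q hq p hpT hpq
    obtain ⟨a, ha, rfl⟩ := memB' q hq
    have := col_eq hT hpT (memA0 a ha) (by simpa using hpq)
    rw [this]; exact inA a ha
  · -- compat
    constructor
    · intro p hp q hq hp1 hq1
      have key : ∀ x ∈ (S \ B) ∪ A, K ≤ x.1 → x = (ρ1 j, d j) := by
        intro x hx hx1
        rcases Finset.mem_union.1 hx with hx | hx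
        · exact absurd ((hb x (Finset.mem_sdiff.1 hx).1).1) (by omega)
        · obtain ⟨a, ha, rfl⟩ := memA x hx
          by_cases h : a < j
          · have h1 : ρ1 a = ρ (a + 1) := by simp [hρ1, h]
            have := (hPS (a + 1) (by omega)).1
            rw [← h1] at this
            exact absurd this (by simp; omega)
          · have : a = j := by omega
            rw [this]
      rw [key p hp hp1, key q hq hq1]
    · intro p hp q hq hp1 hq1
      exfalso
      rcases Finset.mem_union.1 hp with hx | hx
      · exact absurd ((hb p (Finset.mem_sdiff.1 hx).1).2) (by omega)
      · obtain ⟨a, ha, he⟩ := memA p hx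
        have := dlt a ha
        rw [he] at hp1
        simp at hp1
        omega


lemma paired_swap (hK : t ≤ K) (hS : IsAssign m n t S) (hb : ∀ p ∈ S, p.1 < t ∧ p.2 < t)
    (hmin : ∀ U, IsAssign m n t U → Compat K U → aval X S ≤ aval X U)
    (hT : IsAssign m n t T)
    (l : ℕ) (r c : ℕ → ℕ) (hi0 : ¬ r 0 < t)
    (hQT : ∀ a ≤ l, (r a, c a) ∈ T)
    (hQS : ∀ a, a < l → r (a + 1) < t ∧ (r (a + 1), c a) ∈ S)
    (hcinj : ∀ a ≤ l, ∀ b ≤ l, a ≠ b → c a ≠ c b)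
    (hclt : ¬ c l < t)
    (j : ℕ) (ρ d : ℕ → ℕ) (hfresh : ∀ q ∈ T, q.1 ≠ ρ 0)
    (hPS : ∀ a ≤ j, ρ a < t ∧ (ρ a, d a) ∈ S)
    (hPT : ∀ a, a < j → (ρ (a + 1), d a) ∈ T)
    (hρinj : ∀ a ≤ j, ∀ b ≤ j, a ≠ b → ρ a ≠ ρ b)
    (hdf : ∀ q ∈ T, q.2 ≠ d j) :
    ∃ T', IsAssign m n t T' ∧ aval X T' ≤ aval X T ∧ (T' \ S).card < (T \ S).card := by
  have hdinj : ∀ a ≤ j, ∀ b ≤ j, a ≠ b → d a ≠ d b := by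
    intro a ha b hb' hab he
    have := col_eq hS (hPS a ha).2 (hPS b hb').2 (by simpa using he)
    exact hρinj a ha b hb' hab (congrArg Prod.fst this)
  have dlt : ∀ a ≤ j, d a < t := fun a ha => (hb _ (hPS a ha).2).2
  have cltQ : ∀ a, a < l → c a < t := fun a ha => (hb _ (hQS a ha).2).2
  have hrinj : ∀ a ≤ l, ∀ b ≤ l, a ≠ b → r a ≠ r b := by
    intro a ha b hb' hab he
    rcases Nat.eq_zero_or_pos a with rfl | hpa
    · rcases Nat.eq_zero_or_pos b with rfl | hpb
      · omega
      · have := (hQS (b - 1) (by omega)).1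
        rw [(by omega : b - 1 + 1 = b)] at this
        rw [← he] at this
        exact hi0 this
    · rcases Nat.eq_zero_or_pos b with rfl | hpb
      · have := (hQS (a - 1) (by omega)).1
        rw [(by omega : a - 1 + 1 = a)] at this
        rw [he] at this
        exact hi0 this
      · have hSa : (r (a - 1 + 1), c (a - 1)) ∈ S := (hQS (a - 1) (by omega)).2
        have hSb : (r (b - 1 + 1), c (b - 1)) ∈ S := (hQS (b - 1) (by omega)).2
        have := row_eq hS hSa hSb (by simp [(by omega : a - 1 + 1 = a), (by omega : b - 1 + 1 = b), he])
        have : c (a - 1) = c (b - 1) := congrArg Prod.snd this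
        exact hcinj (a - 1) (by omega) (b - 1) (by omega) (by omega) this
  have hPQrow : ∀ a, a ≤ j → ∀ b ≤ l, ρ a ≠ r b := by
    intro a
    induction a with
    | zero => exact fun _ b hb' he => hfresh _ (hQT b hb') he.symm
    | succ a ih =>
      intro ha b hb' he
      have hTp : (ρ (a + 1), d a) ∈ T := hPT a (by omega)
      have hTq : (r b, c b) ∈ T := hQT b hb'
      have hdc : d a = c b := congrArg Prod.snd (row_eq hT hTp hTq (by simpa using he))
      have hda : d a < t := dlt a (by omega)
      by_cases hbl : b = l
      · rw [hbl] at hdc; rw [hdc] at hda; exact hclt hda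
      · have hSq : (r (b + 1), c b) ∈ S := (hQS b (by omega)).2
        have hSp : (ρ a, d a) ∈ S := (hPS a (by omega)).2
        have := col_eq hS hSp hSq (by simpa using hdc)
        exact ih (by omega) (b + 1) (by omega) (congrArg Prod.fst this)
  have hPQcol : ∀ a ≤ j, ∀ b ≤ l, d a ≠ c b := by
    intro a ha b hb' he
    by_cases hbl : b = l
    · rw [hbl] at he; exact hclt (he ▸ dlt a ha)
    · have hSq : (r (b + 1), c b) ∈ S := (hQS b (by omega)).2
      have := col_eq hS (hPS a ha).2 hSq (by simpa using he)
      exact hPQrow a ha (b + 1) (by omega) (congrArg Prod.fst this)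
  set TP := (Finset.range j).image (fun a => (ρ (a + 1), d a)) with hTPdef
  set TQ := (Finset.range (l + 1)).image (fun a => (r a, c a)) with hTQdef
  set SP := (Finset.range (j + 1)).image (fun a => (ρ a, d a)) with hSPdef
  set SQ := (Finset.range l).image (fun a => (r (a + 1), c a)) with hSQdef
  have memTP : ∀ p ∈ TP, ∃ a < j, p = (ρ (a + 1), d a) := by
    intro p hp; obtain ⟨a, ha, rfl⟩ := Finset.mem_image.1 hp
    exact ⟨a, Finset.mem_range.1 ha, rfl⟩
  have memTQ : ∀ p ∈ TQ, ∃ a ≤ l, p = (r a, c a) := by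
    intro p hp; obtain ⟨a, ha, rfl⟩ := Finset.mem_image.1 hp
    exact ⟨a, Nat.lt_succ_iff.1 (Finset.mem_range.1 ha), rfl⟩
  have memSP : ∀ p ∈ SP, ∃ a ≤ j, p = (ρ a, d a) := by
    intro p hp; obtain ⟨a, ha, rfl⟩ := Finset.mem_image.1 hp
    exact ⟨a, Nat.lt_succ_iff.1 (Finset.mem_range.1 ha), rfl⟩
  have memSQ : ∀ p ∈ SQ, ∃ a < l, p = (r (a + 1), c a) := by
    intro p hp; obtain ⟨a, ha, rfl⟩ := Finset.mem_image.1 hp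
    exact ⟨a, Finset.mem_range.1 ha, rfl⟩
  have inTP : ∀ a, a < j → (ρ (a + 1), d a) ∈ TP := fun a ha =>
    Finset.mem_image.2 ⟨a, Finset.mem_range.2 ha, rfl⟩
  have inTQ : ∀ a ≤ l, (r a, c a) ∈ TQ := fun a ha =>
    Finset.mem_image.2 ⟨a, Finset.mem_range.2 (by omega), rfl⟩
  have inSP : ∀ a ≤ j, (ρ a, d a) ∈ SP := fun a ha =>
    Finset.mem_image.2 ⟨a, Finset.mem_range.2 (by omega), rfl⟩
  have inSQ : ∀ a, a < l → (r (a + 1), c a) ∈ SQ := fun a ha =>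
    Finset.mem_image.2 ⟨a, Finset.mem_range.2 ha, rfl⟩
  set A := TP ∪ TQ with hAdef
  set B := SP ∪ SQ with hBdef
  have hAsub : A ⊆ T := by
    intro p hp
    rcases Finset.mem_union.1 hp with hp | hp
    · obtain ⟨a, ha, rfl⟩ := memTP p hp; exact hPT a ha
    · obtain ⟨a, ha, rfl⟩ := memTQ p hp; exact hQT a ha
  have hBsub : B ⊆ S := by
    intro p hp
    rcases Finset.mem_union.1 hp with hp | hp
    · obtain ⟨a, ha, rfl⟩ := memSP p hp; exact (hPS a ha).2
    · obtain ⟨a, ha, rfl⟩ := memSQ p hp; exact (hQS a ha).2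
  refine swap_lemma hK hS hmin hT A B hAsub hBsub ?_ ?_ ?_ ?_ ?_ ?_ ?_ ?_
    ⟨_, Finset.mem_union.2 (Or.inr (inTQ 0 (by omega)))⟩
  · -- A ∩ S = ∅
    intro p hp hpS
    rcases Finset.mem_union.1 hp with hp | hp
    · obtain ⟨a, ha, rfl⟩ := memTP p hp
      have := row_eq hS hpS (hPS (a + 1) (by omega)).2 rfl
      have : d a = d (a + 1) := congrArg Prod.snd this
      exact hdinj a (by omega) (a + 1) (by omega) (by omega) this
    · obtain ⟨a, ha, rfl⟩ := memTQ p hp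
      rcases Nat.eq_zero_or_pos a with rfl | hpos
      · exact hi0 (hb _ hpS).1
      · have h2 := (hQS (a - 1) (by omega)).2
        have heq : a - 1 + 1 = a := by omega
        have : (r a, c a) = (r (a - 1 + 1), c (a - 1)) :=
          row_eq hS hpS (by simpa using h2) (by simp [heq])
        have : c a = c (a - 1) := congrArg Prod.snd this
        exact hcinj a ha (a - 1) (by omega) (by omega) this
  · -- B ∩ T = ∅
    intro p hp hpT
    rcases Finset.mem_union.1 hp with hp | hp
    · obtain ⟨a, ha, rfl⟩ := memSP p hp
      by_cases h : a < j
      · have := col_eq hT hpT (hPT a h) rfl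
        have : ρ a = ρ (a + 1) := congrArg Prod.fst this
        exact hρinj a ha (a + 1) (by omega) (by omega) this
      · have : a = j := by omega
        rw [this] at hpT
        exact hdf _ hpT rfl
    · obtain ⟨a, ha, rfl⟩ := memSQ p hp
      have := col_eq hT hpT (hQT a (by omega)) rfl
      have h1 : r (a + 1) = r a := congrArg Prod.fst this
      exact hrinj (a + 1) (by omega) a (by omega) (by omega) h1
  · -- cards
    have hdisjA : Disjoint TP TQ := by
      rw [Finset.disjoint_left]
      intro p hp hq
      obtain ⟨a, ha, rfl⟩ := memTP p hp
      obtain ⟨b, hb', he⟩ := memTQ _ hq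
      exact hPQcol a (by omega) b hb' (congrArg Prod.snd he)
    have hdisjB : Disjoint SP SQ := by
      rw [Finset.disjoint_left]
      intro p hp hq
      obtain ⟨a, ha, rfl⟩ := memSP p hp
      obtain ⟨b, hb', he⟩ := memSQ _ hq
      exact hPQcol a ha b (by omega) (congrArg Prod.snd he)
    rw [Finset.card_union_of_disjoint hdisjA, Finset.card_union_of_disjoint hdisjB]
    have c1 : TP.card = j := by
      rw [hTPdef, Finset.card_image_of_injOn, Finset.card_range]
      intro a ha b hb' hab
      simp only [Finset.coe_range, Set.mem_Iio] at ha hb'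
      by_contra hne
      exact hdinj a (by omega) b (by omega) hne (congrArg Prod.snd hab)
    have c2 : TQ.card = l + 1 := by
      rw [hTQdef, Finset.card_image_of_injOn, Finset.card_range]
      intro a ha b hb' hab
      simp only [Finset.coe_range, Set.mem_Iio] at ha hb'
      by_contra hne
      exact hcinj a (by omega) b (by omega) hne (congrArg Prod.snd hab)
    have c3 : SP.card = j + 1 := by
      rw [hSPdef, Finset.card_image_of_injOn, Finset.card_range]
      intro a ha b hb' hab
      simp only [Finset.coe_range, Set.mem_Iio] at ha hb'
      by_contra hne
      exact hdinj a (by omega) b (by omega) hne (congrArg Prod.snd hab)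
    have c4 : SQ.card = l := by
      rw [hSQdef, Finset.card_image_of_injOn, Finset.card_range]
      intro a ha b hb' hab
      simp only [Finset.coe_range, Set.mem_Iio] at ha hb'
      by_contra hne
      exact hcinj a (by omega) b (by omega) hne (congrArg Prod.snd hab)
    omega
  · -- hArow
    intro q hq p hpS hpq
    rcases Finset.mem_union.1 hq with hq | hq
    · obtain ⟨a, ha, rfl⟩ := memTP q hq
      have := row_eq hS hpS (hPS (a + 1) (by omega)).2 (by simpa using hpq)
      rw [this]
      exact Finset.mem_union.2 (Or.inl (inSP (a + 1) (by omega)))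
    · obtain ⟨a, ha, rfl⟩ := memTQ q hq
      rcases Nat.eq_zero_or_pos a with rfl | hpos
      · exact absurd ((hb p hpS).1) (by rw [hpq]; exact hi0)
      · have h2 := (hQS (a - 1) (by omega)).2
        have heq : a - 1 + 1 = a := by omega
        have hre : p = (r (a - 1 + 1), c (a - 1)) :=
          row_eq hS hpS (by simpa using h2) (by simp [hpq, heq])
        rw [hre]
        exact Finset.mem_union.2 (Or.inr (inSQ (a - 1) (by omega)))
  · -- hAcol
    intro q hq p hpS hpq
    rcases Finset.mem_union.1 hq with hq | hq
    · obtain ⟨a, ha, rfl⟩ := memTP q hq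
      have := col_eq hS hpS (hPS a (by omega)).2 (by simpa using hpq)
      rw [this]
      exact Finset.mem_union.2 (Or.inl (inSP a (by omega)))
    · obtain ⟨a, ha, rfl⟩ := memTQ q hq
      by_cases h : a < l
      · have := col_eq hS hpS (hQS a h).2 (by simpa using hpq)
        rw [this]
        exact Finset.mem_union.2 (Or.inr (inSQ a h))
      · have : a = l := by omega
        rw [this] at hpq
        exact absurd ((hb p hpS).2) (by rw [hpq]; simpa using hclt)
  · -- hBrow
    intro q hq p hpT hpq
    rcases Finset.mem_union.1 hq with hq | hq
    · obtain ⟨a, ha, rfl⟩ := memSP q hq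
      rcases Nat.eq_zero_or_pos a with rfl | hpos
      · exact absurd (by simpa using hpq) (hfresh p hpT)
      · have heq : a - 1 + 1 = a := by omega
        have hTm : (ρ (a - 1 + 1), d (a - 1)) ∈ T := hPT (a - 1) (by omega)
        have := row_eq hT hpT hTm (by simp [hpq, heq])
        rw [this]
        exact Finset.mem_union.2 (Or.inl (inTP (a - 1) (by omega)))
    · obtain ⟨a, ha, rfl⟩ := memSQ q hq
      have := row_eq hT hpT (hQT (a + 1) (by omega)) (by simpa using hpq)
      rw [this]
      exact Finset.mem_union.2 (Or.inr (inTQ (a + 1) (by omega)))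
  · -- hBcol
    intro q hq p hpT hpq
    rcases Finset.mem_union.1 hq with hq | hq
    · obtain ⟨a, ha, rfl⟩ := memSP q hq
      by_cases h : a < j
      · have := col_eq hT hpT (hPT a h) (by simpa using hpq)
        rw [this]
        exact Finset.mem_union.2 (Or.inl (inTP a h))
      · have : a = j := by omega
        rw [this] at hpq
        exact absurd (by simpa using hpq) (hdf p hpT)
    · obtain ⟨a, ha, rfl⟩ := memSQ q hq
      have := col_eq hT hpT (hQT a (by omega)) (by simpa using hpq)
      rw [this]
      exact Finset.mem_union.2 (Or.inr (inTQ a (by omega)))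
  · -- compat
    constructor
    · intro p hp q hq hp1 hq1
      have key : ∀ x ∈ (S \ B) ∪ A, K ≤ x.1 → x = (r 0, c 0) := by
        intro x hx hx1
        rcases Finset.mem_union.1 hx with hx | hx
        · exact absurd ((hb x (Finset.mem_sdiff.1 hx).1).1) (by omega)
        · rcases Finset.mem_union.1 hx with hx | hx
          · obtain ⟨a, ha, rfl⟩ := memTP x hx
            exact absurd (hPS (a + 1) (by omega)).1 (by simp; omega)
          · obtain ⟨a, ha, rfl⟩ := memTQ x hx
            rcases Nat.eq_zero_or_pos a with rfl | hpos
            · rfl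
            · have := (hQS (a - 1) (by omega)).1
              rw [(by omega : a - 1 + 1 = a)] at this
              exact absurd this (by simp; omega)
      rw [key p hp hp1, key q hq hq1]
    · intro p hp q hq hp1 hq1
      have key : ∀ x ∈ (S \ B) ∪ A, K ≤ x.2 → x = (r l, c l) := by
        intro x hx hx1
        rcases Finset.mem_union.1 hx with hx | hx
        · exact absurd ((hb x (Finset.mem_sdiff.1 hx).1).2) (by omega)
        · rcases Finset.mem_union.1 hx with hx | hx
          · obtain ⟨a, ha, rfl⟩ := memTP x hx
            exact absurd (dlt a (by omega)) (by simp; omega)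
          · obtain ⟨a, ha, rfl⟩ := memTQ x hx
            by_cases h : a < l
            · exact absurd (cltQ a h) (by simp; omega)
            · have : a = l := by omega
              rw [this]
      rw [key p hp hp1, key q hq hq1]


lemma step_row (hK : t ≤ K) (hS : IsAssign m n t S) (hb : ∀ p ∈ S, p.1 < t ∧ p.2 < t)
    (hmin : ∀ U, IsAssign m n t U → Compat K U → aval X S ≤ aval X U)
    (hT : IsAssign m n t T) {p0 : ℕ × ℕ} (hp0 : p0 ∈ T) (hp0t : ¬ p0.1 < t) :
    ∃ T', IsAssign m n t T' ∧ aval X T' ≤ aval X T ∧ (T' \ S).card < (T \ S).card := by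
  obtain ⟨l, r, c, hr0, hQT, hQS, hcinj, hterm⟩ :=
    walkQ hS hb hT (show (p0.1, p0.2) ∈ T by simpa) hp0t
  have hi0 : ¬ r 0 < t := by rw [hr0]; exact hp0t
  rcases hterm with hclt | ⟨r', hr't, hr'S, hr'f⟩
  · obtain ⟨rs, hrs, hfresh⟩ := exists_fresh_row hT hp0 hp0t
    obtain ⟨j, ρ, d, hρ0, hPS, hPT, hρinj, htermP⟩ := walkP hS hb hT hrs hfresh hp0 hp0t
    have hfresh' : ∀ q ∈ T, q.1 ≠ ρ 0 := by rw [hρ0]; exact hfresh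
    rcases htermP with ⟨s', hs't, hs'T⟩ | hdf
    · exact evenP_swap hK hS hb hmin hT j ρ d hfresh' hPS hPT hρinj s' hs't hs'T
    · exact paired_swap hK hS hb hmin hT l r c hi0 hQT hQS hcinj hclt j ρ d
        hfresh' hPS hPT hρinj hdf
  · exact evenQ_swap hK hS hb hmin hT l r c hi0 hQT hQS hcinj r' hr't hr'S hr'f

lemma flip_flip (T : Finset (ℕ × ℕ)) : (T.image Prod.swap).image Prod.swap = T := by
  rw [Finset.image_image]
  simp

lemma flip_assign (h : IsAssign m n t T) : IsAssign n m t (T.image Prod.swap) := by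
  refine ⟨?_, ?_, ?_⟩
  · rw [Finset.card_image_of_injective _ Prod.swap_injective, h.1]
  · intro p hp
    obtain ⟨q, hq, rfl⟩ := Finset.mem_image.1 hp
    exact ⟨(h.2.1 q hq).2, (h.2.1 q hq).1⟩
  · intro p hp q hq hne
    obtain ⟨p', hp', rfl⟩ := Finset.mem_image.1 hp
    obtain ⟨q', hq', rfl⟩ := Finset.mem_image.1 hq
    have hne' : p' ≠ q' := fun h => hne (by rw [h])
    exact ⟨(h.2.2 p' hp' q' hq' hne').2, (h.2.2 p' hp' q' hq' hne').1⟩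

lemma flip_aval (X : ℕ → ℕ → ℝ) (T : Finset (ℕ × ℕ)) :
    aval (fun i j => X j i) (T.image Prod.swap) = aval X T := by
  unfold aval
  rw [Finset.sum_image (fun p _ q _ h => Prod.swap_injective h)]
  simp

lemma flip_compat {K : ℕ} (h : Compat K T) : Compat K (T.image Prod.swap) := by
  constructor
  · intro p hp q hq h1 h2
    obtain ⟨p', hp', rfl⟩ := Finset.mem_image.1 hp
    obtain ⟨q', hq', rfl⟩ := Finset.mem_image.1 hq
    rw [h.2 p' hp' q' hq' h1 h2]
  · intro p hp q hq h1 h2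
    obtain ⟨p', hp', rfl⟩ := Finset.mem_image.1 hp
    obtain ⟨q', hq', rfl⟩ := Finset.mem_image.1 hq
    rw [h.1 p' hp' q' hq' h1 h2]

lemma flip_sdiff_card (T S : Finset (ℕ × ℕ)) :
    ((T.image Prod.swap) \ (S.image Prod.swap)).card = (T \ S).card := by
  rw [← Finset.image_sdiff _ _ Prod.swap_injective,
    Finset.card_image_of_injective _ Prod.swap_injective]

lemma key_aux : ∀ N m n t K, t ≤ K → ∀ (X : ℕ → ℕ → ℝ) (S : Finset (ℕ × ℕ)),
    IsAssign m n t S → (∀ p ∈ S, p.1 < t ∧ p.2 < t) →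
    (∀ U, IsAssign m n t U → Compat K U → aval X S ≤ aval X U) →
    ∀ T, IsAssign m n t T → (T \ S).card ≤ N → aval X S ≤ aval X T := by
  intro N
  induction N with
  | zero =>
    intro m n t K hK X S hS hb hmin T hT hc
    have hsub : T ⊆ S := by
      intro p hp
      by_contra hns
      have : p ∈ T \ S := Finset.mem_sdiff.2 ⟨hp, hns⟩
      have := Finset.card_pos.2 ⟨p, this⟩
      omega
    have : T = S := Finset.eq_of_subset_of_card_le hsub (by rw [hS.1, hT.1])
    rw [this]
  | succ N ih =>
    intro m n t K hK X S hS hb hmin T hT hc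
    by_cases hall : ∀ p ∈ T, p.1 < t ∧ p.2 < t
    · refine hmin T hT ⟨?_, ?_⟩
      · intro p hp q hq h1 _
        exact absurd (hall p hp).1 (by omega)
      · intro p hp q hq h1 _
        exact absurd (hall p hp).2 (by omega)
    · push_neg at hall
      obtain ⟨p0, hp0, hp0t⟩ := hall
      by_cases h1 : p0.1 < t
      · -- column-out : flip everything
        have h2 : ¬ p0.2 < t := by intro h; exact absurd (hp0t h1) (by omega)
        set X' : ℕ → ℕ → ℝ := fun i j => X j i with hX'
        have havS : aval X' (S.image Prod.swap) = aval X S := flip_aval X S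
        have hminF : ∀ U, IsAssign n m t U → Compat K U →
            aval X' (S.image Prod.swap) ≤ aval X' U := by
          intro U hU hUc
          have h3 : aval X' U = aval X (U.image Prod.swap) := by
            conv_lhs => rw [← flip_flip U]
            rw [flip_aval X (U.image Prod.swap)]
          rw [havS, h3]
          exact hmin _ (by simpa using flip_assign hU) (flip_compat hUc)
        have hbF : ∀ p ∈ S.image Prod.swap, p.1 < t ∧ p.2 < t := by
          intro p hp
          obtain ⟨q, hq, rfl⟩ := Finset.mem_image.1 hp
          exact ⟨(hb q hq).2, (hb q hq).1⟩
        obtain ⟨T', hT', hval, hcard⟩ := step_row (T := T.image Prod.swap) hK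
          (flip_assign hS) hbF hminF (flip_assign hT)
          (Finset.mem_image_of_mem Prod.swap hp0) h2
        rw [flip_sdiff_card] at hcard
        have := ih n m t K hK X' (S.image Prod.swap) (flip_assign hS) hbF hminF T' hT'
          (by omega)
        rw [havS] at this
        calc aval X S ≤ aval X' T' := this
          _ ≤ aval X' (T.image Prod.swap) := hval
          _ = aval X T := flip_aval X T
      · obtain ⟨T', hT', hval, hcard⟩ := step_row hK hS hb hmin hT hp0 h1
        exact le_trans (ih m n t K hK X S hS hb hmin T' hT' (by omega)) hval

/-- The key combinatorial lemma: a block assignment minimal among compatible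
assignments is minimal among all assignments. -/
lemma key (hK : t ≤ K) (hS : IsAssign m n t S) (hb : ∀ p ∈ S, p.1 < t ∧ p.2 < t)
    (hmin : ∀ U, IsAssign m n t U → Compat K U → aval X S ≤ aval X U)
    (T : Finset (ℕ × ℕ)) (hT : IsAssign m n t T) : aval X S ≤ aval X T :=
  key_aux (T \ S).card m n t K hK X S hS hb hmin T hT le_rfl


lemma csInf_attain (f : ℕ → ℝ) (a b : ℕ) (hab : a < b) :
    (∃ j, a ≤ j ∧ j < b ∧ f j = sInf {v | ∃ j', a ≤ j' ∧ j' < b ∧ v = f j'}) ∧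
    (∀ j, a ≤ j → j < b → sInf {v | ∃ j', a ≤ j' ∧ j' < b ∧ v = f j'} ≤ f j) := by
  set s := {v | ∃ j', a ≤ j' ∧ j' < b ∧ v = f j'} with hsdef
  have hs : s = f '' Set.Ico a b := by
    ext v
    simp only [hsdef, Set.mem_setOf_eq, Set.mem_image, Set.mem_Ico]
    constructor
    · rintro ⟨j', h1, h2, rfl⟩; exact ⟨j', ⟨h1, h2⟩, rfl⟩
    · rintro ⟨j', ⟨h1, h2⟩, rfl⟩; exact ⟨j', h1, h2, rfl⟩
  have hfin : s.Finite := hs ▸ (Set.finite_Ico a b).image f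
  have hne : s.Nonempty := ⟨f a, a, le_rfl, hab, rfl⟩
  constructor
  · obtain ⟨j, h1, h2, h3⟩ := hne.csInf_mem hfin
    exact ⟨j, h1, h2, h3.symm⟩
  · intro j h1 h2
    exact csInf_le hfin.bddBelow ⟨j, h1, h2, rfl⟩

lemma csInf_attain2 (f : ℕ → ℕ → ℝ) (a b a' b' : ℕ) (h1 : a < b) (h2 : a' < b') :
    (∃ i j, a ≤ i ∧ i < b ∧ a' ≤ j ∧ j < b' ∧
      f i j = sInf {v | ∃ i' j', a ≤ i' ∧ i' < b ∧ a' ≤ j' ∧ j' < b' ∧ v = f i' j'}) ∧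
    (∀ i j, a ≤ i → i < b → a' ≤ j → j < b' →
      sInf {v | ∃ i' j', a ≤ i' ∧ i' < b ∧ a' ≤ j' ∧ j' < b' ∧ v = f i' j'} ≤ f i j) := by
  set s := {v | ∃ i' j', a ≤ i' ∧ i' < b ∧ a' ≤ j' ∧ j' < b' ∧ v = f i' j'} with hsdef
  have hs : s = (fun p : ℕ × ℕ => f p.1 p.2) '' (Set.Ico a b ×ˢ Set.Ico a' b') := by
    ext v
    simp only [hsdef, Set.mem_setOf_eq, Set.mem_image, Set.mem_prod, Set.mem_Ico, Prod.exists]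
    constructor
    · rintro ⟨i', j', ha, hb', hc, hd, rfl⟩; exact ⟨i', j', ⟨⟨ha, hb'⟩, hc, hd⟩, rfl⟩
    · rintro ⟨i', j', ⟨⟨ha, hb'⟩, hc, hd⟩, rfl⟩; exact ⟨i', j', ha, hb', hc, hd, rfl⟩
  have hfin : s.Finite := hs ▸ (((Set.finite_Ico a b).prod (Set.finite_Ico a' b')).image _)
  have hne : s.Nonempty := ⟨f a a', a, a', le_rfl, h1, le_rfl, h2, rfl⟩
  constructor
  · obtain ⟨i, j, ha, hb', hc, hd, h3⟩ := hne.csInf_mem hfin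
    exact ⟨i, j, ha, hb', hc, hd, h3.symm⟩
  · intro i j ha hb' hc hd
    exact csInf_le hfin.bddBelow ⟨i, j, ha, hb', hc, hd, rfl⟩

end AuxProof

open AuxProof in
/-- For the `k × k` auxiliary matrix `Y = Aux_M(X)` of `X` with respect to its upper-left
`(k−1) × (k−1)` submatrix `M`, and any `t < k`: a `t`-assignment contained in the common
upper-left `t × t` submatrix achieves `min_t(X)` if and only if it achieves `min_t(Y)`. -/
theorem aux_matrix_min_iff (k m n : ℕ) (hk : 0 < k) (hkm : k ≤ m) (hmn : m ≤ n)
    (X : ℕ → ℕ → ℝ) (hX : ∀ i < m, ∀ j < n, 0 ≤ X i j)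
    (Y : ℕ → ℕ → ℝ)
    (hY₁ : ∀ i < k - 1, ∀ j < k - 1, Y i j = X i j)
    (hY₂ : ∀ i < k - 1,
      Y i (k - 1) = sInf {v | ∃ j', k - 1 ≤ j' ∧ j' < n ∧ v = X i j'})
    (hY₃ : ∀ j < k - 1,
      Y (k - 1) j = sInf {v | ∃ i', k - 1 ≤ i' ∧ i' < m ∧ v = X i' j})
    (hY₄ : Y (k - 1) (k - 1) =
      sInf {v | ∃ i' j', k - 1 ≤ i' ∧ i' < m ∧ k - 1 ≤ j' ∧ j' < n ∧ v = X i' j'}) :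
    ∀ t < k, ∀ S : Finset (ℕ × ℕ), (∀ p ∈ S, p.1 < t ∧ p.2 < t) →
      (MinAssign m n t X S ↔ MinAssign k k t Y S) := by

  intro t ht S hSb
  set K := k - 1 with hKdef
  have htK : t ≤ K := by omega
  have hKm : K < m := by omega
  have hKn : K < n := by omega
  have havS : aval Y S = aval X S := by
    unfold aval
    refine Finset.sum_congr rfl fun p hp => ?_
    exact hY₁ p.1 (by have := (hSb p hp).1; omega) p.2 (by have := (hSb p hp).2; omega)
  -- minimizers
  have hrow := fun i => csInf_attain (fun j' => X i j') K n hKn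
  have hcol := fun j => csInf_attain (fun i' => X i' j) K m hKm
  have hcorn := csInf_attain2 X K m K n hKm hKn
  set jm : ℕ → ℕ := fun i => Classical.choose (hrow i).1 with hjmdef
  set im : ℕ → ℕ := fun j => Classical.choose (hcol j).1 with himdef
  have hjm : ∀ i, K ≤ jm i ∧ jm i < n ∧ X i (jm i) =
      sInf {v | ∃ j', K ≤ j' ∧ j' < n ∧ v = X i j'} := fun i =>
    Classical.choose_spec (hrow i).1
  have him : ∀ j, K ≤ im j ∧ im j < m ∧ X (im j) j =
      sInf {v | ∃ i', K ≤ i' ∧ i' < m ∧ v = X i' j} := fun j =>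
    Classical.choose_spec (hcol j).1
  obtain ⟨ic, jc, hic1, hic2, hjc1, hjc2, hcornval⟩ := hcorn.1
  constructor
  · -- X-minimal ⇒ Y-minimal
    rintro ⟨hSX, hSmin⟩
    refine ⟨⟨hSX.1, fun p hp => ⟨by have := (hSb p hp).1; omega,
      by have := (hSb p hp).2; omega⟩, hSX.2.2⟩, ?_⟩
    intro T hTY
    classical
    set g : ℕ × ℕ → ℕ × ℕ := fun p =>
      if p.1 < K then (if p.2 < K then p else (p.1, jm p.1))
      else (if p.2 < K then (im p.2, p.2) else (ic, jc)) with hgdef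
    have hgspec : ∀ p ∈ T, ((g p).1 < m ∧ (g p).2 < n) ∧
        X (g p).1 (g p).2 = Y p.1 p.2 ∧
        (p.1 < K → (g p).1 = p.1) ∧ (¬ p.1 < K → K ≤ (g p).1) ∧
        (p.2 < K → (g p).2 = p.2) ∧ (¬ p.2 < K → K ≤ (g p).2) := by
      intro p hp
      have hp1 : p.1 < k := (hTY.2.1 p hp).1
      have hp2 : p.2 < k := (hTY.2.1 p hp).2
      by_cases c1 : p.1 < K <;> by_cases c2 : p.2 < K
      · have hgp : g p = p := by simp [hgdef, c1, c2]
        rw [hgp]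
        exact ⟨⟨by omega, by omega⟩, (hY₁ p.1 c1 p.2 c2).symm,
          fun _ => rfl, fun h => absurd c1 h, fun _ => rfl, fun h => absurd c2 h⟩
      · have hp2K : p.2 = K := by omega
        have hgp : g p = (p.1, jm p.1) := by simp [hgdef, c1, c2]
        rw [hgp]
        refine ⟨⟨by omega, (hjm p.1).2.1⟩, ?_, fun _ => rfl, fun h => absurd c1 h,
          fun h => absurd h c2, fun _ => (hjm p.1).1⟩
        rw [hp2K, hY₂ p.1 c1]
        exact (hjm p.1).2.2
      · have hp1K : p.1 = K := by omega
        have hgp : g p = (im p.2, p.2) := by simp [hgdef, c1, c2]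
        rw [hgp]
        refine ⟨⟨(him p.2).2.1, by omega⟩, ?_, fun h => absurd h c1,
          fun _ => (him p.2).1, fun _ => rfl, fun h => absurd c2 h⟩
        rw [hp1K, hY₃ p.2 c2]
        exact (him p.2).2.2
      · have hp1K : p.1 = K := by omega
        have hp2K : p.2 = K := by omega
        have hgp : g p = (ic, jc) := by simp [hgdef, c1, c2]
        rw [hgp]
        refine ⟨⟨hic2, hjc2⟩, ?_, fun h => absurd h c1, fun _ => hic1,
          fun h => absurd h c2, fun _ => hjc1⟩
        rw [hp1K, hp2K, hY₄]
        exact hcornval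
    have hgrow : ∀ p ∈ T, ∀ q ∈ T, p ≠ q → (g p).1 ≠ (g q).1 := by
      intro p hp q hq hne
      have h1 : p.1 ≠ q.1 := (hTY.2.2 p hp q hq hne).1
      have sp := hgspec p hp
      have sq := hgspec q hq
      by_cases a : p.1 < K <;> by_cases b : q.1 < K
      · rw [sp.2.2.1 a, sq.2.2.1 b]; exact h1
      · rw [sp.2.2.1 a]; have := sq.2.2.2.1 b; omega
      · rw [sq.2.2.1 b]; have := sp.2.2.2.1 a; omega
      · have hpk : p.1 < k := (hTY.2.1 p hp).1
        have hqk : q.1 < k := (hTY.2.1 q hq).1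
        exact absurd (by omega : p.1 = q.1) h1
    have hgcol : ∀ p ∈ T, ∀ q ∈ T, p ≠ q → (g p).2 ≠ (g q).2 := by
      intro p hp q hq hne
      have h1 : p.2 ≠ q.2 := (hTY.2.2 p hp q hq hne).2
      have sp := hgspec p hp
      have sq := hgspec q hq
      by_cases a : p.2 < K <;> by_cases b : q.2 < K
      · rw [sp.2.2.2.2.1 a, sq.2.2.2.2.1 b]; exact h1
      · rw [sp.2.2.2.2.1 a]; have := sq.2.2.2.2.2 b; omega
      · rw [sq.2.2.2.2.1 b]; have := sp.2.2.2.2.2 a; omega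
      · have hpk : p.2 < k := (hTY.2.1 p hp).2
        have hqk : q.2 < k := (hTY.2.1 q hq).2
        exact absurd (by omega : p.2 = q.2) h1
    have hinj : ∀ p ∈ T, ∀ q ∈ T, g p = g q → p = q := by
      intro p hp q hq he
      by_contra hne
      exact hgrow p hp q hq hne (congrArg Prod.fst he)
    have hTX : IsAssign m n t (T.image g) := by
      refine ⟨?_, ?_, ?_⟩
      · rw [Finset.card_image_of_injOn fun p hp q hq he => hinj p hp q hq he, hTY.1]
      · intro p hp
        obtain ⟨q, hq, rfl⟩ := Finset.mem_image.1 hp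
        exact (hgspec q hq).1
      · intro p hp q hq hne
        obtain ⟨p', hp', rfl⟩ := Finset.mem_image.1 hp
        obtain ⟨q', hq', rfl⟩ := Finset.mem_image.1 hq
        have hne' : p' ≠ q' := fun h => hne (by rw [h])
        exact ⟨hgrow p' hp' q' hq' hne', hgcol p' hp' q' hq' hne'⟩
    have hval : aval X (T.image g) = aval Y T := by
      unfold aval
      rw [Finset.sum_image hinj]
      exact Finset.sum_congr rfl fun p hp => (hgspec p hp).2.1
    calc aval Y S = aval X S := havS
      _ ≤ aval X (T.image g) := hSmin _ hTX
      _ = aval Y T := hval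
  · -- Y-minimal ⇒ X-minimal
    rintro ⟨hSY, hYmin⟩
    have hSX : IsAssign m n t S := ⟨hSY.1, fun p hp =>
      ⟨by have := (hSb p hp).1; omega, by have := (hSb p hp).2; omega⟩, hSY.2.2⟩
    have hmin : ∀ U, IsAssign m n t U → Compat K U → aval X S ≤ aval X U := by
      intro U hU hUc
      set f : ℕ × ℕ → ℕ × ℕ := fun p => (min p.1 K, min p.2 K) with hfdef
      have hfrow : ∀ p ∈ U, ∀ q ∈ U, p ≠ q → (f p).1 ≠ (f q).1 := by
        intro p hp q hq hne he
        simp only [hfdef] at he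
        have h1 : p.1 ≠ q.1 := (hU.2.2 p hp q hq hne).1
        by_cases a : p.1 < K <;> by_cases b : q.1 < K
        · rw [min_eq_left a.le, min_eq_left b.le] at he; exact h1 he
        · rw [min_eq_left a.le, min_eq_right (by omega : K ≤ q.1)] at he; omega
        · rw [min_eq_right (by omega : K ≤ p.1), min_eq_left b.le] at he; omega
        · exact hne (hUc.1 p hp q hq (by omega) (by omega))
      have hfcol : ∀ p ∈ U, ∀ q ∈ U, p ≠ q → (f p).2 ≠ (f q).2 := by
        intro p hp q hq hne he
        simp only [hfdef] at he
        have h1 : p.2 ≠ q.2 := (hU.2.2 p hp q hq hne).2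
        by_cases a : p.2 < K <;> by_cases b : q.2 < K
        · rw [min_eq_left a.le, min_eq_left b.le] at he; exact h1 he
        · rw [min_eq_left a.le, min_eq_right (by omega : K ≤ q.2)] at he; omega
        · rw [min_eq_right (by omega : K ≤ p.2), min_eq_left b.le] at he; omega
        · exact hne (hUc.2 p hp q hq (by omega) (by omega))
      have hinj : ∀ p ∈ U, ∀ q ∈ U, f p = f q → p = q := by
        intro p hp q hq he
        by_contra hne
        exact hfrow p hp q hq hne (congrArg Prod.fst he)
      have hfY : IsAssign k k t (U.image f) := by
        refine ⟨?_, ?_, ?_⟩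
        · rw [Finset.card_image_of_injOn fun p hp q hq he => hinj p hp q hq he, hU.1]
        · intro p hp
          obtain ⟨q, hq, rfl⟩ := Finset.mem_image.1 hp
          refine ⟨?_, ?_⟩ <;> simp only [hfdef] <;>
            [exact lt_of_le_of_lt (min_le_right _ _) (by omega);
             exact lt_of_le_of_lt (min_le_right _ _) (by omega)]
        · intro p hp q hq hne
          obtain ⟨p', hp', rfl⟩ := Finset.mem_image.1 hp
          obtain ⟨q', hq', rfl⟩ := Finset.mem_image.1 hq
          have hne' : p' ≠ q' := fun h => hne (by rw [h])
          exact ⟨hfrow p' hp' q' hq' hne', hfcol p' hp' q' hq' hne'⟩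
      have hle : aval Y (U.image f) ≤ aval X U := by
        unfold aval
        rw [Finset.sum_image hinj]
        refine Finset.sum_le_sum fun p hp => ?_
        have h1 : p.1 < m := (hU.2.1 p hp).1
        have h2 : p.2 < n := (hU.2.1 p hp).2
        simp only [hfdef]
        by_cases a : p.1 < K <;> by_cases b : p.2 < K
        · rw [min_eq_left a.le, min_eq_left b.le, hY₁ p.1 a p.2 b]
        · rw [min_eq_left a.le, min_eq_right (by omega : K ≤ p.2), hY₂ p.1 a]
          exact (hrow p.1).2 p.2 (by omega) h2
        · rw [min_eq_right (by omega : K ≤ p.1), min_eq_left b.le, hY₃ p.2 b]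
          exact (hcol p.2).2 p.1 (by omega) h1
        · rw [min_eq_right (by omega : K ≤ p.1), min_eq_right (by omega : K ≤ p.2), hY₄]
          exact hcorn.2 p.1 p.2 (by omega) h1 (by omega) h2
      calc aval X S = aval Y S := havS.symm
        _ ≤ aval Y (U.image f) := hYmin _ hfY
        _ ≤ aval X U := hle
    exact ⟨hSX, fun T hT => key htK hSX hSb hmin T hT⟩
end

section
/- Let k ≤ m ≤ n be positive integers, r_1,…,r_m and c_1,…,c_n positive reals. Then F(k,r,c) = ∑ (−1)^{|I'|−|I|+|J'|−|J|} / ((∑_{i∉I} r_i)(∑_{j∉J} c_j)), where the sum is over quadruples of subsets I ⊆ I' ⊊ {1,…,m} and J ⊆ J' ⊊ {1,…,n} with |I'| + |J'| < k. -/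
/-!
Swapping the order of summation, the right-hand side becomes the sum over `I, J` of
`1 / ((∑_{i∉I} r i)(∑_{j∉J} c j))` times `∑ (−1)^{|A|+|B|}` over `A ⊆ Iᶜ`, `B ⊆ Jᶜ` with
`|I ∪ A| + |J ∪ B| < k`. Since `k ≤ m ≤ n`, the sets `I ∪ A` and `J ∪ B` are then automatically
proper, so `(A, B)` ranges over the subsets of `Iᶜ ⊕ Jᶜ` of size at most `t = k − 1 − |I| − |J|`,
and the truncated alternating sum `∑_{s ≤ t} (−1)^s C(N, s) = (−1)^t C(N − 1, t)` is exactly the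
coefficient in `F`.
-/

/-- The conjectured formula `F(k,r,c)` for the expected minimum `k`-assignment of a random
exponential matrix with rank 1 rate matrix `(r i * c j)`: the sum over proper subsets
`I ⊊ {1,…,m}` and `J ⊊ {1,…,n}` with `|I| + |J| < k` of
`(−1)^{k−1−|I|−|J|} · C(m+n−1−|I|−|J|, k−1−|I|−|J|) / ((∑_{i∉I} r i)(∑_{j∉J} c j))`. -/
noncomputable def F (k : ℕ) {m n : ℕ} (r : Fin m → ℝ) (c : Fin n → ℝ) : ℝ :=
  ∑ I : Finset (Fin m), ∑ J : Finset (Fin n),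
    if I ≠ Finset.univ ∧ J ≠ Finset.univ ∧ I.card + J.card < k then
      (-1 : ℝ) ^ (k - 1 - I.card - J.card) *
        ((m + n - 1 - I.card - J.card).choose (k - 1 - I.card - J.card) : ℝ) /
        ((∑ i ∈ Iᶜ, r i) * (∑ j ∈ Jᶜ, c j))
    else 0

namespace Finset

variable {α β M : Type*} [AddCommMonoid M]

theorem sum_powerset_disjSum {S : Finset α} {T : Finset β} (g : Finset (α ⊕ β) → M) :
    ∑ U ∈ (S.disjSum T).powerset, g U = ∑ A ∈ S.powerset, ∑ B ∈ T.powerset, g (A.disjSum B) := by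
  rw [← sum_product']
  refine sum_nbij' (fun U ↦ (U.toLeft, U.toRight)) (fun p ↦ p.1.disjSum p.2) ?_ ?_ ?_ ?_ ?_
  · intro U hU
    simpa [subset_disjSum] using hU
  · rintro ⟨A, B⟩ h
    simpa [disjSum_subset] using h
  · intro U _
    exact toLeft_disjSum_toRight
  · rintro ⟨A, B⟩ _
    simp
  · intro U _
    rw [toLeft_disjSum_toRight]

theorem sum_powerset_filter_card_le_neg_one_pow {R : Type*} [CommRing R] {W : Finset α}
    (hW : W.Nonempty) (t : ℕ) :
    ∑ U ∈ W.powerset with #U ≤ t, (-1 : R) ^ #U = (-1) ^ t * ((#W - 1).choose t : R) := by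
  obtain ⟨N, hN⟩ : ∃ N, #W = N + 1 := Nat.exists_eq_add_one.2 hW.card_pos
  have key := congrArg (Int.cast : ℤ → R)
    (Int.alternating_sum_range_choose_eq_choose (n := N) (m := t))
  push_cast at key
  rw [hN, Nat.add_sub_cancel, ← key, sum_filter,
    sum_powerset_apply_card (fun s ↦ if s ≤ t then (-1 : R) ^ s else 0), hN]
  calc _ = ∑ s ∈ range (N + 2 + t), (N + 1).choose s • (if s ≤ t then (-1 : R) ^ s else 0) :=
        sum_subset (range_subset_range.2 (by omega)) fun s _ hs ↦ by
          rw [Nat.choose_eq_zero_of_lt (by rw [mem_range] at hs; omega), zero_smul]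
    _ = ∑ s ∈ range (t + 1), (N + 1).choose s • (if s ≤ t then (-1 : R) ^ s else 0) :=
        (sum_subset (range_subset_range.2 (by omega)) fun s _ hs ↦ by
          rw [if_neg (by rw [mem_range] at hs; omega), smul_zero]).symm
    _ = _ := sum_congr rfl fun s hs ↦ by
          rw [if_pos (Nat.lt_succ_iff.1 (mem_range.1 hs)), nsmul_eq_mul, mul_comm]

variable [Fintype α] [DecidableEq α] [Fintype β] [DecidableEq β]

theorem sum_sum_powerset_eq_sum_sum_powerset_compl (g : Finset α → Finset α → M) :
    ∑ I', ∑ I ∈ I'.powerset, g I' I = ∑ I, ∑ A ∈ Iᶜ.powerset, g (I ∪ A) I := by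
  rw [sum_comm' (t' := univ) (s' := fun I ↦ Icc I univ) (by simp)]
  refine sum_congr rfl fun I _ ↦ ?_
  rw [Icc_eq_image_powerset (subset_univ I), ← compl_eq_univ_sdiff, sum_image]
  intro A hA B hB hAB
  have hdisj (X : Finset α) (hX : X ∈ Iᶜ.powerset) : Disjoint I X :=
    disjoint_of_subset_right (mem_powerset.1 hX) disjoint_compl_right
  rw [← union_sdiff_cancel_left (hdisj A hA), ← union_sdiff_cancel_left (hdisj B hB)]
  exact congrArg (· \ I) hAB

theorem sum_sum_powerset_eq_sum_sum_powerset_compl₂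
    (f : Finset α → Finset β → Finset α → Finset β → M) :
    ∑ I', ∑ J', ∑ I ∈ I'.powerset, ∑ J ∈ J'.powerset, f I' J' I J =
      ∑ I, ∑ J, ∑ A ∈ Iᶜ.powerset, ∑ B ∈ Jᶜ.powerset, f (I ∪ A) (J ∪ B) I J := by
  calc _ = ∑ I', ∑ I ∈ I'.powerset, ∑ J', ∑ J ∈ J'.powerset, f I' J' I J :=
        sum_congr rfl fun _ _ ↦ sum_comm
    _ = ∑ I, ∑ A ∈ Iᶜ.powerset, ∑ J, ∑ B ∈ Jᶜ.powerset, f (I ∪ A) (J ∪ B) I J := by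
        simp_rw [sum_sum_powerset_eq_sum_sum_powerset_compl (M := M) (α := β)]
        exact sum_sum_powerset_eq_sum_sum_powerset_compl _
    _ = _ := sum_congr rfl fun _ _ ↦ sum_comm

theorem sum_powerset_compl₂_ite_neg_one_pow {R : Type*} [CommRing R] {k : ℕ}
    (hα : k ≤ Fintype.card α) (hβ : k ≤ Fintype.card β) (I : Finset α) (J : Finset β) :
    ∑ A ∈ Iᶜ.powerset, ∑ B ∈ Jᶜ.powerset,
        (if I ∪ A ≠ univ ∧ J ∪ B ≠ univ ∧ #(I ∪ A) + #(J ∪ B) < k then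
          (-1 : R) ^ (#(I ∪ A) - #I + (#(J ∪ B) - #J)) else 0) =
      if I ≠ univ ∧ J ≠ univ ∧ #I + #J < k then
        (-1 : R) ^ (k - 1 - #I - #J) *
          ((Fintype.card α + Fintype.card β - 1 - #I - #J).choose (k - 1 - #I - #J) : R)
      else 0 := by
  have hsummand : ∀ A ∈ Iᶜ.powerset, ∀ B ∈ Jᶜ.powerset,
      (if I ∪ A ≠ univ ∧ J ∪ B ≠ univ ∧ #(I ∪ A) + #(J ∪ B) < k then
        (-1 : R) ^ (#(I ∪ A) - #I + (#(J ∪ B) - #J)) else 0) =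
      if #I + #J + #(A.disjSum B) < k then (-1 : R) ^ #(A.disjSum B) else 0 := by
    intro A hA B hB
    have hIA : #(I ∪ A) = #I + #A := card_union_of_disjoint
      (disjoint_of_subset_right (mem_powerset.1 hA) disjoint_compl_right)
    have hJB : #(J ∪ B) = #J + #B := card_union_of_disjoint
      (disjoint_of_subset_right (mem_powerset.1 hB) disjoint_compl_right)
    rw [hIA, hJB, card_disjSum, Nat.add_sub_cancel_left, Nat.add_sub_cancel_left]
    refine if_congr ⟨fun h ↦ by omega, fun h ↦ ⟨?_, ?_, by omega⟩⟩ rfl rfl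
    all_goals
      refine (card_lt_iff_ne_univ _).1 ?_
      omega
  rw [sum_congr rfl fun A hA ↦ sum_congr rfl fun B hB ↦ hsummand A hA B hB,
    ← sum_powerset_disjSum (fun U ↦ if #I + #J + #U < k then (-1 : R) ^ #U else 0)]
  have hI := card_le_univ I
  have hJ := card_le_univ J
  by_cases hIJ : #I + #J < k
  · have hcard : #(Iᶜ.disjSum Jᶜ) = Fintype.card α - #I + (Fintype.card β - #J) := by
      rw [card_disjSum, card_compl, card_compl]
    rw [if_pos ⟨(card_lt_iff_ne_univ _).1 (by omega), (card_lt_iff_ne_univ _).1 (by omega), hIJ⟩,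
      ← sum_filter, filter_congr (q := fun U ↦ #U ≤ k - 1 - #I - #J) (fun U _ ↦ by omega),
      sum_powerset_filter_card_le_neg_one_pow (card_pos.1 (by omega)), hcard]
    congr 3
    omega
  · rw [if_neg (by tauto)]
    exact sum_eq_zero fun U _ ↦ if_neg (by omega)

end Finset

open Finset in
theorem F_incl_excl_general (k m n : ℕ) (hkm : k ≤ m) (hmn : m ≤ n)
    (r : Fin m → ℝ) (c : Fin n → ℝ) :
    F k r c =
      ∑ I' : Finset (Fin m), ∑ J' : Finset (Fin n),
        ∑ I ∈ I'.powerset, ∑ J ∈ J'.powerset,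
          if I' ≠ Finset.univ ∧ J' ≠ Finset.univ ∧ I'.card + J'.card < k then
            (-1 : ℝ) ^ (I'.card - I.card + (J'.card - J.card)) /
              ((∑ i ∈ Iᶜ, r i) * (∑ j ∈ Jᶜ, c j))
          else 0 := by
  rw [sum_sum_powerset_eq_sum_sum_powerset_compl₂, F]
  refine sum_congr rfl fun I _ ↦ sum_congr rfl fun J _ ↦ ?_
  have hcoeff := congrArg (· / ((∑ i ∈ Iᶜ, r i) * ∑ j ∈ Jᶜ, c j))
    (sum_powerset_compl₂_ite_neg_one_pow (R := ℝ) (k := k)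
      (by simpa using hkm) (by simpa using hkm.trans hmn) I J)
  simp only [sum_div, ite_div, zero_div, Fintype.card_fin] at hcoeff
  exact hcoeff.symm

/-- Proposition (inclusion–exclusion form of `F`): `F(k,r,c)` equals the sum over
`I ⊆ I' ⊊ {1,…,m}` and `J ⊆ J' ⊊ {1,…,n}` with `|I'| + |J'| < k` of
`(−1)^{|I'|−|I|+|J'|−|J|} / ((∑_{i∉I} r i)(∑_{j∉J} c j))`. -/
theorem F_incl_excl (k m n : ℕ) (hk : 0 < k) (hkm : k ≤ m) (hmn : m ≤ n)
    (r : Fin m → ℝ) (c : Fin n → ℝ) (hr : ∀ i, 0 < r i) (hc : ∀ j, 0 < c j) :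
    F k r c =
      ∑ I' : Finset (Fin m), ∑ J' : Finset (Fin n),
        ∑ I ∈ I'.powerset, ∑ J ∈ J'.powerset,
          if I' ≠ Finset.univ ∧ J' ≠ Finset.univ ∧ I'.card + J'.card < k then
            (-1 : ℝ) ^ (I'.card - I.card + (J'.card - J.card)) /
              ((∑ i ∈ Iᶜ, r i) * (∑ j ∈ Jᶜ, c j))
          else 0 :=
  F_incl_excl_general k m n hkm hmn r c
end

section
/- Let k ≤ m ≤ n be positive integers, r_1,…,r_m and c_1,…,c_n positive reals. Then F(k,r,c) = ∑_{I ⊊ {1,…,m}, J ⊊ {1,…,n}, |I|+|J| < k} Pr(r,I)·Pr(c,J) / ((∑_{i∉I} r_i)(∑_{j∉J} c_j)). In particular, F(k,r,c) > 0. -/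
/-- `Pr(r, (i_1, …, i_k))`: the urn probability
`∏_{s=1}^{k} r_{i_s} / (R − ∑_{u<s} r_{i_u})` for a sequence `ι` of (distinct) indices. -/
noncomputable def prSeq {m k : ℕ} (r : Fin m → ℝ) (ι : Fin k → Fin m) : ℝ :=
  ∏ s : Fin k,
    r (ι s) / ((∑ i, r i) - ∑ u ∈ Finset.univ.filter fun u => u < s, r (ι u))

/-- `Pr(r, I)`: the sum of `Pr(r, (i_1, …, i_t))` over all orderings of the set `I`. -/
noncomputable def prSet {m : ℕ} (r : Fin m → ℝ) (I : Finset (Fin m)) : ℝ :=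
  ∑ ι : Fin I.card → Fin m,
    if Function.Injective ι ∧ Finset.univ.image ι = I then prSeq r ι else 0

/-!
Write `ρ(T) = ∑_{i ∉ T} r i`. Conditioning on the last index drawn gives
`Pr(r, I) = ∑_{i ∈ I} Pr(r, I ∖ {i}) · r i / ρ(I ∖ {i})`, and `ρ(I) ∑_{T ⊆ I} (-1)^{|I|+|T|} / ρ(T)`
satisfies the same recursion, because `∑_{i ∈ I ∖ T} r i = ρ(T) - ρ(I)` and
`∑_{T ⊆ I} (-1)^{|T|} = 0` for nonempty `I`. Hence
`Pr(r, I) / ρ(I) = ∑_{T ⊆ I} (-1)^{|I|+|T|} / ρ(T)`.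

Substituting this for both factors and exchanging the order of summation, the coefficient of
`1 / (ρ(T) γ(U))` is the alternating sum over pairs `(I, J) ⊇ (T, U)` with `|I| + |J| < k`. Read as
subsets of the disjoint union of the two index sets, these are the supersets of `T ⊔ U` of size
less than `k`, so the coefficient is the partial alternating binomial sum
`∑_{s < k-|T|-|U|} (-1)^s C(m+n-|T|-|U|, s) = (-1)^{k-1-|T|-|U|} C(m+n-1-|T|-|U|, k-1-|T|-|U|)`.
As `k ≤ m ≤ n`, the conditions `I ≠ univ`, `J ≠ univ` follow from `|I| + |J| < k`. Every term of
the probabilistic form is nonnegative and the `(∅, ∅)` term is positive.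
-/

open Finset

lemma Fin.sum_filter_lt_castSucc {M : Type*} [AddCommMonoid M] {t : ℕ} (f : Fin (t + 1) → M)
    (s : Fin t) :
    ∑ u ∈ univ.filter (· < s.castSucc), f u = ∑ u ∈ univ.filter (· < s), f u.castSucc := by
  simp only [sum_filter, Fin.sum_univ_castSucc, Fin.castSucc_lt_castSucc_iff,
    (Fin.castSucc_lt_last s).not_gt, if_false, add_zero]

lemma Fin.sum_filter_lt_last {M : Type*} [AddCommMonoid M] {t : ℕ} (f : Fin (t + 1) → M) :
    ∑ u ∈ univ.filter (· < Fin.last t), f u = ∑ u : Fin t, f u.castSucc := by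
  simp [sum_filter, Fin.sum_univ_castSucc, Fin.castSucc_lt_last]

lemma Fin.image_snoc {α : Type*} [DecidableEq α] {t : ℕ} (ι : Fin t → α) (a : α) :
    univ.image (Fin.snoc ι a : Fin (t + 1) → α) = insert a (univ.image ι) := by
  ext x
  simp [Fin.exists_fin_succ', eq_comm, or_comm]

section WeightSums

variable {α : Type*} [Fintype α] [DecidableEq α]

lemma sum_compl_eq_sub (r : α → ℝ) (s : Finset α) :
    ∑ i ∈ sᶜ, r i = ∑ i, r i - ∑ i ∈ s, r i :=
  eq_sub_of_add_eq (sum_compl_add_sum s r)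

lemma sum_compl_pos {r : α → ℝ} (hr : ∀ i, 0 < r i) {T : Finset α} (hT : T ≠ univ) :
    0 < ∑ j ∈ Tᶜ, r j :=
  sum_pos (fun j _ => hr j) (by rwa [← compl_ne_univ_iff_nonempty, compl_compl])

lemma sum_powerset_neg_one_pow_card_div_eq {r : α → ℝ} {I : Finset α} (hI : I.Nonempty)
    (h : ∀ T ⊆ I, ∑ j ∈ Tᶜ, r j ≠ 0) :
    (∑ j ∈ Iᶜ, r j) * ∑ T ∈ I.powerset, (-1) ^ #T / ∑ j ∈ Tᶜ, r j =
      -∑ i ∈ I, r i * ∑ T ∈ (I.erase i).powerset, (-1) ^ #T / ∑ j ∈ Tᶜ, r j := by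
  have hswap : ∑ i ∈ I, r i * ∑ T ∈ (I.erase i).powerset, (-1) ^ #T / ∑ j ∈ Tᶜ, r j =
      ∑ T ∈ I.powerset, (∑ i ∈ I \ T, r i) * ((-1) ^ #T / ∑ j ∈ Tᶜ, r j) := by
    simp_rw [mul_sum, sum_mul]
    exact sum_comm' fun i T => by simp only [mem_powerset, subset_erase, mem_sdiff]; tauto
  have hdiff : ∀ T ∈ I.powerset,
      (∑ i ∈ I \ T, r i) * ((-1) ^ #T / ∑ j ∈ Tᶜ, r j) =
        (-1) ^ #T - (∑ j ∈ Iᶜ, r j) * ((-1) ^ #T / ∑ j ∈ Tᶜ, r j) := by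
    intro T hT
    have hTI := mem_powerset.1 hT
    have hsd : ∑ i ∈ I \ T, r i = ∑ j ∈ Tᶜ, r j - ∑ j ∈ Iᶜ, r j := by
      rw [sum_sdiff_eq_sub hTI, sum_compl_eq_sub, sum_compl_eq_sub]
      ring
    rw [hsd, sub_mul, mul_div_cancel₀ _ (h T hTI)]
  have halt : ∑ T ∈ I.powerset, (-1 : ℝ) ^ #T = 0 := by
    exact_mod_cast sum_powerset_neg_one_pow_card_of_nonempty hI
  rw [hswap, sum_congr rfl hdiff, sum_sub_distrib, halt, ← mul_sum, zero_sub, neg_neg]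

end WeightSums

lemma prSeq_snoc {m t : ℕ} (r : Fin m → ℝ) (ι : Fin t → Fin m) (i : Fin m) :
    prSeq r (Fin.snoc ι i : Fin (t + 1) → Fin m) =
      prSeq r ι * (r i / ((∑ j, r j) - ∑ u, r (ι u))) := by
  simp only [prSeq, Fin.prod_univ_castSucc, Fin.sum_filter_lt_castSucc, Fin.sum_filter_lt_last,
    Fin.snoc_castSucc, Fin.snoc_last]

lemma injective_snoc_and_image_eq_iff {m t : ℕ} {ι : Fin t → Fin m} {i : Fin m}
    {I : Finset (Fin m)} :
    (Function.Injective (Fin.snoc ι i : Fin (t + 1) → Fin m) ∧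
        univ.image (Fin.snoc ι i : Fin (t + 1) → Fin m) = I) ↔
      i ∈ I ∧ Function.Injective ι ∧ univ.image ι = I.erase i := by
  rw [Fin.snoc_injective_iff, Fin.image_snoc]
  constructor
  · rintro ⟨⟨hι, hi⟩, rfl⟩
    refine ⟨mem_insert_self _ _, hι, (erase_insert ?_).symm⟩
    simpa using hi
  · rintro ⟨hi, hι, himg⟩
    refine ⟨⟨hι, ?_⟩, by rw [himg, insert_erase hi]⟩
    rintro ⟨u, rfl⟩
    simpa [himg] using mem_image_of_mem ι (mem_univ u)

lemma prSet_eq_sum_of_card {m : ℕ} (r : Fin m → ℝ) {I : Finset (Fin m)} {t : ℕ} (h : #I = t) :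
    prSet r I = ∑ ι : Fin t → Fin m,
      if Function.Injective ι ∧ univ.image ι = I then prSeq r ι else 0 := by
  subst h
  rfl

lemma prSet_empty {m : ℕ} (r : Fin m → ℝ) : prSet r ∅ = 1 := by
  rw [prSet_eq_sum_of_card r card_empty]
  simp [prSeq, Function.injective_of_subsingleton, univ_eq_empty]

lemma prSet_eq_sum_erase {m : ℕ} (r : Fin m → ℝ) {I : Finset (Fin m)} (hI : I.Nonempty) :
    prSet r I = ∑ i ∈ I, prSet r (I.erase i) * (r i / ∑ j ∈ (I.erase i)ᶜ, r j) := by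
  obtain ⟨t, ht⟩ : ∃ t, #I = t + 1 := Nat.exists_eq_add_one.2 hI.card_pos
  calc prSet r I
      = ∑ i, ∑ ι : Fin t → Fin m,
          if Function.Injective (Fin.snoc ι i : Fin (t + 1) → Fin m) ∧
              univ.image (Fin.snoc ι i : Fin (t + 1) → Fin m) = I
          then prSeq r (Fin.snoc ι i : Fin (t + 1) → Fin m) else 0 := by
        rw [prSet_eq_sum_of_card r ht, ← (Fin.snocEquiv fun _ => Fin m).sum_comp,
          Fintype.sum_prod_type]
        rfl
    _ = ∑ i, if i ∈ I then prSet r (I.erase i) * (r i / ∑ j ∈ (I.erase i)ᶜ, r j) else 0 := by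
        refine sum_congr rfl fun i _ => ?_
        simp only [injective_snoc_and_image_eq_iff]
        split_ifs with hi
        · have hcard : #(I.erase i) = t := by rw [card_erase_of_mem hi, ht, Nat.add_sub_cancel]
          simp only [prSet_eq_sum_of_card r hcard, sum_mul, ite_mul, zero_mul, hi, true_and]
          refine sum_congr rfl fun ι _ => ?_
          split_ifs with hι
          · rw [prSeq_snoc, sum_compl_eq_sub, ← hι.2, sum_image fun u _ v _ h => hι.1 h]
          · rfl
        · simp [hi]
    _ = _ := by rw [sum_ite_mem, univ_inter]

lemma prSet_pos {m : ℕ} {r : Fin m → ℝ} (hr : ∀ i, 0 < r i) (I : Finset (Fin m)) :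
    0 < prSet r I := by
  induction I using Finset.strongInduction with
  | H I ih =>
    rcases I.eq_empty_or_nonempty with rfl | hI
    · simp [prSet_empty]
    · rw [prSet_eq_sum_erase r hI]
      refine sum_pos (fun i hi => mul_pos (ih _ (erase_ssubset hi)) (div_pos (hr i) ?_)) hI
      exact sum_pos (fun j _ => hr j) ⟨i, by simp⟩

lemma prSet_eq_mul_sum_powerset {m : ℕ} {r : Fin m → ℝ} (hr : ∀ i, 0 < r i)
    {I : Finset (Fin m)} (hI : I ≠ univ) :
    prSet r I = (∑ j ∈ Iᶜ, r j) * ((-1) ^ #I * ∑ T ∈ I.powerset, (-1) ^ #T / ∑ j ∈ Tᶜ, r j) := by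
  induction I using Finset.strongInduction with
  | H I ih =>
    have hρ : ∀ T ⊆ I, ∑ j ∈ Tᶜ, r j ≠ 0 := fun T hT =>
      (sum_compl_pos hr fun h => hI (univ_subset_iff.1 (h ▸ hT))).ne'
    rcases I.eq_empty_or_nonempty with rfl | hne
    · have h0 := hρ ∅ subset_rfl
      simp only [compl_empty] at h0
      simp [prSet_empty, h0]
    obtain ⟨t, ht⟩ : ∃ t, #I = t + 1 := Nat.exists_eq_add_one.2 hne.card_pos
    have hterm : ∀ i ∈ I, prSet r (I.erase i) * (r i / ∑ j ∈ (I.erase i)ᶜ, r j) =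
        (-1) ^ t * (r i * ∑ T ∈ (I.erase i).powerset, (-1) ^ #T / ∑ j ∈ Tᶜ, r j) := by
      intro i hi
      have hsub : I.erase i ⊆ I := erase_subset i I
      rw [ih _ (erase_ssubset hi) fun h => hI (univ_subset_iff.1 (h ▸ hsub)),
        card_erase_of_mem hi, ht, Nat.add_sub_cancel]
      have h0 := hρ _ hsub
      field_simp
    rw [prSet_eq_sum_erase r hne, sum_congr rfl hterm, ← mul_sum,
      mul_left_comm, sum_powerset_neg_one_pow_card_div_eq hne hρ, ht, pow_succ]
    ring

lemma sum_powerset_card_lt_neg_one_pow {γ : Type*} (P : Finset γ) (L : ℕ) :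
    ∑ S ∈ P.powerset with #S < L, (-1 : ℤ) ^ #S =
      ∑ s ∈ range L, (-1) ^ s * ((#P).choose s : ℤ) := by
  rw [← sum_fiberwise_of_maps_to (g := card) (t := range L) (by simp)]
  refine sum_congr rfl fun s hs => ?_
  have hfiber : filter (fun S => #S = s) {S ∈ P.powerset | #S < L} = P.powersetCard s := by
    ext S
    simp only [mem_filter, mem_powerset, mem_powersetCard]
    constructor
    · exact fun h => ⟨h.1.1, h.2⟩
    · exact fun h => ⟨⟨h.1, h.2 ▸ mem_range.1 hs⟩, h.2⟩
  rw [hfiber, sum_congr rfl fun S hS => by rw [(mem_powersetCard.1 hS).2], sum_const,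
    card_powersetCard, nsmul_eq_mul, mul_comm]

section Supersets

variable {γ : Type*} [Fintype γ] [DecidableEq γ]

lemma sum_superset_eq_sum_powerset_compl {M : Type*} [AddCommMonoid M] (V : Finset γ)
    (f : Finset γ → M) : ∑ W with V ⊆ W, f W = ∑ S ∈ Vᶜ.powerset, f (V ∪ S) := by
  refine sum_nbij' (· \ V) (V ∪ ·) ?_ ?_ ?_ ?_ ?_
  · simp [subset_iff]
  · simp
  · intro W hW
    exact union_sdiff_of_subset (mem_filter.1 hW).2
  · intro S hS
    exact union_sdiff_cancel_left (subset_compl_iff_disjoint_left.1 (mem_powerset.1 hS))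
  · intro W hW
    rw [union_sdiff_of_subset (mem_filter.1 hW).2]

lemma sum_superset_card_lt_neg_one_pow (V : Finset γ) {K : ℕ} (hK : K ≤ Fintype.card γ) :
    ∑ W with V ⊆ W ∧ #W < K, (-1 : ℤ) ^ (#W + #V) =
      if #V < K then (-1) ^ (K - 1 - #V) * ((Fintype.card γ - 1 - #V).choose (K - 1 - #V) : ℤ)
      else 0 := by
  split_ifs with hVK
  · have hdisj : ∀ S ∈ Vᶜ.powerset, #(V ∪ S) = #V + #S := fun S hS =>
      card_union_of_disjoint (subset_compl_iff_disjoint_left.1 (mem_powerset.1 hS))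
    have hsign : ∀ S ∈ Vᶜ.powerset, (if #(V ∪ S) < K then (-1 : ℤ) ^ (#(V ∪ S) + #V) else 0) =
        if #S < K - #V then (-1) ^ #S else 0 := by
      intro S hS
      rw [hdisj S hS, show #V + #S + #V = #S + 2 * #V by ring, pow_add, pow_mul, neg_one_sq,
        one_pow, mul_one]
      exact if_congr (by omega) rfl rfl
    have hlen : K - #V = K - 1 - #V + 1 := by omega
    have hcompl : #Vᶜ = Fintype.card γ - 1 - #V + 1 := by rw [card_compl]; omega
    rw [← filter_filter, sum_filter, sum_superset_eq_sum_powerset_compl, sum_congr rfl hsign,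
      ← sum_filter, sum_powerset_card_lt_neg_one_pow, hlen, hcompl,
      Int.alternating_sum_range_choose_eq_choose]
  · refine sum_eq_zero fun W hW => ?_
    simp only [mem_filter] at hW
    exact absurd (hW.2.2.trans_le' (card_le_card hW.2.1)) hVK

end Supersets

lemma sum_superset_pairs_card_lt_neg_one_pow {α β : Type*} [Fintype α] [DecidableEq α]
    [Fintype β] [DecidableEq β] (T : Finset α) (U : Finset β) {K : ℕ}
    (hK : K ≤ Fintype.card α + Fintype.card β) :
    ∑ I : Finset α, ∑ J : Finset β,
        (if T ⊆ I ∧ U ⊆ J ∧ #I + #J < K then (-1 : ℤ) ^ (#I + #T + #J + #U) else 0) =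
      if #T + #U < K then
        (-1) ^ (K - 1 - #T - #U) *
          ((Fintype.card α + Fintype.card β - 1 - #T - #U).choose (K - 1 - #T - #U) : ℤ)
      else 0 := by
  have h := sum_superset_card_lt_neg_one_pow (T.disjSum U) (hK.trans_eq Fintype.card_sum.symm)
  rw [card_disjSum, Fintype.card_sum, sum_filter] at h
  simp only [Nat.sub_sub, ← add_assoc] at h ⊢
  rw [← h, ← Fintype.sum_prod_type']
  refine Fintype.sum_equiv sumEquiv.symm.toEquiv _ _ fun p => ?_
  rw [show sumEquiv.symm.toEquiv p = p.1.disjSum p.2 from rfl]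
  simp only [disjSum_subset, toLeft_disjSum, toRight_disjSum, card_disjSum, and_assoc]
  exact if_congr Iff.rfl (by ring_nf) rfl

lemma ne_univ_and_ne_univ_and_card_add_lt_iff {α β : Type*} [Fintype α] [Fintype β]
    {I : Finset α} {J : Finset β} {k : ℕ} (hα : k ≤ Fintype.card α) (hβ : k ≤ Fintype.card β) :
    (I ≠ univ ∧ J ≠ univ ∧ #I + #J < k) ↔ #I + #J < k := by
  refine ⟨fun h => h.2.2, fun h => ⟨?_, ?_, h⟩⟩
  · exact (card_lt_iff_ne_univ I).1 (by omega)
  · exact (card_lt_iff_ne_univ J).1 (by omega)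

lemma prSet_mul_prSet_div_eq_sum {m n : ℕ} {r : Fin m → ℝ} {c : Fin n → ℝ}
    (hr : ∀ i, 0 < r i) (hc : ∀ j, 0 < c j) {I : Finset (Fin m)} {J : Finset (Fin n)}
    (hI : I ≠ univ) (hJ : J ≠ univ) :
    prSet r I * prSet c J / ((∑ i ∈ Iᶜ, r i) * (∑ j ∈ Jᶜ, c j)) =
      ∑ T ∈ I.powerset, ∑ U ∈ J.powerset,
        (-1) ^ (#I + #T + #J + #U) / ((∑ i ∈ Tᶜ, r i) * (∑ j ∈ Uᶜ, c j)) := by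
  rw [prSet_eq_mul_sum_powerset hr hI, prSet_eq_mul_sum_powerset hc hJ, mul_mul_mul_comm,
    mul_div_cancel_left₀ _ (mul_pos (sum_compl_pos hr hI) (sum_compl_pos hc hJ)).ne',
    mul_sum, mul_sum, sum_mul_sum]
  refine sum_congr rfl fun T _ => sum_congr rfl fun U _ => ?_
  rw [pow_add, pow_add, pow_add]
  field_simp

lemma sum_ite_prSet_mul_prSet_div {m n k : ℕ} {r : Fin m → ℝ} {c : Fin n → ℝ}
    (hr : ∀ i, 0 < r i) (hc : ∀ j, 0 < c j) (hkm : k ≤ m) (hkn : k ≤ n) :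
    ∑ I : Finset (Fin m), ∑ J : Finset (Fin n),
        (if #I + #J < k then
          prSet r I * prSet c J / ((∑ i ∈ Iᶜ, r i) * (∑ j ∈ Jᶜ, c j)) else 0) =
      ∑ T : Finset (Fin m), ∑ U : Finset (Fin n),
        (∑ I : Finset (Fin m), ∑ J : Finset (Fin n),
          if T ⊆ I ∧ U ⊆ J ∧ #I + #J < k then (-1 : ℝ) ^ (#I + #T + #J + #U) else 0) /
        ((∑ i ∈ Tᶜ, r i) * (∑ j ∈ Uᶜ, c j)) := by
  have hterm : ∀ I J, (if #I + #J < k then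
      prSet r I * prSet c J / ((∑ i ∈ Iᶜ, r i) * (∑ j ∈ Jᶜ, c j)) else 0) =
        ∑ T : Finset (Fin m), ∑ U : Finset (Fin n),
          if T ⊆ I ∧ U ⊆ J ∧ #I + #J < k then
            (-1 : ℝ) ^ (#I + #T + #J + #U) / ((∑ i ∈ Tᶜ, r i) * (∑ j ∈ Uᶜ, c j)) else 0 := by
    intro I J
    by_cases h : #I + #J < k
    · obtain ⟨hI, hJ, -⟩ :=
        (ne_univ_and_ne_univ_and_card_add_lt_iff (by simpa) (by simpa)).2 h
      rw [if_pos h, prSet_mul_prSet_div_eq_sum hr hc hI hJ, ← filter_subset_univ, sum_filter]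
      refine sum_congr rfl fun T _ => ?_
      by_cases hT : T ⊆ I
      · simp only [hT, h, true_and, and_true, if_true, ← filter_subset_univ J, sum_filter]
      · simp [hT]
    · simp [h]
  simp only [hterm, sum_div, ite_div, zero_div]
  exact (sum_congr rfl fun _ _ => sum_comm).trans <| sum_comm.trans <|
    sum_congr rfl fun _ _ => (sum_congr rfl fun _ _ => sum_comm).trans sum_comm

lemma sum_ite_prSet_mul_prSet_div_pos {m n k : ℕ} {r : Fin m → ℝ} {c : Fin n → ℝ}
    (hr : ∀ i, 0 < r i) (hc : ∀ j, 0 < c j) (hk : 0 < k) (hm : 0 < m) (hn : 0 < n) :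
    0 < ∑ I : Finset (Fin m), ∑ J : Finset (Fin n),
      if I ≠ univ ∧ J ≠ univ ∧ #I + #J < k then
        prSet r I * prSet c J / ((∑ i ∈ Iᶜ, r i) * (∑ j ∈ Jᶜ, c j)) else 0 := by
  have hterm : ∀ (I : Finset (Fin m)) (J : Finset (Fin n)), I ≠ univ ∧ J ≠ univ ∧ #I + #J < k →
      0 < prSet r I * prSet c J / ((∑ i ∈ Iᶜ, r i) * (∑ j ∈ Jᶜ, c j)) := fun I J h =>
    div_pos (mul_pos (prSet_pos hr I) (prSet_pos hc J))
      (mul_pos (sum_compl_pos hr h.1) (sum_compl_pos hc h.2.1))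
  have hnonneg : ∀ (I : Finset (Fin m)) (J : Finset (Fin n)),
      0 ≤ if I ≠ univ ∧ J ≠ univ ∧ #I + #J < k then
        prSet r I * prSet c J / ((∑ i ∈ Iᶜ, r i) * (∑ j ∈ Jᶜ, c j)) else 0 := by
    intro I J
    split_ifs with h
    exacts [(hterm I J h).le, le_rfl]
  have hempty : (∅ : Finset (Fin m)) ≠ univ ∧ (∅ : Finset (Fin n)) ≠ univ ∧
      #(∅ : Finset (Fin m)) + #(∅ : Finset (Fin n)) < k :=
    ⟨(univ_nonempty_iff.2 ⟨⟨0, hm⟩⟩).ne_empty.symm,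
      (univ_nonempty_iff.2 ⟨⟨0, hn⟩⟩).ne_empty.symm, by simpa using hk⟩
  refine sum_pos' (fun I _ => sum_nonneg fun J _ => hnonneg I J)
    ⟨∅, mem_univ _, sum_pos' (fun J _ => hnonneg ∅ J) ⟨∅, mem_univ _, ?_⟩⟩
  rw [if_pos hempty]
  exact hterm ∅ ∅ hempty

/-- Probabilistic form of `F`:
`F(k,r,c) = ∑_{I ⊊ [m], J ⊊ [n], |I|+|J| < k} Pr(r,I)·Pr(c,J) / ((∑_{i∉I} r i)(∑_{j∉J} c j))`;
in particular `F(k,r,c) > 0`. -/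
theorem F_prob_form (k m n : ℕ) (hk : 0 < k) (hkm : k ≤ m) (hmn : m ≤ n)
    (r : Fin m → ℝ) (c : Fin n → ℝ) (hr : ∀ i, 0 < r i) (hc : ∀ j, 0 < c j) :
    F k r c =
      (∑ I : Finset (Fin m), ∑ J : Finset (Fin n),
        if I ≠ Finset.univ ∧ J ≠ Finset.univ ∧ I.card + J.card < k then
          prSet r I * prSet c J / ((∑ i ∈ Iᶜ, r i) * (∑ j ∈ Jᶜ, c j))
        else 0)
    ∧ 0 < F k r c := by
  have hkn : k ≤ n := hkm.trans hmn
  have hproper : ∀ (I : Finset (Fin m)) (J : Finset (Fin n)),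
      (I ≠ univ ∧ J ≠ univ ∧ #I + #J < k) ↔ #I + #J < k := fun I J =>
    ne_univ_and_ne_univ_and_card_add_lt_iff (by simpa) (by simpa)
  have hcoeff : ∀ (T : Finset (Fin m)) (U : Finset (Fin n)),
      (∑ I : Finset (Fin m), ∑ J : Finset (Fin n),
        if T ⊆ I ∧ U ⊆ J ∧ #I + #J < k then (-1 : ℝ) ^ (#I + #T + #J + #U) else 0) =
      if #T + #U < k then
        (-1) ^ (k - 1 - #T - #U) * ((m + n - 1 - #T - #U).choose (k - 1 - #T - #U) : ℝ)
      else 0 := by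
    intro T U
    have h := sum_superset_pairs_card_lt_neg_one_pow T U (K := k) (by simp only [Fintype.card_fin]; omega)
    simp only [Fintype.card_fin] at h
    exact_mod_cast h
  have hsum : (∑ I : Finset (Fin m), ∑ J : Finset (Fin n),
      if I ≠ univ ∧ J ≠ univ ∧ #I + #J < k then
        prSet r I * prSet c J / ((∑ i ∈ Iᶜ, r i) * (∑ j ∈ Jᶜ, c j)) else 0) = F k r c := by
    simp only [F, hproper, sum_ite_prSet_mul_prSet_div hr hc hkm hkn, hcoeff, ite_div, zero_div]
  exact ⟨hsum.symm, hsum ▸ sum_ite_prSet_mul_prSet_div_pos hr hc hk (hk.trans_le hkm)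
    (hk.trans_le hkn)⟩
end
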